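/- arXiv:2311.06441 — 8 statements merged into one kernel-verified Lean document; each statement's English description precedes it below -/
import Mathlib

section
/- Let L = (L_{ij}) be an n×n real matrix (n ≥ 2) that is quasi-positive (L_{ij} ≥ 0 whenever i ≠ j), irreducible (for every nonempty proper subset A of {1,…,n} there exist i ∉ A and j ∈ A with L_{ij} > 0), satisfies L_{ii} = −∑_{j≠i} L_{ji} for each i (every column of L sums to zero), and is line-sum symmetric (for each i, ∑_j L_{ij} = ∑_j L_{ji}). Then for every vector X ∈ ℝⁿ one has ∑_{i,j=1}^n L_{ij} X_i X_j ≤ 0, and equality holds if and only if X is a scalar multiple of the all-ones vector (i.e., X_1 = X_2 = ⋯ = X_n). -/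
/-!
The diagonal makes every column sum of `L` vanish, and line-sum symmetry then makes every row
sum vanish. Expanding the squares gives
`2 ∑ L_{ij} X_i X_j = -∑ L_{ij} (X_i - X_j)²`. The right-hand side is `≤ 0` because the
off-diagonal entries are nonnegative (the diagonal terms vanish anyway), and it is `0` exactly
when `X_i = X_j` whenever `L_{ij} > 0`. By irreducibility, the level set of `X` through any
point has no edge of positive weight entering it, so it is everything.
-/

open Finset

section QuadraticForm

variable {ι R : Type*}

theorem two_mul_sum_mul_mul_eq_neg_sum_mul_sub_sq [Fintype ι] [CommRing R] {L : Matrix ι ι R}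
    (hrow : ∀ i, ∑ j, L i j = 0) (hcol : ∀ j, ∑ i, L i j = 0) (x : ι → R) :
    2 * ∑ i, ∑ j, L i j * x i * x j = -∑ i, ∑ j, L i j * (x i - x j) ^ 2 := by
  have hrow_sq : ∑ i, ∑ j, L i j * x i ^ 2 = 0 :=
    sum_eq_zero fun i _ => by rw [← sum_mul, hrow i, zero_mul]
  have hcol_sq : ∑ i, ∑ j, L i j * x j ^ 2 = 0 := by
    rw [sum_comm]
    exact sum_eq_zero fun j _ => by rw [← sum_mul, hcol j, zero_mul]
  have hexpand : ∑ i, ∑ j, L i j * (x i - x j) ^ 2 =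
      ∑ i, ∑ j, L i j * x i ^ 2 - 2 * ∑ i, ∑ j, L i j * x i * x j
        + ∑ i, ∑ j, L i j * x j ^ 2 := by
    simp only [mul_sum, ← sum_sub_distrib, ← sum_add_distrib]
    exact sum_congr rfl fun i _ => sum_congr rfl fun j _ => by ring
  rw [hexpand, hrow_sq, hcol_sq]
  ring

variable [CommRing R] [LinearOrder R] [IsStrictOrderedRing R] {L : Matrix ι ι R}

theorem mul_sub_sq_nonneg (hoff : ∀ i j, i ≠ j → 0 ≤ L i j) (x : ι → R) (i j : ι) :
    0 ≤ L i j * (x i - x j) ^ 2 := by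
  rcases eq_or_ne i j with rfl | hij
  · simp
  · exact mul_nonneg (hoff i j hij) (sq_nonneg _)

variable [Fintype ι]

theorem sum_mul_sub_sq_nonneg (hoff : ∀ i j, i ≠ j → 0 ≤ L i j) (x : ι → R) :
    0 ≤ ∑ i, ∑ j, L i j * (x i - x j) ^ 2 :=
  sum_nonneg fun i _ => sum_nonneg fun j _ => mul_sub_sq_nonneg hoff x i j

theorem sum_mul_sub_sq_eq_zero_iff (hoff : ∀ i j, i ≠ j → 0 ≤ L i j) (x : ι → R) :
    ∑ i, ∑ j, L i j * (x i - x j) ^ 2 = 0 ↔ ∀ i j, 0 < L i j → x i = x j := by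
  rw [sum_eq_zero_iff_of_nonneg fun i _ => sum_nonneg fun j _ => mul_sub_sq_nonneg hoff x i j]
  simp only [sum_eq_zero_iff_of_nonneg fun j _ => mul_sub_sq_nonneg hoff x _ j, mem_univ,
    true_imp_iff, mul_eq_zero, pow_eq_zero_iff two_ne_zero, sub_eq_zero]
  refine forall₂_congr fun i j => ⟨fun h hL => h.resolve_left hL.ne', fun h => ?_⟩
  rcases eq_or_ne i j with rfl | hij
  · exact Or.inr rfl
  rcases (hoff i j hij).eq_or_lt with hL | hL
  · exact Or.inl hL.symm
  · exact Or.inr (h hL)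

end QuadraticForm

theorem exists_forall_eq_of_forall_exists_rel {ι β : Type*} [Fintype ι] [Nonempty β]
    {r : ι → ι → Prop} {x : ι → β}
    (hr : ∀ A : Finset ι, A.Nonempty → A ≠ univ → ∃ i ∉ A, ∃ j ∈ A, r i j)
    (hx : ∀ i j, r i j → x i = x j) : ∃ c, ∀ i, x i = c := by
  classical
  rcases isEmpty_or_nonempty ι with hι | ⟨⟨i₀⟩⟩
  · exact ⟨Classical.arbitrary β, isEmptyElim⟩
  refine ⟨x i₀, fun k => by_contra fun hk => ?_⟩
  have hproper : ({j | x j = x i₀} : Finset ι) ≠ univ := fun h =>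
    hk (by simpa using eq_univ_iff_forall.mp h k)
  obtain ⟨i, hi, j, hj, hij⟩ := hr {j | x j = x i₀} ⟨i₀, by simp⟩ hproper
  simp only [mem_filter_univ] at hi hj
  exact hi ((hx i j hij).trans hj)

theorem quadratic_form_nonpos_of_line_sum_symmetric_general
    {n : ℕ}
    (L : Matrix (Fin n) (Fin n) ℝ)
    (hquasi : ∀ i j, i ≠ j → 0 ≤ L i j)
    (hirr : ∀ A : Finset (Fin n), A.Nonempty → A ≠ Finset.univ →
      ∃ i ∉ A, ∃ j ∈ A, 0 < L i j)
    (hdiag : ∀ i, L i i = -∑ j ∈ Finset.univ.erase i, L j i)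
    (hlss : ∀ i, ∑ j, L i j = ∑ j, L j i) :
    ∀ X : Fin n → ℝ,
      (∑ i, ∑ j, L i j * X i * X j ≤ 0) ∧
      ((∑ i, ∑ j, L i j * X i * X j = 0) ↔ ∃ c : ℝ, ∀ i, X i = c) := by
  have hcol : ∀ j, ∑ i, L i j = 0 := fun j => by
    rw [← add_sum_erase _ _ (mem_univ j), hdiag j, neg_add_cancel]
  have hrow : ∀ i, ∑ j, L i j = 0 := fun i => (hlss i).trans (hcol i)
  intro X
  have hform := two_mul_sum_mul_mul_eq_neg_sum_mul_sub_sq hrow hcol X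
  have hdiff := sum_mul_sub_sq_nonneg hquasi X
  refine ⟨by linarith, ?_⟩
  rw [← mul_eq_zero_iff_left two_ne_zero, hform, neg_eq_zero,
    sum_mul_sub_sq_eq_zero_iff hquasi]
  exact ⟨exists_forall_eq_of_forall_exists_rel hirr, fun ⟨c, hc⟩ i j _ => by rw [hc, hc]⟩

/-- Lemma 2.2: if `L` satisfies (A1) and is line-sum symmetric, then the quadratic form
`∑ L_{ij} X_i X_j` is nonpositive, with equality iff `X` is a multiple of the all-ones vector. -/
theorem quadratic_form_nonpos_of_line_sum_symmetric
    {n : ℕ} (hn : 2 ≤ n)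
    (L : Matrix (Fin n) (Fin n) ℝ)
    (hquasi : ∀ i j, i ≠ j → 0 ≤ L i j)
    (hirr : ∀ A : Finset (Fin n), A.Nonempty → A ≠ Finset.univ →
      ∃ i ∉ A, ∃ j ∈ A, 0 < L i j)
    (hdiag : ∀ i, L i i = -∑ j ∈ Finset.univ.erase i, L j i)
    (hlss : ∀ i, ∑ j, L i j = ∑ j, L j i) :
    ∀ X : Fin n → ℝ,
      (∑ i, ∑ j, L i j * X i * X j ≤ 0) ∧
      ((∑ i, ∑ j, L i j * X i * X j = 0) ↔ ∃ c : ℝ, ∀ i, X i = c) :=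
  quadratic_form_nonpos_of_line_sum_symmetric_general L hquasi hirr hdiag hlss
end

section
/- Suppose L satisfies (A1), let α be the vector with Lα = 0, α_i > 0 for all i, and ∑_{i∈Ω} α_i = 1, and set θ_i = 1/α_i for each i. Then for every vector X ∈ ℝⁿ one has ∑_{i,j=1}^n θ_i L_{ij} X_i X_j ≤ 0, and equality holds if and only if X is a scalar multiple of α. -/
open Filter Topology

/-- Theorem 2.4: if `L` satisfies (A1), `α` is the normalized positive null vector of `L`,
and `θ_i = 1/α_i`, then `∑ θ_i L_{ij} X_i X_j ≤ 0` for all `X`, with equality iff `X` is a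
multiple of `α`. -/
theorem weighted_quadratic_form_nonpos
    {n : ℕ} (hn : 2 ≤ n)
    (L : Matrix (Fin n) (Fin n) ℝ)
    (hquasi : ∀ i j, i ≠ j → 0 ≤ L i j)
    (hirr : ∀ A : Finset (Fin n), A.Nonempty → A ≠ Finset.univ →
      ∃ i ∉ A, ∃ j ∈ A, 0 < L i j)
    (hdiag : ∀ i, L i i = -∑ j ∈ Finset.univ.erase i, L j i)
    (α : Fin n → ℝ) (hα : L.mulVec α = 0) (hαpos : ∀ i, 0 < α i)
    (hαsum : ∑ i, α i = 1) :
    ∀ X : Fin n → ℝ,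
      (∑ i, ∑ j, (1 / α i) * L i j * X i * X j ≤ 0) ∧
      ((∑ i, ∑ j, (1 / α i) * L i j * X i * X j = 0) ↔ ∃ c : ℝ, ∀ i, X i = c * α i) := by
  intro X
  have hane : ∀ i, α i ≠ 0 := fun i => (hαpos i).ne'
  have hrow : ∀ i, ∑ j, L i j * α j = 0 := by
    intro i
    have := congrFun hα i
    simpa [Matrix.mulVec, dotProduct] using this
  have hcol : ∀ j, ∑ i, L i j = 0 := by
    intro j
    have h2 : ∑ x ∈ Finset.univ.erase j, L x j + L j j = ∑ x, L x j :=
      Finset.sum_erase_add Finset.univ (fun i => L i j) (Finset.mem_univ j)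
    rw [← h2, hdiag j]; ring
  set y : Fin n → ℝ := fun i => X i / α i with hy
  set Q := ∑ i, ∑ j, (1 / α i) * L i j * X i * X j with hQdef
  have key : ∀ i j, L i j * α j * (y i - y j)^2
      = L i j * α j * (y i)^2 + L i j * α j * (y j)^2
        - 2 * ((1 / α i) * L i j * X i * X j) := by
    intro i j
    simp only [hy]
    field_simp [hane i, hane j]
    ring
  have hS1 : ∑ i, ∑ j, L i j * α j * (y i)^2 = 0 := by
    apply Finset.sum_eq_zero
    intro i _
    rw [← Finset.sum_mul, hrow i, zero_mul]
  have hS2 : ∑ i, ∑ j, L i j * α j * (y j)^2 = 0 := by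
    rw [Finset.sum_comm]
    apply Finset.sum_eq_zero
    intro j _
    have h : ∀ i : Fin n, L i j * α j * (y j)^2 = L i j * (α j * (y j)^2) :=
      fun i => by ring
    simp_rw [h]
    rw [← Finset.sum_mul, hcol j, zero_mul]
  have hSQ : ∑ i, ∑ j, L i j * α j * (y i - y j)^2 = -2 * Q := by
    have h1 : ∑ i, ∑ j, L i j * α j * (y i - y j)^2
        = ∑ i, ∑ j, (L i j * α j * (y i)^2 + L i j * α j * (y j)^2
            - 2 * ((1/α i) * L i j * X i * X j)) :=
      Finset.sum_congr rfl fun i _ => Finset.sum_congr rfl fun j _ => key i j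
    rw [h1]
    simp only [Finset.sum_sub_distrib, Finset.sum_add_distrib, ← Finset.mul_sum]
    rw [hS1, hS2, ← hQdef]
    ring
  have hterm : ∀ i j, 0 ≤ L i j * α j * (y i - y j)^2 := by
    intro i j
    rcases eq_or_ne i j with rfl | hij
    · simp
    · exact mul_nonneg (mul_nonneg (hquasi i j hij) (hαpos j).le) (sq_nonneg _)
  have hSnonneg : 0 ≤ ∑ i, ∑ j, L i j * α j * (y i - y j)^2 :=
    Finset.sum_nonneg fun i _ => Finset.sum_nonneg fun j _ => hterm i j
  refine ⟨by linarith [hSnonneg, hSQ], ?_, ?_⟩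
  · intro hQ0
    have hS0 : ∑ i, ∑ j, L i j * α j * (y i - y j)^2 = 0 := by rw [hSQ, hQ0]; ring
    have hall : ∀ i j, L i j * α j * (y i - y j)^2 = 0 := by
      intro i j
      have h1 := (Finset.sum_eq_zero_iff_of_nonneg
        (fun i _ => Finset.sum_nonneg (fun j _ => hterm i j))).mp hS0 i (Finset.mem_univ i)
      exact (Finset.sum_eq_zero_iff_of_nonneg (fun j _ => hterm i j)).mp h1 j
        (Finset.mem_univ j)
    have heq : ∀ i j, i ≠ j → 0 < L i j → y i = y j := by
      intro i j hij hL
      have h0 := hall i j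
      have hpos : 0 < L i j * α j := mul_pos hL (hαpos j)
      have hsq : (y i - y j)^2 = 0 := by
        rcases mul_eq_zero.mp h0 with h | h
        · exact absurd h hpos.ne'
        · exact h
      exact sub_eq_zero.mp (sq_eq_zero_iff.mp hsq)
    have hi0 : (0 : ℕ) < n := by omega
    set i0 : Fin n := ⟨0, hi0⟩ with hi0def
    set A : Finset (Fin n) := Finset.univ.filter (fun j => y j = y i0) with hA
    have hi0A : i0 ∈ A := by simp [hA]
    have hAuniv : A = Finset.univ := by
      by_contra hne
      obtain ⟨i, hiA, j, hjA, hL⟩ := hirr A ⟨i0, hi0A⟩ hne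
      have hij : i ≠ j := fun h => hiA (h ▸ hjA)
      have hyi : y i = y i0 := by
        rw [heq i j hij hL, (Finset.mem_filter.mp hjA).2]
      exact hiA (Finset.mem_filter.mpr ⟨Finset.mem_univ i, hyi⟩)
    refine ⟨y i0, fun i => ?_⟩
    have hiA : i ∈ A := hAuniv ▸ Finset.mem_univ i
    have hyi : X i / α i = y i0 := (Finset.mem_filter.mp hiA).2
    exact (div_eq_iff (hane i)).mp hyi
  · rintro ⟨c, hc⟩
    have hz : ∀ i, ∑ j, (1/α i) * L i j * X i * X j = 0 := by
      intro i
      have h : ∀ j, (1/α i) * L i j * X i * X j = c^2 * (L i j * α j) := by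
        intro j
        rw [hc i, hc j]
        field_simp [hane i, hane j]
      simp_rw [h]
      rw [← Finset.mul_sum, hrow i, mul_zero]
    rw [hQdef]
    exact Finset.sum_eq_zero fun i _ => hz i
end

section
/- Suppose L satisfies (A1) and let α be the vector with Lα = 0, α_i > 0 for all i, and ∑_{i∈Ω} α_i = 1. Let d > 0, let F : [0,∞) → ℝⁿ be continuous with ‖F(t)‖₁ → 0 as t → ∞, and let X : [0,∞) → ℝⁿ be a bounded C¹ solution of X'(t) = d L X(t) + F(t) for t > 0 with X(0) = X⁰ ∈ ℝⁿ. Then ‖X(t) − (∑_{j∈Ω} X_j(t)) α‖₁ → 0 as t → ∞. In particular, if F(t) = 0 for all t ≥ 0, then X(t) → (∑_{j∈Ω} X_j⁰) α as t → ∞. -/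
set_option synthInstance.maxHeartbeats 1000000
open Filter Topology NormedSpace

namespace LSAS
variable {n : ℕ}

noncomputable def clm (A : Matrix (Fin n) (Fin n) ℝ) : (Fin n → ℝ) →L[ℝ] (Fin n → ℝ) :=
  LinearMap.toContinuousLinearMap A.mulVecLin

@[simp] lemma clm_apply (A : Matrix (Fin n) (Fin n) ℝ) (x : Fin n → ℝ) :
    clm A x = A.mulVec x := rfl

lemma clm_mul (A B : Matrix (Fin n) (Fin n) ℝ) : clm (A * B) = clm A * clm B := by
  ext x i
  simp [Matrix.mulVec_mulVec, ContinuousLinearMap.mul_apply]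

lemma clm_pow (A : Matrix (Fin n) (Fin n) ℝ) (k : ℕ) : clm (A ^ k) = (clm A) ^ k := by
  induction k with
  | zero => ext x i; simp [Matrix.one_mulVec]
  | succ m ih => rw [pow_succ, clm_mul, ih, pow_succ]

lemma clm_smul (c : ℝ) (A : Matrix (Fin n) (Fin n) ℝ) : clm (c • A) = c • clm A := by
  ext x i; simp [Matrix.smul_mulVec]

/-- evaluation functional `T ↦ (T x) i` as a continuous linear map -/
noncomputable def ev (x : Fin n → ℝ) (i : Fin n) :
    ((Fin n → ℝ) →L[ℝ] (Fin n → ℝ)) →L[ℝ] ℝ :=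
  (ContinuousLinearMap.proj i).comp (ContinuousLinearMap.apply ℝ (Fin n → ℝ) x)

@[simp] lemma ev_apply (x : Fin n → ℝ) (i : Fin n) (T : (Fin n → ℝ) →L[ℝ] (Fin n → ℝ)) :
    ev x i T = T x i := rfl

lemma exp_clm_apply (A : Matrix (Fin n) (Fin n) ℝ) (x : Fin n → ℝ) (i : Fin n) :
    exp (clm A) x i = ∑' k : ℕ, ((k.factorial : ℝ)⁻¹ * ((A ^ k).mulVec x i)) := by
  have h1 : exp (clm A) x i = ev x i (exp (clm A)) := rfl
  rw [h1, exp_eq_tsum ℝ, ContinuousLinearMap.map_tsum _ (expSeries_summable' (𝕂 := ℝ) (clm A))]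
  refine tsum_congr fun k => ?_
  simp [← clm_pow]
variable {n : ℕ}

lemma pow_entry_nonneg {A : Matrix (Fin n) (Fin n) ℝ} (hA : ∀ i j, 0 ≤ A i j) (k : ℕ) :
    ∀ i j, 0 ≤ (A ^ k) i j := by
  induction k with
  | zero => intro i j; rw [pow_zero]; by_cases h : i = j <;> simp [Matrix.one_apply, h]
  | succ m ih =>
    intro i j
    rw [pow_succ', Matrix.mul_apply]
    exact Finset.sum_nonneg fun l _ => mul_nonneg (hA i l) (ih l j)

lemma pow_entry_step {A : Matrix (Fin n) (Fin n) ℝ} (hA : ∀ i j, 0 ≤ A i j) {k : ℕ}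
    {i m j : Fin n} (him : 0 < A i m) (hmj : 0 < (A ^ k) m j) : 0 < (A ^ (k+1)) i j := by
  rw [pow_succ', Matrix.mul_apply]
  refine Finset.sum_pos' (fun l _ => mul_nonneg (hA i l) (pow_entry_nonneg hA k l j)) ?_
  exact ⟨m, Finset.mem_univ m, mul_pos him hmj⟩

lemma pow_entry_pos {A : Matrix (Fin n) (Fin n) ℝ} (hA : ∀ i j, 0 ≤ A i j)
    (hdpos : ∀ i, 0 < A i i)
    (hirr : ∀ S : Finset (Fin n), S.Nonempty → S ≠ Finset.univ →
      ∃ i ∉ S, ∃ j ∈ S, 0 < A i j) :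
    ∃ K : ℕ, ∀ i j, 0 < (A ^ K) i j := by
  classical
  have hmono : ∀ {k : ℕ} {i j : Fin n}, 0 < (A ^ k) i j → ∀ K, k ≤ K → 0 < (A ^ K) i j := by
    intro k i j hk K hK
    induction K, hK using Nat.le_induction with
    | base => exact hk
    | succ m _ ih => exact pow_entry_step hA (hdpos i) ih
  have hreach : ∀ j i : Fin n, ∃ k : ℕ, 0 < (A ^ k) i j := by
    intro j
    set S : Finset (Fin n) := Finset.univ.filter (fun i => ∃ k : ℕ, 0 < (A ^ k) i j) with hS
    have hjS : j ∈ S := by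
      simp only [hS, Finset.mem_filter, Finset.mem_univ, true_and]
      exact ⟨0, by simp [Matrix.one_apply]⟩
    have hSuniv : S = Finset.univ := by
      by_contra hne
      obtain ⟨i, hiS, m, hmS, him⟩ := hirr S ⟨j, hjS⟩ hne
      obtain ⟨k, hk⟩ := (Finset.mem_filter.1 hmS).2
      exact hiS (Finset.mem_filter.2 ⟨Finset.mem_univ i, k+1, pow_entry_step hA him hk⟩)
    intro i
    have : i ∈ S := hSuniv ▸ Finset.mem_univ i
    exact (Finset.mem_filter.1 this).2
  choose f hf using fun p : Fin n × Fin n => hreach p.2 p.1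
  refine ⟨Finset.univ.sup f, fun i j => ?_⟩
  exact hmono (hf (i, j)) _ (Finset.le_sup (Finset.mem_univ (i, j)))

lemma exp_entry_nonneg {A : Matrix (Fin n) (Fin n) ℝ} (hA : ∀ i j, 0 ≤ A i j)
    {x : Fin n → ℝ} (hx : ∀ j, 0 ≤ x j) (i : Fin n) :
    0 ≤ exp (clm A) x i := by
  rw [exp_clm_apply]
  refine tsum_nonneg fun k => mul_nonneg (by positivity) ?_
  simp only [Matrix.mulVec, dotProduct]
  exact Finset.sum_nonneg fun j _ => mul_nonneg (pow_entry_nonneg hA k i j) (hx j)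

lemma exp_summable_entry (A : Matrix (Fin n) (Fin n) ℝ) (x : Fin n → ℝ) (i : Fin n) :
    Summable fun k : ℕ => ((k.factorial : ℝ)⁻¹ * ((A ^ k).mulVec x i)) := by
  have := (expSeries_summable' (𝕂 := ℝ) (clm A)).map (ev x i) (ev x i).continuous
  refine this.congr fun k => ?_
  simp [← clm_pow]

lemma exp_entry_pos {A : Matrix (Fin n) (Fin n) ℝ} (hA : ∀ i j, 0 ≤ A i j)
    (hdpos : ∀ i, 0 < A i i)
    (hirr : ∀ S : Finset (Fin n), S.Nonempty → S ≠ Finset.univ →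
      ∃ i ∉ S, ∃ j ∈ S, 0 < A i j)
    (i j : Fin n) : 0 < exp (clm A) (Pi.single j 1) i := by
  obtain ⟨K, hK⟩ := pow_entry_pos hA hdpos hirr
  rw [exp_clm_apply]
  have hterm : ∀ k : ℕ, 0 ≤ ((k.factorial : ℝ)⁻¹ * ((A ^ k).mulVec (Pi.single j 1) i)) := by
    intro k
    refine mul_nonneg (by positivity) ?_
    simp only [Matrix.mulVec, dotProduct]
    refine Finset.sum_nonneg fun l _ => ?_
    exact mul_nonneg (pow_entry_nonneg hA k i l) (by by_cases h : l = j <;> subst_eqs <;> simp [Pi.single_apply, *])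
  have hKpos : 0 < ((K.factorial : ℝ)⁻¹ * ((A ^ K).mulVec (Pi.single j 1) i)) := by
    refine mul_pos (by positivity) ?_
    have : (A ^ K).mulVec (Pi.single j 1) i = (A ^ K) i j := by
      simp [Matrix.mulVec_single]
    rw [this]; exact hK i j
  calc (0:ℝ) < (K.factorial : ℝ)⁻¹ * ((A ^ K).mulVec (Pi.single j 1) i) := hKpos
    _ ≤ _ := Summable.le_tsum (exp_summable_entry A _ i) K (fun k _ => hterm k)


lemma colsum_mulVec {A : Matrix (Fin n) (Fin n) ℝ} (hcol : ∀ j, ∑ i, A i j = 0)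
    (v : Fin n → ℝ) : ∑ i, A.mulVec v i = 0 := by
  simp only [Matrix.mulVec, dotProduct]
  rw [Finset.sum_comm]
  simp only [← Finset.sum_mul, hcol, zero_mul, Finset.sum_const_zero]

lemma exp_sum_invariant {A : Matrix (Fin n) (Fin n) ℝ} (hcol : ∀ j, ∑ i, A i j = 0)
    (x : Fin n → ℝ) : ∑ i, exp (clm A) x i = ∑ i, x i := by
  simp only [exp_clm_apply]
  rw [← Summable.tsum_finsetSum (fun i _ => exp_summable_entry A x i)]
  rw [tsum_eq_single 0]
  · simp [Matrix.one_mulVec]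
  · intro k hk
    obtain ⟨m, rfl⟩ := Nat.exists_eq_succ_of_ne_zero hk
    have h2 : (A ^ (m+1)).mulVec x = A.mulVec ((A ^ m).mulVec x) := by
      rw [Matrix.mulVec_mulVec, ← pow_succ']
    simp only [h2, ← Finset.mul_sum, colsum_mulVec hcol, mul_zero, Finset.sum_const_zero]

/-- entries of a continuous linear endomorphism of `Fin n → ℝ` -/
noncomputable def ent (T : (Fin n → ℝ) →L[ℝ] (Fin n → ℝ)) (i j : Fin n) : ℝ :=
  T (Pi.single j 1) i

lemma apply_eq_sum_ent (T : (Fin n → ℝ) →L[ℝ] (Fin n → ℝ)) (x : Fin n → ℝ) (i : Fin n) :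
    T x i = ∑ j, ent T i j * x j := by
  have hx : x = ∑ j, x j • (Pi.single j 1 : Fin n → ℝ) := by
    ext l
    simp [Pi.single_apply, Finset.sum_ite_eq]
  conv_lhs => rw [hx]
  rw [map_sum]
  simp only [Finset.sum_apply, ContinuousLinearMap.map_smul]
  exact Finset.sum_congr rfl fun j _ => by simp [ent, mul_comm]

lemma l1_bound (T : (Fin n → ℝ) →L[ℝ] (Fin n → ℝ)) (ε : ℝ) (hε0 : 0 ≤ ε)
    (hε : ∀ i j, ε ≤ ent T i j) (hcol : ∀ j, ∑ i, ent T i j = 1)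
    (x : Fin n → ℝ) (hx : ∑ j, x j = 0) :
    ∑ i, |T x i| ≤ (1 - n * ε) * ∑ i, |x i| := by
  have h1 : ∀ i, |T x i| ≤ ∑ j, (ent T i j - ε) * |x j| := by
    intro i
    have : T x i = ∑ j, (ent T i j - ε) * x j := by
      rw [apply_eq_sum_ent]
      simp only [sub_mul, Finset.sum_sub_distrib, ← Finset.mul_sum, hx, mul_zero, sub_zero]
    rw [this]
    refine (Finset.abs_sum_le_sum_abs _ _).trans (le_of_eq ?_)
    refine Finset.sum_congr rfl fun j _ => ?_
    rw [abs_mul, abs_of_nonneg (by linarith [hε i j])]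
  calc ∑ i, |T x i| ≤ ∑ i, ∑ j, (ent T i j - ε) * |x j| := Finset.sum_le_sum fun i _ => h1 i
    _ = ∑ j, (∑ i, ent T i j - n * ε) * |x j| := by
        rw [Finset.sum_comm]
        refine Finset.sum_congr rfl fun j _ => ?_
        simp [Finset.sum_sub_distrib, ← Finset.sum_mul, sub_mul, mul_assoc]
    _ = (1 - n * ε) * ∑ i, |x i| := by
        simp only [hcol, Finset.mul_sum]
    _ ≤ _ := le_refl _

lemma l1_contraction (T : (Fin n → ℝ) →L[ℝ] (Fin n → ℝ))
    (hpos : ∀ i j, 0 ≤ ent T i j) (hcol : ∀ j, ∑ i, ent T i j = 1)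
    (x : Fin n → ℝ) : ∑ i, |T x i| ≤ ∑ i, |x i| := by
  have h1 : ∀ i, |T x i| ≤ ∑ j, ent T i j * |x j| := by
    intro i
    rw [apply_eq_sum_ent]
    refine (Finset.abs_sum_le_sum_abs _ _).trans (le_of_eq ?_)
    exact Finset.sum_congr rfl fun j _ => by rw [abs_mul, abs_of_nonneg (hpos i j)]
  calc ∑ i, |T x i| ≤ ∑ i, ∑ j, ent T i j * |x j| := Finset.sum_le_sum fun i _ => h1 i
    _ = ∑ j, (∑ i, ent T i j) * |x j| := by rw [Finset.sum_comm]; simp [Finset.sum_mul]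
    _ = ∑ i, |x i| := by simp [hcol]


lemma clm_one : clm (1 : Matrix (Fin n) (Fin n) ℝ) = 1 := by
  ext x i; simp [Matrix.one_mulVec]

lemma exp_sub_smul_one (T : (Fin n → ℝ) →L[ℝ] (Fin n → ℝ)) (c : ℝ) :
    exp (T - c • 1) = Real.exp (-c) • exp T := by
  have h1 : T - c • 1 = T + (-c) • (1 : (Fin n → ℝ) →L[ℝ] (Fin n → ℝ)) := by
    module
  have hcomm : Commute T ((-c) • (1 : (Fin n → ℝ) →L[ℝ] (Fin n → ℝ))) := by
    unfold Commute SemiconjBy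
    rw [mul_smul_comm, smul_mul_assoc, mul_one, one_mul]
  letI : NormedAlgebra ℚ ((Fin n → ℝ) →L[ℝ] (Fin n → ℝ)) := .restrictScalars ℚ ℝ _
  rw [h1, exp_add_of_commute hcomm]
  have h2 : (-c) • (1 : (Fin n → ℝ) →L[ℝ] (Fin n → ℝ)) = algebraMap ℝ _ (-c) := by
    rw [Algebra.algebraMap_eq_smul_one]
  rw [h2, ← algebraMap_exp_comm, ← Real.exp_eq_exp_ℝ, Algebra.algebraMap_eq_smul_one]
  rw [mul_smul_comm, mul_one]


lemma rec_bound {s₀ ρ δ C : ℝ} (hρ0 : 0 ≤ ρ) (hρ1 : ρ < 1) (hδ : 0 ≤ δ) {b : ℝ → ℝ}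
    (hC : ∀ t, s₀ ≤ t → b t ≤ C)
    (hstep : ∀ t, s₀ + 1 ≤ t → b t ≤ ρ * b (t - 1) + δ) :
    ∀ k : ℕ, ∀ t, s₀ + k ≤ t → b t ≤ ρ ^ k * C + δ / (1 - ρ) := by
  intro k
  induction k with
  | zero =>
    intro t ht
    have h1 : (0:ℝ) ≤ δ / (1 - ρ) := div_nonneg hδ (by linarith)
    have := hC t (by push_cast at ht; linarith)
    simpa using by linarith
  | succ m ih =>
    intro t ht
    push_cast at ht
    have h1 : s₀ + m ≤ t - 1 := by linarith
    have h2 := ih (t - 1) (by push_cast; linarith)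
    have h3 := hstep t (by linarith)
    have h4 : ρ * b (t-1) ≤ ρ * (ρ ^ m * C + δ / (1 - ρ)) :=
      mul_le_mul_of_nonneg_left h2 hρ0
    have hne : (1:ℝ) - ρ ≠ 0 := by linarith
    have h5 : ρ * (δ / (1 - ρ)) + δ = δ / (1 - ρ) := by
      field_simp
      ring
    calc b t ≤ ρ * b (t-1) + δ := h3
      _ ≤ ρ * (ρ ^ m * C + δ / (1 - ρ)) + δ := by linarith
      _ = ρ ^ (m+1) * C + (ρ * (δ / (1 - ρ)) + δ) := by ring
      _ = ρ ^ (m+1) * C + δ / (1 - ρ) := by rw [h5]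

lemma clm_sub (A B : Matrix (Fin n) (Fin n) ℝ) : clm (A - B) = clm A - clm B := by
  ext x i
  simp [Matrix.sub_mulVec]

end LSAS

open LSAS in
set_option maxHeartbeats 2000000 in
/-- Lemma 2.5: bounded solutions of `X' = d L X + F(t)` with `‖F(t)‖₁ → 0` satisfy
`‖X(t) − (∑_j X_j(t)) α‖₁ → 0`; if `F ≡ 0` then `X(t) → (∑_j X_j(0)) α`. -/
theorem linear_system_asymptotic_synchronization
    {n : ℕ} (hn : 2 ≤ n)
    (L : Matrix (Fin n) (Fin n) ℝ)
    (hquasi : ∀ i j, i ≠ j → 0 ≤ L i j)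
    (hirr : ∀ A : Finset (Fin n), A.Nonempty → A ≠ Finset.univ →
      ∃ i ∉ A, ∃ j ∈ A, 0 < L i j)
    (hdiag : ∀ i, L i i = -∑ j ∈ Finset.univ.erase i, L j i)
    (α : Fin n → ℝ) (hα : L.mulVec α = 0) (hαpos : ∀ i, 0 < α i)
    (hαsum : ∑ i, α i = 1)
    (d : ℝ) (hd : 0 < d)
    (F : ℝ → Fin n → ℝ)
    (hFcont : ∀ i, ContinuousOn (fun t => F t i) (Set.Ici 0))
    (hFlim : Tendsto (fun t => ∑ i, |F t i|) atTop (𝓝 0))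
    (X : ℝ → Fin n → ℝ)
    (hXcont : ∀ i, ContinuousOn (fun t => X t i) (Set.Ici 0))
    (hXode : ∀ i, ∀ t : ℝ, 0 < t → HasDerivAt (fun s => X s i)
      (d * ∑ j, L i j * X t j + F t i) t)
    (hXbdd : ∃ C : ℝ, ∀ t ≥ (0:ℝ), ∀ i, |X t i| ≤ C) :
    Tendsto (fun t => ∑ i, |X t i - (∑ j, X t j) * α i|) atTop (𝓝 0) ∧
    ((∀ t ≥ (0:ℝ), F t = 0) →
      Tendsto X atTop (𝓝 (fun i => (∑ j, X 0 j) * α i))) := by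
  classical
  obtain ⟨C0, hC0⟩ := hXbdd
  have hC0nn : 0 ≤ C0 := le_trans (abs_nonneg _) (hC0 0 le_rfl ⟨0, by omega⟩)
  set N : (Fin n → ℝ) → ℝ := fun v => ∑ i, |v i| with hNdef
  have hNnn : ∀ v, 0 ≤ N v := fun v => Finset.sum_nonneg fun i _ => abs_nonneg _
  set Y : ℝ → Fin n → ℝ := fun t => fun i => X t i - (∑ j, X t j) * α i with hYdef
  set G : ℝ → Fin n → ℝ := fun t => fun i => F t i - (∑ j, F t j) * α i with hGdef
  -- column sums of L vanish
  have hcolL : ∀ j, ∑ i, L i j = 0 := by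
    intro j
    rw [← Finset.add_sum_erase _ _ (Finset.mem_univ j), hdiag j]
    ring
  -- the matrix B = d L + c I with nonnegative entries and positive diagonal
  set c : ℝ := d * (∑ i, |L i i|) + 1 with hcdef
  set B : Matrix (Fin n) (Fin n) ℝ := d • L + c • (1 : Matrix (Fin n) (Fin n) ℝ) with hBdef
  have hBentry : ∀ i j, B i j = d * L i j + c * (1 : Matrix (Fin n) (Fin n) ℝ) i j := by
    intro i j; simp [hBdef]
  have habs_le : ∀ i, |L i i| ≤ ∑ k, |L k k| :=
    fun i => Finset.single_le_sum (fun k _ => abs_nonneg (L k k)) (Finset.mem_univ i)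
  have hBdiagpos : ∀ i, 0 < B i i := by
    intro i
    rw [hBentry, Matrix.one_apply_eq, mul_one, hcdef]
    have h1 : d * |L i i| ≤ d * ∑ k, |L k k| := by
      apply mul_le_mul_of_nonneg_left (habs_le i) hd.le
    have h2 : -(d * |L i i|) ≤ d * L i i := by
      rw [← mul_neg]
      exact mul_le_mul_of_nonneg_left (neg_abs_le _) hd.le
    linarith
  have hBnn : ∀ i j, 0 ≤ B i j := by
    intro i j
    by_cases h : i = j
    · subst h; exact (hBdiagpos i).le
    · rw [hBentry, Matrix.one_apply_ne h, mul_zero, add_zero]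
      exact mul_nonneg hd.le (hquasi i j h)
  have hBirr : ∀ S : Finset (Fin n), S.Nonempty → S ≠ Finset.univ →
      ∃ i ∉ S, ∃ j ∈ S, 0 < B i j := by
    intro S hS1 hS2
    obtain ⟨i, hiS, j, hjS, hij⟩ := hirr S hS1 hS2
    have hne : i ≠ j := fun h => hiS (h ▸ hjS)
    refine ⟨i, hiS, j, hjS, ?_⟩
    rw [hBentry, Matrix.one_apply_ne hne, mul_zero, add_zero]
    exact mul_pos hd hij
  -- the semigroup
  set D : (Fin n → ℝ) →L[ℝ] (Fin n → ℝ) := clm (d • L) with hDdef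
  set P : ℝ → (Fin n → ℝ) →L[ℝ] (Fin n → ℝ) := fun s => NormedSpace.exp (s • D) with hPdef
  have hsD : ∀ s : ℝ, s • D = clm (s • (d • L)) := fun s => by rw [clm_smul]
  have hsplitM : ∀ s : ℝ, s • (d • L) = s • B - (s * c) • (1 : Matrix (Fin n) (Fin n) ℝ) := by
    intro s
    rw [hBdef]
    module
  have hPsplit : ∀ s : ℝ, P s = Real.exp (-(s * c)) • NormedSpace.exp (clm (s • B)) := by
    intro s
    rw [hPdef]
    simp only
    rw [hsD, hsplitM, clm_sub]
    have h1 : clm ((s * c) • (1 : Matrix (Fin n) (Fin n) ℝ))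
        = (s * c) • (1 : (Fin n → ℝ) →L[ℝ] (Fin n → ℝ)) := by rw [clm_smul, clm_one]
    rw [h1, exp_sub_smul_one]
  -- entries of P s
  have hsBnn : ∀ s : ℝ, 0 ≤ s → ∀ i j, 0 ≤ (s • B) i j := by
    intro s hs i j
    simpa using mul_nonneg hs (hBnn i j)
  have hentnn : ∀ s : ℝ, 0 ≤ s → ∀ i j, 0 ≤ ent (P s) i j := by
    intro s hs i j
    have := hPsplit s
    unfold ent
    rw [this, ContinuousLinearMap.smul_apply, Pi.smul_apply, smul_eq_mul]
    refine mul_nonneg (Real.exp_pos _).le ?_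
    refine exp_entry_nonneg (hsBnn s hs) (fun l => ?_) i
    by_cases h : l = j <;> subst_eqs <;> simp [Pi.single_apply, *]
  have hentpos : ∀ i j, 0 < ent (P 1) i j := by
    intro i j
    unfold ent
    rw [hPsplit 1, ContinuousLinearMap.smul_apply, Pi.smul_apply, smul_eq_mul]
    refine mul_pos (Real.exp_pos _) ?_
    rw [one_smul]
    exact exp_entry_pos hBnn hBdiagpos hBirr i j
  -- column sums of P s equal 1
  have hcolsD : ∀ (s : ℝ) (j : Fin n), ∑ i, (s • (d • L) : Matrix (Fin n) (Fin n) ℝ) i j = 0 := by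
    intro s j
    simp only [Matrix.smul_apply, smul_eq_mul, ← Finset.mul_sum, hcolL, mul_zero]
  have hPsum : ∀ (s : ℝ) (x : Fin n → ℝ), ∑ i, P s x i = ∑ i, x i := by
    intro s x
    rw [hPdef]
    simp only
    rw [hsD]
    exact exp_sum_invariant (hcolsD s) x
  have hentcol : ∀ (s : ℝ) (j : Fin n), ∑ i, ent (P s) i j = 1 := by
    intro s j
    unfold ent
    rw [hPsum s]
    simp [Pi.single_apply]
  -- contraction constants
  have hne : (Finset.univ : Finset (Fin n × Fin n)).Nonempty :=
    ⟨(⟨0, by omega⟩, ⟨0, by omega⟩), Finset.mem_univ _⟩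
  set ε : ℝ := Finset.univ.inf' hne (fun p : Fin n × Fin n => ent (P 1) p.1 p.2) with hεdef
  have hεpos : 0 < ε := by
    rw [hεdef, Finset.lt_inf'_iff]
    exact fun p _ => hentpos p.1 p.2
  have hεle : ∀ i j, ε ≤ ent (P 1) i j := fun i j =>
    Finset.inf'_le _ (Finset.mem_univ (i, j))
  set ρ : ℝ := 1 - n * ε with hρdef
  have hρ1 : ρ < 1 := by
    rw [hρdef]
    have : (0:ℝ) < n * ε := mul_pos (by positivity) hεpos
    linarith
  have hρ0 : 0 ≤ ρ := by
    have j0 : Fin n := ⟨0, by omega⟩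
    have h1 : (n : ℝ) * ε ≤ ∑ i, ent (P 1) i j0 := by
      have h2 := Finset.sum_le_sum (fun i (_ : i ∈ Finset.univ) => hεle i j0)
      simpa [Finset.sum_const, Finset.card_univ, mul_comm] using h2
    rw [hentcol 1 j0] at h1
    rw [hρdef]
    linarith
  have hcontr : ∀ s : ℝ, 0 ≤ s → ∀ x : Fin n → ℝ, N (P s x) ≤ N x :=
    fun s hs x => l1_contraction (P s) (hentnn s hs) (hentcol s) x
  have hstrict : ∀ x : Fin n → ℝ, (∑ j, x j = 0) → N (P 1 x) ≤ ρ * N x := by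
    intro x hx
    have := l1_bound (P 1) ε hεpos.le hεle (hentcol 1) x hx
    rw [hρdef]
    exact this
  -- continuity facts
  have hsumXc : ContinuousOn (fun t => ∑ j, X t j) (Set.Ici 0) :=
    continuousOn_finset_sum _ fun j _ => hXcont j
  have hYc : ∀ i, ContinuousOn (fun t => Y t i) (Set.Ici 0) :=
    fun i => (hXcont i).sub (hsumXc.mul continuousOn_const)
  have hsumFc : ContinuousOn (fun t => ∑ j, F t j) (Set.Ici 0) :=
    continuousOn_finset_sum _ fun j _ => hFcont j
  have hGc : ∀ i, ContinuousOn (fun t => G t i) (Set.Ici 0) :=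
    fun i => (hFcont i).sub (hsumFc.mul continuousOn_const)
  -- derivative of the total mass
  have hsum_deriv : ∀ t, 0 < t → HasDerivAt (fun s => ∑ j, X s j) (∑ j, F t j) t := by
    intro t ht
    have h1 : HasDerivAt (fun s => ∑ j, X s j)
        (∑ j, (d * ∑ k, L j k * X t k + F t j)) t :=
      HasDerivAt.fun_sum fun j _ => hXode j t ht
    have h2 : ∑ j, d * ∑ k, L j k * X t k = 0 := by
      rw [← Finset.mul_sum, Finset.sum_comm]
      have h3 : ∀ k, ∑ j : Fin n, L j k * X t k = 0 := fun k => by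
        rw [← Finset.sum_mul, hcolL, zero_mul]
      simp [h3]
    have h4 : (∑ j, (d * ∑ k, L j k * X t k + F t j)) = ∑ j, F t j := by
      rw [Finset.sum_add_distrib, h2, zero_add]
    rwa [h4] at h1
  -- derivative of Y
  have hYd : ∀ t, 0 < t → HasDerivAt Y (D (Y t) + G t) t := by
    intro t ht
    rw [hasDerivAt_pi]
    intro i
    have h1 : HasDerivAt (fun s => Y s i)
        ((d * ∑ j, L i j * X t j + F t i) - (∑ j, F t j) * α i) t :=
      (hXode i t ht).sub ((hsum_deriv t ht).mul_const (α i))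
    have hα' : ∑ j, L i j * α j = 0 := by
      have h5 := congrFun hα i
      simpa [Matrix.mulVec, dotProduct] using h5
    have hDY : D (Y t) i = d * ∑ j, L i j * X t j := by
      show ((d • L).mulVec (Y t)) i = _
      simp only [Matrix.mulVec, dotProduct, Matrix.smul_apply, smul_eq_mul, hYdef]
      have h6 : ∀ j, (d * L i j) * (X t j - (∑ k, X t k) * α j)
          = d * (L i j * X t j) - (d * (∑ k, X t k)) * (L i j * α j) := fun j => by ring
      rw [Finset.sum_congr rfl (fun j _ => h6 j), Finset.sum_sub_distrib,
        ← Finset.mul_sum, ← Finset.mul_sum, hα', mul_zero, sub_zero, Finset.mul_sum]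
    refine h1.congr_deriv (Eq.symm ?_)
    rw [Pi.add_apply, hDY]
    simp only [hGdef]
    ring
  -- the reversed semigroup
  set Q : ℝ → (Fin n → ℝ) →L[ℝ] (Fin n → ℝ) :=
    fun s => NormedSpace.exp (s • (-D)) with hQdef
  have hQd : ∀ t, HasDerivAt Q (Q t * (-D)) t :=
    fun t => hasDerivAt_exp_smul_const (-D) t
  have hPd : ∀ t, HasDerivAt P (P t * D) t :=
    fun t => hasDerivAt_exp_smul_const D t
  have hQcont : Continuous Q := by
    rw [continuous_iff_continuousAt]; exact fun t => (hQd t).continuousAt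
  have hPcontfun : Continuous P := by
    rw [continuous_iff_continuousAt]; exact fun t => (hPd t).continuousAt
  have hPQ : ∀ a b : ℝ, P a * Q b = P (a - b) := by
    intro a b
    rw [hPdef, hQdef]
    simp only
    have hb : b • (-D) = (-b) • D := by module
    have hcomm : Commute (a • D) ((-b) • D) := by
      show (a • D) * ((-b) • D) = ((-b) • D) * (a • D)
      rw [smul_mul_assoc, smul_mul_assoc, mul_smul_comm, mul_smul_comm,
        smul_smul, smul_smul, mul_comm]
    letI : NormedAlgebra ℚ ((Fin n → ℝ) →L[ℝ] (Fin n → ℝ)) := .restrictScalars ℚ ℝ _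
    rw [hb, ← NormedSpace.exp_add_of_commute hcomm]
    congr 1
    module
  have hP0 : P 0 = 1 := by
    rw [hPdef]; simp only [zero_smul]; exact NormedSpace.exp_zero
  have hQY : ∀ u, 0 < u → HasDerivAt (fun v => Q v (Y v)) (Q u (G u)) u := by
    intro u hu
    have h1 := (hQd u).clm_apply (hYd u hu)
    refine h1.congr_deriv (Eq.symm ?_)
    rw [ContinuousLinearMap.mul_apply, ContinuousLinearMap.neg_apply, map_neg, map_add]
    abel
  -- variation of constants
  have hVOC : ∀ s t : ℝ, 0 < s → s ≤ t →
      Y t = P (t - s) (Y s) + ∫ u in s..t, P (t - u) (G u) := by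
    intro s t hs hst
    have hIcc : Set.Icc s t ⊆ Set.Ici (0:ℝ) := fun u hu => le_trans hs.le hu.1
    have hGC : ContinuousOn G (Set.Icc s t) :=
      continuousOn_pi.2 fun i => (hGc i).mono hIcc
    have hInt1 : IntervalIntegrable (fun u => Q u (G u)) MeasureTheory.volume s t := by
      apply ContinuousOn.intervalIntegrable
      rw [Set.uIcc_of_le hst]
      exact (hQcont.continuousOn).clm_apply hGC
    have hFTC : (∫ u in s..t, Q u (G u)) = Q t (Y t) - Q s (Y s) := by
      apply intervalIntegral.integral_eq_sub_of_hasDerivAt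
      · intro u hu
        rw [Set.uIcc_of_le hst] at hu
        exact hQY u (lt_of_lt_of_le hs hu.1)
      · exact hInt1
    have hPtQ : ∀ u (x : Fin n → ℝ), P t (Q u x) = P (t - u) x := by
      intro u x
      rw [← ContinuousLinearMap.mul_apply, hPQ]
    have h2 : (∫ u in s..t, P (t - u) (G u)) = P t (∫ u in s..t, Q u (G u)) := by
      rw [← ContinuousLinearMap.intervalIntegral_comp_comm (P t) hInt1]
      exact intervalIntegral.integral_congr fun u _ => (hPtQ u (G u)).symm
    rw [hFTC, map_sub] at h2
    have h3 : P t (Q t (Y t)) = Y t := by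
      rw [hPtQ, sub_self, hP0, ContinuousLinearMap.one_apply]
    have h4 : P t (Q s (Y s)) = P (t - s) (Y s) := hPtQ s (Y s)
    rw [h3, h4] at h2
    rw [h2]
    abel
  -- one-step norm estimate
  have htri : ∀ a b : Fin n → ℝ, N (a + b) ≤ N a + N b := by
    intro a b
    rw [hNdef]
    simp only [Pi.add_apply]
    rw [← Finset.sum_add_distrib]
    exact Finset.sum_le_sum fun i _ => abs_add_le _ _
  have hNstep : ∀ s t δ : ℝ, 0 < s → s ≤ t → (∀ u ∈ Set.Icc s t, N (G u) ≤ δ) →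
      N (Y t) ≤ N (P (t - s) (Y s)) + (t - s) * δ := by
    intro s t δ hs hst hδ
    rw [hVOC s t hs hst]
    refine le_trans (htri _ _) (add_le_add le_rfl ?_)
    have hIcc : Set.Icc s t ⊆ Set.Ici (0:ℝ) := fun u hu => le_trans hs.le hu.1
    have hGC : ContinuousOn G (Set.Icc s t) :=
      continuousOn_pi.2 fun i => (hGc i).mono hIcc
    have hcont2 : ContinuousOn (fun u => P (t - u) (G u)) (Set.Icc s t) := by
      apply ContinuousOn.clm_apply
      · exact (hPcontfun.comp (continuous_const.sub continuous_id)).continuousOn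
      · exact hGC
    have hInt2 : IntervalIntegrable (fun u => P (t - u) (G u)) MeasureTheory.volume s t := by
      apply ContinuousOn.intervalIntegrable; rwa [Set.uIcc_of_le hst]
    have hcoord : ∀ i, (∫ u in s..t, P (t - u) (G u)) i
        = ∫ u in s..t, (P (t - u) (G u)) i := by
      intro i
      exact (ContinuousLinearMap.intervalIntegral_comp_comm
        (ContinuousLinearMap.proj (R := ℝ) (φ := fun _ : Fin n => ℝ) i) hInt2).symm
    have hcontabs : ∀ i, ContinuousOn (fun u => |(P (t - u)) (G u) i|) (Set.Icc s t) :=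
      fun i => (continuousOn_pi.1 hcont2 i).abs
    have hIntabs : ∀ i, IntervalIntegrable (fun u => |(P (t - u)) (G u) i|)
        MeasureTheory.volume s t := by
      intro i
      apply ContinuousOn.intervalIntegrable; rw [Set.uIcc_of_le hst]; exact hcontabs i
    have hIntsum : IntervalIntegrable (fun u => ∑ i, |(P (t - u)) (G u) i|)
        MeasureTheory.volume s t := by
      apply ContinuousOn.intervalIntegrable; rw [Set.uIcc_of_le hst]
      exact continuousOn_finset_sum _ fun i _ => hcontabs i
    calc N (∫ u in s..t, P (t - u) (G u))
        = ∑ i, |∫ u in s..t, (P (t - u) (G u)) i| := by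
          rw [hNdef]; exact Finset.sum_congr rfl fun i _ => by rw [hcoord i]
      _ ≤ ∑ i, ∫ u in s..t, |(P (t - u) (G u)) i| :=
          Finset.sum_le_sum fun i _ =>
            intervalIntegral.abs_integral_le_integral_abs hst
      _ = ∫ u in s..t, ∑ i, |(P (t - u) (G u)) i| :=
          (intervalIntegral.integral_finset_sum fun i _ => hIntabs i).symm
      _ ≤ ∫ u in s..t, δ := by
          apply intervalIntegral.integral_mono_on hst hIntsum intervalIntegrable_const
          intro u hu
          have h7 : N (P (t - u) (G u)) ≤ N (G u) :=
            hcontr (t - u) (by linarith [hu.2]) (G u)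
          exact le_trans h7 (hδ u hu)
      _ = (t - s) * δ := by simp [smul_eq_mul]
  -- zero total mass of Y
  have hσY : ∀ t, ∑ j, Y t j = 0 := by
    intro t
    simp only [hYdef]
    rw [Finset.sum_sub_distrib, ← Finset.mul_sum, hαsum]
    simp
  have habsS : ∀ t, |∑ j, X t j| ≤ ∑ j, |X t j| := fun t => Finset.abs_sum_le_sum_abs _ _
  have hNY : ∀ t, 0 ≤ t → N (Y t) ≤ 2 * n * C0 := by
    intro t ht
    have h1 : ∀ i, |Y t i| ≤ C0 + ((n : ℝ) * C0) * α i := by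
      intro i
      simp only [hYdef]
      have h2 : |X t i - (∑ j, X t j) * α i| ≤ |X t i| + |(∑ j, X t j) * α i| := abs_sub _ _
      have h3 : |(∑ j, X t j) * α i| = |∑ j, X t j| * α i := by
        rw [abs_mul, abs_of_pos (hαpos i)]
      have h4 : |∑ j, X t j| ≤ (n : ℝ) * C0 := by
        refine le_trans (habsS t) ?_
        calc ∑ j, |X t j| ≤ ∑ _j : Fin n, C0 := Finset.sum_le_sum fun j _ => hC0 t ht j
          _ = (n : ℝ) * C0 := by simp [mul_comm]
      have h5 : |∑ j, X t j| * α i ≤ ((n:ℝ) * C0) * α i :=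
        mul_le_mul_of_nonneg_right h4 (hαpos i).le
      calc |X t i - (∑ j, X t j) * α i| ≤ |X t i| + |(∑ j, X t j) * α i| := h2
        _ ≤ C0 + ((n:ℝ) * C0) * α i := by rw [h3]; exact add_le_add (hC0 t ht i) h5
    calc N (Y t) ≤ ∑ i, (C0 + ((n : ℝ) * C0) * α i) :=
          Finset.sum_le_sum fun i _ => h1 i
      _ = (n : ℝ) * C0 + (n : ℝ) * C0 * (∑ i, α i) := by
          rw [Finset.sum_add_distrib, ← Finset.mul_sum]
          simp [mul_comm]
      _ = 2 * n * C0 := by rw [hαsum]; ring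
  -- N ∘ G tends to 0
  have hNGle : ∀ u, N (G u) ≤ 2 * ∑ i, |F u i| := by
    intro u
    have h1 : ∀ i, |G u i| ≤ |F u i| + (∑ j, |F u j|) * α i := by
      intro i
      simp only [hGdef]
      have h2 : |F u i - (∑ j, F u j) * α i| ≤ |F u i| + |(∑ j, F u j) * α i| := abs_sub _ _
      have h3 : |(∑ j, F u j) * α i| ≤ (∑ j, |F u j|) * α i := by
        rw [abs_mul, abs_of_pos (hαpos i)]
        exact mul_le_mul_of_nonneg_right (Finset.abs_sum_le_sum_abs _ _) (hαpos i).le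
      linarith
    calc N (G u) ≤ ∑ i, (|F u i| + (∑ j, |F u j|) * α i) :=
          Finset.sum_le_sum fun i _ => h1 i
      _ = (∑ i, |F u i|) + (∑ j, |F u j|) * (∑ i, α i) := by
          rw [Finset.sum_add_distrib, ← Finset.mul_sum]
      _ = 2 * ∑ i, |F u i| := by rw [hαsum]; ring
  have hNG0 : Tendsto (fun u => N (G u)) atTop (𝓝 0) := by
    refine squeeze_zero (fun u => hNnn _) (fun u => hNGle u) ?_
    have h1 := hFlim.const_mul (2:ℝ)
    simpa using h1
  -- main convergence
  have hmain : Tendsto (fun t => N (Y t)) atTop (𝓝 0) := by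
    rw [Metric.tendsto_atTop]
    intro ε0 hε0
    have h1ρ : 0 < 1 - ρ := by linarith
    set δ : ℝ := ε0 * (1 - ρ) / 4 with hδdef
    have hδpos : 0 < δ := by positivity
    obtain ⟨s1, hs1⟩ := eventually_atTop.1 (hNG0.eventually (gt_mem_nhds hδpos))
    set s0 : ℝ := max s1 1 with hs0def
    have hs0pos : (0:ℝ) < s0 := lt_of_lt_of_le one_pos (le_max_right _ _)
    have hCb : ∀ t, s0 ≤ t → N (Y t) ≤ 2 * n * C0 :=
      fun t ht => hNY t (le_trans hs0pos.le ht)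
    have hstep : ∀ t, s0 + 1 ≤ t → N (Y t) ≤ ρ * N (Y (t - 1)) + δ := by
      intro t ht
      have hts : 0 < t - 1 := by linarith
      have hbound : ∀ u ∈ Set.Icc (t - 1) t, N (G u) ≤ δ := by
        intro u hu
        refine (hs1 u ?_).le
        have := le_max_left s1 1
        linarith [hu.1]
      have h3 := hNstep (t - 1) t δ hts (by linarith) hbound
      have h4 : t - (t - 1) = (1:ℝ) := by ring
      rw [h4] at h3
      have h5 := hstrict (Y (t - 1)) (hσY (t - 1))
      linarith
    have hrec := rec_bound hρ0 hρ1 hδpos.le hCb hstep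
    have hδρ : δ / (1 - ρ) = ε0 / 4 := by
      rw [hδdef]; field_simp
    have hpow : Tendsto (fun k : ℕ => ρ ^ k * (2 * n * C0)) atTop (𝓝 0) := by
      have h6 := tendsto_pow_atTop_nhds_zero_of_lt_one hρ0 hρ1
      simpa using h6.mul_const (2 * (n:ℝ) * C0)
    obtain ⟨k, hk⟩ := eventually_atTop.1
      (hpow.eventually (gt_mem_nhds (by positivity : (0:ℝ) < ε0/2)))
    refine ⟨s0 + k, fun t ht => ?_⟩
    have h6 := hrec k t ht
    rw [Real.dist_eq, sub_zero, abs_of_nonneg (hNnn _)]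
    have h7 := hk k le_rfl
    rw [hδρ] at h6
    linarith
  refine ⟨hmain, fun hF0 => ?_⟩
  -- total mass is constant when F ≡ 0
  have hgconst : ∀ b, 0 ≤ b → ∑ j, X b j = ∑ j, X 0 j := by
    intro b hb
    rcases eq_or_lt_of_le hb with hb0 | hb0
    · rw [← hb0]
    have hgb : ∀ s, 0 < s → s ≤ b → ∑ j, X b j = ∑ j, X s j := by
      intro s hs hsb
      have hderiv0 : ∀ x ∈ Set.Ico s b,
          HasDerivWithinAt (fun u => ∑ j, X u j) 0 (Set.Ici x) x := by
        intro x hx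
        have h8 := hsum_deriv x (lt_of_lt_of_le hs hx.1)
        have h9 : (∑ j, F x j) = 0 := by
          rw [hF0 x (by linarith [hx.1])]; simp
        rw [h9] at h8
        exact h8.hasDerivWithinAt
      have hcont8 : ContinuousOn (fun u => ∑ j, X u j) (Set.Icc s b) :=
        hsumXc.mono (fun u hu => le_trans hs.le hu.1)
      exact constant_of_has_deriv_right_zero hcont8 hderiv0 b (Set.right_mem_Icc.2 hsb)
    have hc1 : Tendsto (fun s => ∑ j, X s j) (𝓝[>] (0:ℝ)) (𝓝 (∑ j, X 0 j)) :=
      (hsumXc 0 Set.self_mem_Ici).mono_left (nhdsWithin_mono _ Set.Ioi_subset_Ici_self)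
    have hc3 : (fun s => ∑ j, X s j) =ᶠ[𝓝[>] (0:ℝ)] (fun _ => ∑ j, X b j) := by
      have hmem : Set.Ioc (0:ℝ) b ∈ 𝓝[>] (0:ℝ) := Ioc_mem_nhdsGT_of_mem ⟨le_refl 0, hb0⟩
      filter_upwards [hmem] with s hs
      exact (hgb s hs.1 hs.2).symm
    exact (tendsto_nhds_unique (hc1.congr' hc3) tendsto_const_nhds).symm
  rw [tendsto_pi_nhds]
  intro i
  have hYi : Tendsto (fun t => Y t i) atTop (𝓝 0) := by
    refine squeeze_zero_norm (fun t => ?_) hmain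
    rw [Real.norm_eq_abs]
    exact Finset.single_le_sum (fun j (_ : j ∈ Finset.univ) => abs_nonneg (Y t j))
      (Finset.mem_univ i)
  have hXi : ∀ᶠ t in atTop, X t i = Y t i + (∑ j, X 0 j) * α i := by
    filter_upwards [eventually_ge_atTop (0:ℝ)] with t ht
    simp only [hYdef]
    rw [hgconst t ht]
    ring
  have hfin : Tendsto (fun t => Y t i + (∑ j, X 0 j) * α i) atTop
      (𝓝 (0 + (∑ j, X 0 j) * α i)) := hYi.add_const _
  rw [zero_add] at hfin
  exact hfin.congr' (hXi.mono fun t h => h.symm)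
end

section
/- Suppose L satisfies (A1). Let d > 0 and m∞ ≥ 0. Then there exists a positive constant c (depending only on L, d and m∞) such that: for every continuous map M : [0,∞) → ℝⁿ with sup_{t≥0} ‖M(t)‖∞ ≤ m∞ and every componentwise nonnegative C¹ solution U : [0,∞) → ℝⁿ of the system U'(t) = d L U(t) + M(t) ∘ U(t) for t > 0 (where ∘ denotes the componentwise (Hadamard) product), one has max_{i∈Ω} U_i(t) ≤ c · min_{i∈Ω} U_i(t) for all t ≥ 1. -/
open Filter Topology

/-- Auxiliary: `W` is nonnegative, componentwise nondecreasing on `[0,∞)`,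
and satisfies the propagation inequality. -/
def HarnackGood {n : ℕ} (d : ℝ) (L : Matrix (Fin n) (Fin n) ℝ) (W : ℝ → Fin n → ℝ) : Prop :=
  (∀ i, ∀ t : ℝ, 0 ≤ t → 0 ≤ W t i) ∧
  (∀ i, MonotoneOn (fun t => W t i) (Set.Ici 0)) ∧
  (∀ i j, i ≠ j → ∀ s t : ℝ, 0 ≤ s → s ≤ t → d * L i j * (t - s) * W s j ≤ W t i)

/-- Auxiliary inductive predicate on finsets for the propagation argument. -/
def HarnackQ {n : ℕ} (d : ℝ) (L : Matrix (Fin n) (Fin n) ℝ) (j : Fin n)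
    (A : Finset (Fin n)) : Prop :=
  ∃ δ : ℝ, 0 < δ ∧ ∀ W, HarnackGood d L W → ∀ s : ℝ, 0 ≤ s → ∀ k ∈ A,
    δ * W s j ≤ W (s + A.card / n) k

lemma harnack_core {n : ℕ} (hn : 2 ≤ n) (L : Matrix (Fin n) (Fin n) ℝ)
    (hquasi : ∀ i j, i ≠ j → 0 ≤ L i j)
    (hirr : ∀ A : Finset (Fin n), A.Nonempty → A ≠ Finset.univ →
      ∃ i ∉ A, ∃ j ∈ A, 0 < L i j)
    (d : ℝ) (hd : 0 < d) :
    ∃ ε : ℝ, 0 < ε ∧ ∀ W, HarnackGood d L W → ∀ s : ℝ, 0 ≤ s → ∀ i j,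
      ε * W s j ≤ W (s + 1) i := by
  haveI hne : Nonempty (Fin n) := ⟨⟨0, by omega⟩⟩
  have hn0 : (0:ℝ) < n := by exact_mod_cast (by omega : 0 < n)
  have key : ∀ j : Fin n, ∃ δ : ℝ, 0 < δ ∧ ∀ W, HarnackGood d L W → ∀ s : ℝ, 0 ≤ s →
      ∀ k, δ * W s j ≤ W (s + 1) k := by
    intro j
    have step : ∀ A : Finset (Fin n), A.Nonempty → A ≠ Finset.univ → HarnackQ d L j A →
        ∃ i ∉ A, HarnackQ d L j (insert i A) := by
      rintro A hA hAne ⟨δ, hδ, hQ⟩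
      obtain ⟨i, hiA, j', hj'A, hLij⟩ := hirr A hA hAne
      refine ⟨i, hiA, min δ (d * L i j' * δ / n), lt_min hδ (by positivity), ?_⟩
      intro W hW s hs k hk
      obtain ⟨h0, hm, hp⟩ := hW
      have hci : (((insert i A).card : ℝ)) = (A.card : ℝ) + 1 := by
        rw [Finset.card_insert_of_notMem hiA]; push_cast; ring
      have hs' : (0:ℝ) ≤ s + (A.card : ℝ) / n := by positivity
      have hstep : s + (A.card:ℝ)/n ≤ s + ((insert i A).card : ℝ)/n := by
        rw [hci]
        gcongr
        linarith
      have hWsj : 0 ≤ W s j := h0 j s hs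
      rcases Finset.mem_insert.mp hk with rfl | hkA
      · have h1 : δ * W s j ≤ W (s + (A.card:ℝ)/n) j' := hQ W ⟨h0, hm, hp⟩ s hs j' hj'A
        have hij' : k ≠ j' := fun h => hiA (h ▸ hj'A)
        have h2 := hp k j' hij' (s + (A.card:ℝ)/n) (s + ((insert k A).card:ℝ)/n) hs' hstep
        have hdt : (s + ((insert k A).card:ℝ)/n) - (s + (A.card:ℝ)/n) = 1/n := by
          rw [hci]; field_simp; ring
        rw [hdt] at h2
        calc min δ (d * L k j' * δ / n) * W s j
            ≤ (d * L k j' * δ / n) * W s j :=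
              mul_le_mul_of_nonneg_right (min_le_right _ _) hWsj
          _ = d * L k j' * (1/n) * (δ * W s j) := by ring
          _ ≤ d * L k j' * (1/n) * W (s + (A.card:ℝ)/n) j' := by
              apply mul_le_mul_of_nonneg_left h1 (by positivity)
          _ ≤ W (s + ((insert k A).card:ℝ)/n) k := h2
      · have h1 : δ * W s j ≤ W (s + (A.card:ℝ)/n) k := hQ W ⟨h0, hm, hp⟩ s hs k hkA
        calc min δ (d * L i j' * δ / n) * W s j
            ≤ δ * W s j := mul_le_mul_of_nonneg_right (min_le_left _ _) hWsj
          _ ≤ W (s + (A.card:ℝ)/n) k := h1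
          _ ≤ W (s + ((insert i A).card:ℝ)/n) k :=
              hm k (Set.mem_Ici.mpr hs') (Set.mem_Ici.mpr (le_trans hs' hstep)) hstep
    have up : ∀ m : ℕ, ∀ A : Finset (Fin n), j ∈ A → n ≤ A.card + m → HarnackQ d L j A →
        HarnackQ d L j Finset.univ := by
      intro m
      induction m with
      | zero =>
        intro A hj hcard hQ
        have h1 : A.card ≤ n := by
          have := Finset.card_le_univ A
          simpa using this
        have : A = Finset.univ := Finset.eq_univ_of_card A (by rw [Fintype.card_fin]; omega)
        rwa [this] at hQ
      | succ m ih =>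
        intro A hj hcard hQ
        by_cases hAu : A = Finset.univ
        · rwa [hAu] at hQ
        · obtain ⟨i, hiA, hQ'⟩ := step A ⟨j, hj⟩ hAu hQ
          exact ih (insert i A) (Finset.mem_insert_of_mem hj)
            (by rw [Finset.card_insert_of_notMem hiA]; omega) hQ'
    have base : HarnackQ d L j ({j} : Finset (Fin n)) := by
      refine ⟨1, one_pos, ?_⟩
      rintro W ⟨h0, hm, hp⟩ s hs k hk
      rw [Finset.mem_singleton] at hk
      have hcard : ((({j} : Finset (Fin n)).card : ℝ)) = 1 := by simp
      rw [one_mul, hcard, hk]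
      have h1n : (0:ℝ) ≤ 1/(n:ℝ) := by positivity
      exact hm j (Set.mem_Ici.mpr hs) (Set.mem_Ici.mpr (by linarith)) (by linarith)
    obtain ⟨δ, hδ, h⟩ := up n ({j} : Finset (Fin n)) (Finset.mem_singleton_self j)
      (by rw [Finset.card_singleton]; omega) base
    refine ⟨δ, hδ, ?_⟩
    intro W hW s hs k
    have h2 := h W hW s hs k (Finset.mem_univ k)
    have hcard : (((Finset.univ : Finset (Fin n)).card : ℝ)) / n = 1 := by
      rw [Finset.card_univ, Fintype.card_fin]
      field_simp
    rwa [hcard] at h2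
  choose f hf0 hf using key
  refine ⟨Finset.univ.inf' Finset.univ_nonempty f, ?_, ?_⟩
  · exact (Finset.lt_inf'_iff _).mpr fun i _ => hf0 i
  · intro W hW s hs i j
    calc Finset.univ.inf' Finset.univ_nonempty f * W s j
        ≤ f j * W s j :=
          mul_le_mul_of_nonneg_right (Finset.inf'_le f (Finset.mem_univ j)) (hW.1 j s hs)
      _ ≤ W (s + 1) i := hf j W hW s hs i

lemma harnack_exp_deriv (a r : ℝ) :
    HasDerivAt (fun x : ℝ => Real.exp (a * x)) (Real.exp (a * r) * a) r := by
  have := ((hasDerivAt_id r).const_mul a).exp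
  simpa using this

/-- Lemma 2.6 (Harnack-type inequality): under (A1), for `d > 0` and `m∞ ≥ 0` there is a
constant `c > 0` such that every nonnegative solution of `U' = d L U + M(t) ∘ U` with
`sup_t ‖M(t)‖∞ ≤ m∞` satisfies `max_i U_i(t) ≤ c · min_i U_i(t)` for all `t ≥ 1`. -/
theorem harnack_inequality
    {n : ℕ} (hn : 2 ≤ n)
    (L : Matrix (Fin n) (Fin n) ℝ)
    (hquasi : ∀ i j, i ≠ j → 0 ≤ L i j)
    (hirr : ∀ A : Finset (Fin n), A.Nonempty → A ≠ Finset.univ →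
      ∃ i ∉ A, ∃ j ∈ A, 0 < L i j)
    (hdiag : ∀ i, L i i = -∑ j ∈ Finset.univ.erase i, L j i)
    (d : ℝ) (hd : 0 < d) (minf : ℝ) (hminf : 0 ≤ minf) :
    ∃ c : ℝ, 0 < c ∧
      ∀ (M : ℝ → Fin n → ℝ), (∀ i, ContinuousOn (fun t => M t i) (Set.Ici 0)) →
        (∀ t ≥ (0:ℝ), ∀ i, |M t i| ≤ minf) →
        ∀ (U : ℝ → Fin n → ℝ), (∀ i, ContinuousOn (fun t => U t i) (Set.Ici 0)) →
          (∀ t ≥ (0:ℝ), ∀ i, 0 ≤ U t i) →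
          (∀ i, ∀ t : ℝ, 0 < t → HasDerivAt (fun s => U s i)
            (d * ∑ j, L i j * U t j + M t i * U t i) t) →
          ∀ t ≥ (1:ℝ), (⨆ i, U t i) ≤ c * ⨅ i, U t i := by
  haveI hne : Nonempty (Fin n) := ⟨⟨0, by omega⟩⟩
  have hn0 : (0:ℝ) < n := by exact_mod_cast (by omega : 0 < n)
  obtain ⟨ε, hε, hcore⟩ := harnack_core hn L hquasi hirr d hd
  set K : ℝ := d * (∑ i, |L i i|) + minf with hK
  have hK0 : 0 ≤ K := by positivity
  refine ⟨(n:ℝ) * Real.exp minf * Real.exp K / ε, by positivity, ?_⟩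
  intro M hMc hMb U hUc hU0 hU' t ht
  set W : ℝ → Fin n → ℝ := fun r i => U r i * Real.exp (K * r) with hWdef
  have hWc : ∀ i, ContinuousOn (fun r => W r i) (Set.Ici 0) := fun i =>
    (hUc i).mul ((Real.continuous_exp.comp (continuous_const.mul continuous_id)).continuousOn)
  set D : Fin n → ℝ → ℝ := fun i r =>
    (d * ∑ k, L i k * U r k + M r i * U r i) * Real.exp (K * r)
      + U r i * (Real.exp (K * r) * K) with hDdef
  have hWd : ∀ i, ∀ r : ℝ, 0 < r → HasDerivAt (fun x => W x i) (D i r) r := by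
    intro i r hr
    exact (hU' i r hr).mul (harnack_exp_deriv K r)
  have hcoef : ∀ i (r : ℝ), 0 ≤ r → 0 ≤ d * L i i + M r i + K := by
    intro i r hr
    have h1 : |L i i| ≤ ∑ k, |L k k| :=
      Finset.single_le_sum (f := fun k => |L k k|) (fun k _ => abs_nonneg _) (Finset.mem_univ i)
    have h2 : -minf ≤ M r i := neg_le_of_abs_le (hMb r hr i)
    have h3 : -|L i i| ≤ L i i := neg_abs_le _
    have h4 : d * |L i i| ≤ d * ∑ k, |L k k| := mul_le_mul_of_nonneg_left h1 hd.le
    have h5 : d * (-|L i i|) ≤ d * L i i := mul_le_mul_of_nonneg_left h3 hd.le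
    rw [hK]; nlinarith
  have hD_ge : ∀ i j, i ≠ j → ∀ r : ℝ, 0 < r → d * L i j * W r j ≤ D i r := by
    intro i j hij r hr
    have hE : (0:ℝ) < Real.exp (K * r) := Real.exp_pos _
    have hsum : ∑ k, L i k * U r k
        = L i i * U r i + ∑ k ∈ Finset.univ.erase i, L i k * U r k :=
      (Finset.add_sum_erase _ _ (Finset.mem_univ i)).symm
    have hterm : L i j * U r j ≤ ∑ k ∈ Finset.univ.erase i, L i k * U r k :=
      Finset.single_le_sum
        (fun k hk => mul_nonneg (hquasi i k (Ne.symm (Finset.mem_erase.mp hk).1))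
          (hU0 r hr.le k))
        (Finset.mem_erase.mpr ⟨Ne.symm hij, Finset.mem_univ j⟩)
    have hc := hcoef i r hr.le
    have hUi : 0 ≤ U r i := hU0 r hr.le i
    have expand : D i r = Real.exp (K * r) *
        (d * (L i i * U r i + ∑ k ∈ Finset.univ.erase i, L i k * U r k)
          + (M r i + K) * U r i) := by
      rw [hDdef]; dsimp only; rw [hsum]; ring
    rw [expand, hWdef]; dsimp only
    nlinarith [mul_nonneg (mul_nonneg hE.le hd.le) (sub_nonneg.mpr hterm),
      mul_nonneg hE.le (mul_nonneg hc hUi)]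
  have hD_nn : ∀ i (r : ℝ), 0 < r → 0 ≤ D i r := by
    intro i r hr
    have hE : (0:ℝ) < Real.exp (K * r) := Real.exp_pos _
    have hsum : ∑ k, L i k * U r k
        = L i i * U r i + ∑ k ∈ Finset.univ.erase i, L i k * U r k :=
      (Finset.add_sum_erase _ _ (Finset.mem_univ i)).symm
    have hterm : 0 ≤ ∑ k ∈ Finset.univ.erase i, L i k * U r k :=
      Finset.sum_nonneg fun k hk =>
        mul_nonneg (hquasi i k (Ne.symm (Finset.mem_erase.mp hk).1)) (hU0 r hr.le k)
    have hc := hcoef i r hr.le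
    have hUi : 0 ≤ U r i := hU0 r hr.le i
    have expand : D i r = Real.exp (K * r) *
        (d * (L i i * U r i + ∑ k ∈ Finset.univ.erase i, L i k * U r k)
          + (M r i + K) * U r i) := by
      rw [hDdef]; dsimp only; rw [hsum]; ring
    rw [expand]
    nlinarith [mul_nonneg (mul_nonneg hE.le hd.le) hterm,
      mul_nonneg hE.le (mul_nonneg hc hUi)]
  have hWmono : ∀ i, MonotoneOn (fun r => W r i) (Set.Ici 0) := by
    intro i
    apply monotoneOn_of_deriv_nonneg (convex_Ici 0) (hWc i)
    · intro r hr
      rw [interior_Ici] at hr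
      exact ((hWd i r hr).differentiableAt).differentiableWithinAt
    · intro r hr
      rw [interior_Ici] at hr
      rw [(hWd i r hr).deriv]
      exact hD_nn i r hr
  have hWnn : ∀ i, ∀ r : ℝ, 0 ≤ r → 0 ≤ W r i := fun i r hr =>
    mul_nonneg (hU0 r hr i) (Real.exp_pos _).le
  have hWprop : ∀ i j, i ≠ j → ∀ s t : ℝ, 0 ≤ s → s ≤ t →
      d * L i j * (t - s) * W s j ≤ W t i := by
    intro i j hij s t hs hst
    have hLij : 0 ≤ L i j := hquasi i j hij
    have hmono : MonotoneOn (fun r => W r i - d * L i j * W s j * r) (Set.Ici s) := by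
      apply monotoneOn_of_deriv_nonneg (convex_Ici s)
      · exact ((hWc i).mono (Set.Ici_subset_Ici.mpr hs)).sub
          (continuous_const.mul continuous_id).continuousOn
      · intro r hr
        rw [interior_Ici] at hr
        have hr0 : 0 < r := lt_of_le_of_lt hs hr
        exact (((hWd i r hr0).sub
          ((hasDerivAt_id r).const_mul (d * L i j * W s j))).differentiableAt).differentiableWithinAt
      · intro r hr
        rw [interior_Ici] at hr
        have hr0 : 0 < r := lt_of_le_of_lt hs hr
        have hder : HasDerivAt (fun r => W r i - d * L i j * W s j * r)
            (D i r - d * L i j * W s j * 1) r :=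
          (hWd i r hr0).sub ((hasDerivAt_id r).const_mul (d * L i j * W s j))
        rw [hder.deriv]
        have h1 : d * L i j * W r j ≤ D i r := hD_ge i j hij r hr0
        have h2 : W s j ≤ W r j :=
          hWmono j (Set.mem_Ici.mpr hs) (Set.mem_Ici.mpr (le_trans hs hr.le)) hr.le
        have h3 : d * L i j * W s j ≤ d * L i j * W r j :=
          mul_le_mul_of_nonneg_left h2 (mul_nonneg hd.le hLij)
        rw [mul_one]
        linarith
    have h := hmono (Set.mem_Ici.mpr le_rfl) (Set.mem_Ici.mpr hst) hst
    simp only at h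
    have hWsi : 0 ≤ W s i := hWnn i s hs
    nlinarith [h, hWsi]
  have hGood : HarnackGood d L W := ⟨hWnn, hWmono, hWprop⟩
  -- total mass
  set S : ℝ → ℝ := fun r => ∑ i, U r i with hSdef
  have hSc : ContinuousOn S (Set.Ici 0) := by
    apply continuousOn_finset_sum
    intro i _
    exact hUc i
  have hSd : ∀ r : ℝ, 0 < r →
      HasDerivAt S (∑ i, (d * ∑ j, L i j * U r j + M r i * U r i)) r := fun r hr =>
    HasDerivAt.fun_sum (fun i _ => hU' i r hr)
  have hcol : ∀ j, ∑ i, L i j = 0 := by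
    intro j
    have h := Finset.add_sum_erase Finset.univ (fun i => L i j) (Finset.mem_univ j)
    rw [hdiag j] at h
    linarith [h]
  have hSbound : ∀ r : ℝ, 0 < r →
      ∑ i, (d * ∑ j, L i j * U r j + M r i * U r i) ≤ minf * S r := by
    intro r hr
    have h1 : ∑ i, ∑ j, L i j * U r j = 0 := by
      rw [Finset.sum_comm]
      apply Finset.sum_eq_zero
      intro j _
      rw [← Finset.sum_mul, hcol j, zero_mul]
    have h2 : ∀ i, M r i * U r i ≤ minf * U r i := fun i =>
      mul_le_mul_of_nonneg_right (le_of_abs_le (hMb r hr.le i)) (hU0 r hr.le i)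
    calc ∑ i, (d * ∑ j, L i j * U r j + M r i * U r i)
        = d * (∑ i, ∑ j, L i j * U r j) + ∑ i, M r i * U r i := by
          rw [Finset.sum_add_distrib, Finset.mul_sum]
      _ = ∑ i, M r i * U r i := by rw [h1]; ring
      _ ≤ ∑ i, minf * U r i := Finset.sum_le_sum (fun i _ => h2 i)
      _ = minf * S r := by rw [Finset.mul_sum]
  have hSanti : AntitoneOn (fun r => S r * Real.exp (-minf * r)) (Set.Ici 0) := by
    apply antitoneOn_of_deriv_nonpos (convex_Ici 0)
    · exact hSc.mul
        ((Real.continuous_exp.comp (continuous_const.mul continuous_id)).continuousOn)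
    · intro r hr
      rw [interior_Ici] at hr
      exact (((hSd r hr).mul (harnack_exp_deriv (-minf) r)).differentiableAt).differentiableWithinAt
    · intro r hr
      rw [interior_Ici] at hr
      have hder : HasDerivAt (fun r => S r * Real.exp (-minf * r)) _ r :=
        (hSd r hr).mul (harnack_exp_deriv (-minf) r)
      rw [hder.deriv]
      have hE : (0:ℝ) < Real.exp (-minf * r) := Real.exp_pos _
      have h1 := mul_le_mul_of_nonneg_right (hSbound r hr) hE.le
      have hSnn : 0 ≤ S r := Finset.sum_nonneg fun i _ => hU0 r hr.le i
      nlinarith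
  -- assemble
  set s : ℝ := t - 1 with hsdef
  have hs0 : 0 ≤ s := by rw [hsdef]; linarith
  have hts : t = s + 1 := by rw [hsdef]; ring
  have ht0 : (0:ℝ) ≤ t := by linarith
  obtain ⟨j₀, hj₀⟩ := Finite.exists_max (fun j => U s j)
  have hUsj₀ : 0 ≤ U s j₀ := hU0 s hs0 j₀
  have hSs : S t ≤ S s * Real.exp minf := by
    have h := hSanti (Set.mem_Ici.mpr hs0) (Set.mem_Ici.mpr ht0) (by linarith : s ≤ t)
    have key1 := mul_le_mul_of_nonneg_right h (Real.exp_pos (minf * t)).le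
    have l1 : S t * Real.exp (-minf * t) * Real.exp (minf * t) = S t := by
      rw [mul_assoc, ← Real.exp_add]
      norm_num
    have hexp1 : -minf * s + minf * t = minf := by rw [hts]; ring
    have l2 : S s * Real.exp (-minf * s) * Real.exp (minf * t) = S s * Real.exp minf := by
      rw [mul_assoc, ← Real.exp_add, hexp1]
    rw [l1, l2] at key1
    exact key1
  have hStle : ∀ i, U t i ≤ (n:ℝ) * Real.exp minf * U s j₀ := by
    intro i
    have h1 : U t i ≤ S t :=
      Finset.single_le_sum (fun k _ => hU0 t ht0 k) (Finset.mem_univ i)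
    have h2 : S s ≤ (n:ℝ) * U s j₀ := by
      have h := Finset.sum_le_card_nsmul Finset.univ (fun j => U s j) (U s j₀)
        (fun j _ => hj₀ j)
      simpa [nsmul_eq_mul] using h
    have h3 := mul_le_mul_of_nonneg_right h2 (Real.exp_pos minf).le
    nlinarith
  have hlow : ∀ i, ε * U s j₀ * Real.exp (K * s) / Real.exp (K * t) ≤ U t i := by
    intro i
    have h := hcore W hGood s hs0 i j₀
    rw [← hts] at h
    rw [div_le_iff₀ (Real.exp_pos _)]
    have : ε * (U s j₀ * Real.exp (K * s)) ≤ U t i * Real.exp (K * t) := h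
    linarith
  have hb : ε * U s j₀ * Real.exp (K * s) / Real.exp (K * t)
      ≤ ⨅ i', U t i' := le_ciInf hlow
  have hsplit : Real.exp (K * t) = Real.exp (K * s) * Real.exp K := by
    rw [← Real.exp_add]
    congr 1
    rw [hts]; ring
  have hcb : (n:ℝ) * Real.exp minf * Real.exp K / ε
      * (ε * U s j₀ * Real.exp (K * s) / Real.exp (K * t))
      = (n:ℝ) * Real.exp minf * U s j₀ := by
    rw [hsplit]
    have hE1 : Real.exp (K * s) ≠ 0 := (Real.exp_pos _).ne'
    have hE2 : Real.exp K ≠ 0 := (Real.exp_pos _).ne'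
    field_simp
  refine ciSup_le fun i => ?_
  calc U t i ≤ (n:ℝ) * Real.exp minf * U s j₀ := hStle i
    _ = (n:ℝ) * Real.exp minf * Real.exp K / ε
        * (ε * U s j₀ * Real.exp (K * s) / Real.exp (K * t)) := hcb.symm
    _ ≤ (n:ℝ) * Real.exp minf * Real.exp K / ε * ⨅ i', U t i' :=
        mul_le_mul_of_nonneg_left hb (by positivity)
end

section
/- Suppose (A1)-(A3) hold with d_S > 0 and d_I = 0. Then every solution (S(t), I(t)) of the mass-action SIS network model satisfies limsup_{t→∞} ∑_{i∈Ω} I_i(t) ≤ N · max{1 − r̃_m, 0}. -/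
open Filter Topology Set


lemma hasDerivAt_maxsq (x : ℝ) : HasDerivAt (fun y : ℝ => (max y 0)^2) (2 * max x 0) x := by
  rcases lt_trichotomy x 0 with hx | hx | hx
  · have h0 : HasDerivAt (fun _ : ℝ => (0:ℝ)) (2 * max x 0) x := by
      simpa [max_eq_right hx.le] using (hasDerivAt_const x (0:ℝ))
    refine h0.congr_of_eventuallyEq ?_
    filter_upwards [eventually_lt_nhds hx] with y hy
    simp [max_eq_right hy.le]
  · subst hx
    rw [hasDerivAt_iff_isLittleO]
    simp only [max_self, mul_zero, smul_zero, sub_zero, le_refl, max_eq_right, ne_eq,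
      OfNat.ofNat_ne_zero, not_false_eq_true, zero_pow]
    rw [Asymptotics.isLittleO_iff]
    intro c hc
    filter_upwards [Metric.eventually_nhds_iff.2 ⟨c, hc, fun {y} hy => hy⟩] with y hy
    have h1 : |max y 0| ≤ |y| := by
      rcases le_total y 0 with h | h
      · simp [max_eq_right h]
      · simp [max_eq_left h]
    have : ‖(max y 0)^2‖ ≤ |y| * |y| := by
      rw [Real.norm_eq_abs, abs_pow, sq]
      exact mul_le_mul h1 h1 (abs_nonneg _) (abs_nonneg _)
    refine this.trans ?_
    have hy' : |y| ≤ c := by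
      have := hy
      simp [Real.dist_eq] at this
      exact this.le
    exact mul_le_mul_of_nonneg_right hy' (abs_nonneg _)
  · have h0 : HasDerivAt (fun y : ℝ => y^2) (2 * max x 0) x := by
      simpa [max_eq_left hx.le, mul_comm] using (hasDerivAt_pow 2 x)
    refine h0.congr_of_eventuallyEq ?_
    filter_upwards [eventually_gt_nhds hx] with y hy
    simp [max_eq_left hy.le]

lemma const_of_deriv_zero {f : ℝ → ℝ} (hf : ContinuousOn f (Set.Ici 0))
    (hder : ∀ t > (0:ℝ), HasDerivAt f 0 t) : ∀ t ≥ (0:ℝ), f t = f 0 := by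
  intro t ht
  rcases eq_or_lt_of_le ht with h | h
  · rw [← h]
  · -- for every ε ∈ (0, t], f t = f ε
    have key : ∀ ε ∈ Set.Ioc (0:ℝ) t, f t = f ε := by
      intro ε hε
      have := constant_of_has_deriv_right_zero (f := f) (a := ε) (b := t)
        (hf.mono (fun x hx => le_trans hε.1.le hx.1))
        (fun x hx => (hder x (lt_of_lt_of_le hε.1 hx.1)).hasDerivWithinAt)
      exact this t ⟨hε.2, le_refl t⟩
    have h1 : Tendsto f (𝓝[>] (0:ℝ)) (𝓝 (f 0)) :=
      ((hf 0 Set.self_mem_Ici).mono Set.Ioi_subset_Ici_self).tendsto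
    have h2 : Tendsto f (𝓝[>] (0:ℝ)) (𝓝 (f t)) := by
      refine Tendsto.congr' ?_ tendsto_const_nhds
      filter_upwards [Ioo_mem_nhdsGT_of_mem (Set.left_mem_Ico.2 h)] with ε hε
      exact (key ε ⟨hε.1, hε.2.le⟩)
    exact (tendsto_nhds_unique h2 h1)

lemma vanish_of_linear {f a : ℝ → ℝ} (hf : ContinuousOn f (Set.Ici 0))
    (hac : ContinuousOn a (Set.Ici 0))
    (hder : ∀ t > (0:ℝ), HasDerivAt f (a t * f t) t)
    (h0 : f 0 = 0) : ∀ t ≥ (0:ℝ), f t = 0 := by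
  intro T hT
  rcases eq_or_lt_of_le hT with h | h
  · rw [← h, h0]
  -- bound on a over [0, T]
  obtain ⟨C, hC⟩ : ∃ C, ∀ x ∈ Set.Icc (0:ℝ) T, ‖a x‖ ≤ C :=
    isCompact_Icc.exists_bound_of_continuousOn (hac.mono (fun x hx => hx.1))
  set K := max C 0 with hK
  have hKnn : 0 ≤ K := le_max_right _ _
  have key : ∀ ε ∈ Set.Ioc (0:ℝ) T, ‖f T‖ ≤ ‖f ε‖ * Real.exp (K * T) := by
    intro ε hε
    have grn := norm_le_gronwallBound_of_norm_deriv_right_le (f := f)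
      (f' := fun x => a x * f x) (δ := ‖f ε‖) (K := K) (ε := 0) (a := ε) (b := T)
      (hf.mono (fun x hx => le_trans hε.1.le hx.1))
      (fun x hx => (hder x (lt_of_lt_of_le hε.1 hx.1)).hasDerivWithinAt)
      (le_refl _) ?_ T ⟨hε.2, le_refl T⟩
    · rw [gronwallBound_ε0] at grn
      refine grn.trans ?_
      have : Real.exp (K * (T - ε)) ≤ Real.exp (K * T) := by
        apply Real.exp_le_exp.2
        have : T - ε ≤ T := by linarith [hε.1]
        exact mul_le_mul_of_nonneg_left this hKnn
      exact mul_le_mul_of_nonneg_left this (norm_nonneg _)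
    · intro x hx
      rw [norm_mul]
      have := hC x ⟨le_trans hε.1.le hx.1, hx.2.le⟩
      have h2 : ‖a x‖ ≤ K := this.trans (le_max_left _ _)
      have := mul_le_mul_of_nonneg_right h2 (norm_nonneg (f x))
      linarith
  have h1 : Tendsto (fun ε => ‖f ε‖ * Real.exp (K * T)) (𝓝[>] (0:ℝ)) (𝓝 0) := by
    have hT0 : Tendsto f (𝓝[>] (0:ℝ)) (𝓝 (f 0)) :=
      ((hf 0 Set.self_mem_Ici).mono Set.Ioi_subset_Ici_self).tendsto
    have := (hT0.norm.mul_const (Real.exp (K * T)))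
    rw [h0] at this
    simpa using this
  have h2 : ∀ᶠ ε in 𝓝[>] (0:ℝ), ‖f T‖ ≤ ‖f ε‖ * Real.exp (K * T) := by
    filter_upwards [Ioo_mem_nhdsGT_of_mem (Set.left_mem_Ico.2 h)] with ε hε
    exact key ε ⟨hε.1, hε.2.le⟩
  have := ge_of_tendsto h1 h2
  simpa using this

lemma max_mul_max_neg (x : ℝ) : max x 0 * max (-x) 0 = 0 := by
  rcases le_total x 0 with h | h
  · rw [max_eq_right h, zero_mul]
  · rw [max_eq_right (by linarith : -x ≤ 0), mul_zero]

lemma self_eq_max_sub (x : ℝ) : x = max x 0 - max (-x) 0 := by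
  rcases le_total x 0 with h | h
  · rw [max_eq_right h, max_eq_left (by linarith : 0 ≤ -x)]; ring
  · rw [max_eq_left h, max_eq_right (by linarith : -x ≤ 0)]; ring

lemma alg_ineq {n : ℕ} (L : Matrix (Fin n) (Fin n) ℝ)
    (hquasi : ∀ i j, i ≠ j → 0 ≤ L i j)
    (α : Fin n → ℝ) (hαpos : ∀ i, 0 < α i)
    (hrow : ∀ i, ∑ j, L i j * α j = 0) (hcol : ∀ j, ∑ i, L i j = 0)
    (β γ : Fin n → ℝ) (hβ : ∀ i, 0 < β i)
    (dS c : ℝ) (hdS : 0 ≤ dS)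
    (P : Finset (Fin n)) (s w : Fin n → ℝ)
    (hs : ∀ i, 0 ≤ s i) (hw : ∀ i, 0 ≤ w i)
    (hw0 : ∀ j, j ∉ P → w j = 0)
    (hr : ∀ i ∈ P, c * α i ≤ γ i / β i) :
    ∑ i, -(2 * max (c - s i / α i) 0 * (dS * ∑ j, L i j * s j + (γ i * w i - β i * s i * w i)))
      ≤ -(dS * (∑ i, ∑ j, L i j * α j *
            (max (c - s i / α i) 0 - max (c - s j / α j) 0)^2)
          + 2 * ∑ i, β i * α i * w i * (max (c - s i / α i) 0)^2) := by
  set V : Fin n → ℝ := fun i => max (c - s i / α i) 0 with hV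
  set Pp : Fin n → ℝ := fun i => max (s i / α i - c) 0 with hPp
  set B : Fin n → Fin n → ℝ := fun i j => L i j * α j with hB
  set A : Fin n → ℝ := fun i => ∑ j, L i j * s j with hA
  have hVnn : ∀ i, 0 ≤ V i := fun i => le_max_right _ _
  have hPnn : ∀ i, 0 ≤ Pp i := fun i => le_max_right _ _
  have hBnn : ∀ i j, i ≠ j → 0 ≤ B i j := fun i j hij =>
    mul_nonneg (hquasi i j hij) (hαpos j).le
  have hcolB : ∀ j, ∑ i, B i j = 0 := by
    intro j
    have : ∑ i, B i j = (∑ i, L i j) * α j := by rw [Finset.sum_mul]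
    rw [this, hcol, zero_mul]
  -- rewrite A i
  have hAe : ∀ i, A i = ∑ j, B i j * (Pp j - V j) := by
    intro i
    have e1 : ∀ j, B i j * (Pp j - V j) = L i j * s j - c * B i j := by
      intro j
      have : Pp j - V j = s j / α j - c := by
        have := self_eq_max_sub (s j / α j - c)
        simp only [hPp, hV, neg_sub] at *
        linarith [this]
      rw [this]
      have hαj := (hαpos j).ne'
      field_simp
      ring
    simp_rw [e1]
    rw [Finset.sum_sub_distrib, ← Finset.mul_sum]
    have : ∑ j, B i j = 0 := hrow i
    rw [this, mul_zero, sub_zero]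
  -- quadratic identity
  have hq : (∑ i, ∑ j, B i j * (V i - V j)^2) = -2 * ∑ i, ∑ j, B i j * (V i * V j) := by
    have e : ∀ i j, B i j * (V i - V j)^2
        = V i^2 * B i j + B i j * V j^2 - 2 * (B i j * (V i * V j)) := by intros; ring
    simp_rw [e, Finset.sum_sub_distrib, Finset.sum_add_distrib]
    have e1 : ∑ i, ∑ j, V i ^ 2 * B i j = 0 := by
      refine Finset.sum_eq_zero fun i _ => ?_
      rw [← Finset.mul_sum, hrow i, mul_zero]
    have e2 : ∑ i, ∑ j, B i j * V j ^ 2 = 0 := by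
      rw [Finset.sum_comm]
      refine Finset.sum_eq_zero fun j _ => ?_
      rw [← Finset.sum_mul, hcolB j, zero_mul]
    rw [e1, e2]
    simp [← Finset.mul_sum]
  -- positivity of cross term
  have hcross : 0 ≤ ∑ i, ∑ j, B i j * (V i * Pp j) := by
    refine Finset.sum_nonneg fun i _ => Finset.sum_nonneg fun j _ => ?_
    by_cases hij : i = j
    · subst hij
      have : V i * Pp i = 0 := by
        have := max_mul_max_neg (c - s i / α i)
        simpa [hV, hPp, neg_sub] using this
      rw [this, mul_zero]
    · exact mul_nonneg (hBnn i j hij) (mul_nonneg (hVnn i) (hPnn j))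
  -- diffusion inequality
  have hdiff : (∑ i, ∑ j, B i j * (V i - V j)^2) ≤ 2 * ∑ i, V i * A i := by
    have e : ∑ i, V i * A i
        = (∑ i, ∑ j, B i j * (V i * Pp j)) - ∑ i, ∑ j, B i j * (V i * V j) := by
      simp_rw [hAe]
      rw [← Finset.sum_sub_distrib]
      refine Finset.sum_congr rfl fun i _ => ?_
      rw [Finset.mul_sum, ← Finset.sum_sub_distrib]
      refine Finset.sum_congr rfl fun j _ => ?_
      ring
    have e2 : ∑ i, ∑ j, B i j * (V i * V j)
        = -(1/2) * ∑ i, ∑ j, B i j * (V i - V j)^2 := by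
      rw [hq]; ring
    rw [e, e2]
    linarith [hcross]
  -- reaction inequality, termwise
  have hreac : ∀ i, β i * α i * w i * (V i)^2 ≤ V i * (γ i * w i - β i * s i * w i) := by
    intro i
    rcases (hw i).eq_or_lt with hwi | hwi
    · rw [← hwi]; ring_nf; simp
    · have hiP : i ∈ P := by
        by_contra hiP
        exact absurd (hw0 i hiP) hwi.ne'
      have hri := hr i hiP
      have hβi := hβ i
      have hαi := hαpos i
      rcases le_or_gt (V i) 0 with hVi | hVi
      · have : V i = 0 := le_antisymm hVi (hVnn i)
        rw [this]; ring_nf; simp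
      · have hVieq : V i = c - s i / α i := by
          rcases max_cases (c - s i / α i) (0:ℝ) with ⟨h1, _⟩ | ⟨h1, h2⟩
          · exact h1
          · exfalso; rw [hV] at hVi; simp only at hVi; linarith [h1]
        have key : β i * α i * V i ≤ γ i - β i * s i := by
          have h1 : β i * (c * α i) ≤ γ i := by
            have := mul_le_mul_of_nonneg_left hri hβi.le
            rwa [mul_div_cancel₀ _ hβi.ne'] at this
          have h2 : β i * α i * (c - s i / α i) = β i * (c * α i) - β i * s i := by
            field_simp
          rw [hVieq, h2]
          linarith
        have := mul_le_mul_of_nonneg_left key (mul_nonneg hVi.le hwi.le)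
        calc β i * α i * w i * (V i)^2 = (V i * w i) * (β i * α i * V i) := by ring
          _ ≤ (V i * w i) * (γ i - β i * s i) := this
          _ = V i * (γ i * w i - β i * s i * w i) := by ring
  -- combine
  have hreacsum : ∑ i, β i * α i * w i * (V i)^2 ≤ ∑ i, V i * (γ i * w i - β i * s i * w i) :=
    Finset.sum_le_sum fun i _ => hreac i
  have lhs_eq : ∑ i, -(2 * V i * (dS * A i + (γ i * w i - β i * s i * w i)))
      = -(2 * dS * ∑ i, V i * A i) - 2 * ∑ i, V i * (γ i * w i - β i * s i * w i) := by
    have e : ∀ i, -(2 * V i * (dS * A i + (γ i * w i - β i * s i * w i)))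
        = (-(2*dS)) * (V i * A i) + (-2) * (V i * (γ i * w i - β i * s i * w i)) := by
      intro i; ring
    simp_rw [e]
    rw [Finset.sum_add_distrib, ← Finset.mul_sum, ← Finset.mul_sum]
    ring
  calc ∑ i, -(2 * V i * (dS * A i + (γ i * w i - β i * s i * w i)))
      = -(2 * dS * ∑ i, V i * A i) - 2 * ∑ i, V i * (γ i * w i - β i * s i * w i) := lhs_eq
    _ ≤ -(dS * (∑ i, ∑ j, B i j * (V i - V j)^2)) - 2 * ∑ i, β i * α i * w i * (V i)^2 := by
        have h1 : dS * (∑ i, ∑ j, B i j * (V i - V j)^2) ≤ dS * (2 * ∑ i, V i * A i) :=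
          mul_le_mul_of_nonneg_left hdiff hdS
        nlinarith [hreacsum]
    _ = -(dS * (∑ i, ∑ j, B i j * (V i - V j)^2) + 2 * ∑ i, β i * α i * w i * (V i)^2) := by ring

lemma G_min {n : ℕ} (hn : 2 ≤ n) (L : Matrix (Fin n) (Fin n) ℝ)
    (hquasi : ∀ i j, i ≠ j → 0 ≤ L i j)
    (hirr : ∀ A : Finset (Fin n), A.Nonempty → A ≠ Finset.univ →
      ∃ i ∉ A, ∃ j ∈ A, 0 < L i j)
    (α : Fin n → ℝ) (hαpos : ∀ i, 0 < α i) (hαsum : ∑ i, α i = 1)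
    (β : Fin n → ℝ) (hβ : ∀ i, 0 < β i)
    (dS : ℝ) (hdS : 0 < dS) (c N : ℝ) (hcN : c ≤ N) (ε : ℝ) (hε : 0 < ε) :
    ∃ η > 0, ∀ s w : Fin n → ℝ, (∀ i, 0 ≤ s i) → (∀ i, 0 ≤ w i) →
      (∑ i, (s i + w i)) = N → ε ≤ ∑ i, α i * (max (c - s i / α i) 0)^2 →
      η ≤ dS * (∑ i, ∑ j, L i j * α j *
            (max (c - s i / α i) 0 - max (c - s j / α j) 0)^2)
          + 2 * ∑ i, β i * α i * w i * (max (c - s i / α i) 0)^2 := by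
  haveI : Nonempty (Fin n) := ⟨⟨0, by omega⟩⟩
  set V : (Fin n → ℝ) → Fin n → ℝ := fun s i => max (c - s i / α i) 0 with hVdef
  set G : (Fin n → ℝ) × (Fin n → ℝ) → ℝ := fun p =>
    dS * (∑ i, ∑ j, L i j * α j * (V p.1 i - V p.1 j)^2)
      + 2 * ∑ i, β i * α i * p.2 i * (V p.1 i)^2 with hGdef
  set K : Set ((Fin n → ℝ) × (Fin n → ℝ)) := {p | (∀ i, 0 ≤ p.1 i) ∧ (∀ i, 0 ≤ p.2 i) ∧
    (∑ i, (p.1 i + p.2 i)) = N ∧ ε ≤ ∑ i, α i * (V p.1 i)^2} with hKdef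
  -- G is positive on K
  have hGpos : ∀ p ∈ K, 0 < G p := by
    rintro ⟨s, w⟩ ⟨hs, hw, hsum, hψ⟩
    have hQ1nn : ∀ i j, 0 ≤ L i j * α j * (V s i - V s j)^2 := by
      intro i j
      by_cases hij : i = j
      · subst hij; simp
      · exact mul_nonneg (mul_nonneg (hquasi i j hij) (hαpos j).le) (sq_nonneg _)
    have hQ2nn : ∀ i, 0 ≤ β i * α i * w i * (V s i)^2 := fun i =>
      mul_nonneg (mul_nonneg (mul_nonneg (hβ i).le (hαpos i).le) (hw i)) (sq_nonneg _)
    by_contra hG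
    push_neg at hG
    replace hG : dS * (∑ i, ∑ j, L i j * α j * (V s i - V s j)^2)
        + 2 * ∑ i, β i * α i * w i * (V s i)^2 ≤ 0 := hG
    have hQ1nn' : 0 ≤ ∑ i, ∑ j, L i j * α j * (V s i - V s j)^2 :=
      Finset.sum_nonneg fun i _ => Finset.sum_nonneg fun j _ => hQ1nn i j
    have hQ2nn' : 0 ≤ ∑ i, β i * α i * w i * (V s i)^2 :=
      Finset.sum_nonneg fun i _ => hQ2nn i
    have hQ1z : ∑ i, ∑ j, L i j * α j * (V s i - V s j)^2 = 0 := by nlinarith [hG, hdS]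
    have hQ2z : ∑ i, β i * α i * w i * (V s i)^2 = 0 := by nlinarith [hG, hdS, mul_nonneg hdS.le hQ1nn']
    -- each Q1 term vanishes
    have hterm : ∀ i j, L i j * α j * (V s i - V s j)^2 = 0 := by
      intro i j
      have h1 := (Finset.sum_eq_zero_iff_of_nonneg
        (fun i _ => Finset.sum_nonneg fun j _ => hQ1nn i j)).1 hQ1z i (Finset.mem_univ i)
      exact (Finset.sum_eq_zero_iff_of_nonneg (fun j _ => hQ1nn i j)).1 h1 j (Finset.mem_univ j)
    have hVeq : ∀ i j, i ≠ j → 0 < L i j → V s i = V s j := by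
      intro i j hij hL
      have := hterm i j
      have h2 : (V s i - V s j)^2 = 0 := by
        have hpos : 0 < L i j * α j := mul_pos hL (hαpos j)
        rcases mul_eq_zero.1 this with h | h
        · exact absurd h hpos.ne'
        · exact h
      have := pow_eq_zero_iff (n := 2) (by norm_num) |>.1 h2
      linarith
    -- V s is constant by irreducibility
    obtain ⟨k0⟩ := (inferInstance : Nonempty (Fin n))
    have hconst : ∀ k, V s k = V s k0 := by
      set A : Finset (Fin n) := Finset.univ.filter (fun k => V s k = V s k0) with hA
      have hk0 : k0 ∈ A := by simp [hA]
      have hAuniv : A = Finset.univ := by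
        by_contra hne
        obtain ⟨i, hiA, j, hjA, hL⟩ := hirr A ⟨k0, hk0⟩ hne
        have hij : i ≠ j := fun h => hiA (h ▸ hjA)
        have : V s i = V s j := hVeq i j hij hL
        have hj : V s j = V s k0 := by simpa [hA] using hjA
        exact hiA (by simp [hA, this, hj])
      intro k
      have : k ∈ A := hAuniv ▸ Finset.mem_univ k
      simpa [hA] using this
    set vb := V s k0 with hvb
    have hvbnn : 0 ≤ vb := le_max_right _ _
    have hψv : ∑ i, α i * (V s i)^2 = vb^2 := by
      have : ∀ i, α i * (V s i)^2 = α i * vb^2 := fun i => by rw [hconst i]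
      rw [Finset.sum_congr rfl fun i _ => this i, ← Finset.sum_mul, hαsum, one_mul]
    have hvbpos : 0 < vb := by
      rcases hvbnn.eq_or_lt with h | h
      · exfalso; rw [hψv] at hψ; rw [← h] at hψ; simp at hψ; linarith
      · exact h
    -- all s i = α i * (c - vb)
    have hseq : ∀ i, s i = α i * (c - vb) := by
      intro i
      have h1 : V s i = vb := hconst i
      have h2 : c - s i / α i = vb := by
        rcases max_cases (c - s i / α i) (0:ℝ) with ⟨ha, _⟩ | ⟨ha, hb⟩
        · rw [← h1, hVdef] at *; simpa using ha
        · exfalso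
          have : V s i = 0 := by rw [hVdef]; simpa using ha
          rw [this] at h1; linarith
      have := (hαpos i).ne'
      field_simp at h2 ⊢
      linarith
    have hssum : ∑ i, s i = c - vb := by
      rw [Finset.sum_congr rfl fun i _ => hseq i, ← Finset.sum_mul, hαsum, one_mul]
    have hwsum : ∑ i, w i = N - c + vb := by
      have h1 : ∑ i, (s i + w i) = ∑ i, s i + ∑ i, w i := Finset.sum_add_distrib
      rw [hsum] at h1
      rw [hssum] at h1
      linarith
    have hwex : ∃ i, 0 < w i := by
      by_contra h
      push_neg at h
      have : ∀ i, w i = 0 := fun i => le_antisymm (h i) (hw i)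
      rw [Finset.sum_congr rfl fun i _ => this i] at hwsum
      simp at hwsum
      linarith
    obtain ⟨i0, hi0⟩ := hwex
    have : 0 < β i0 * α i0 * w i0 * (V s i0)^2 := by
      rw [hconst i0]
      exact mul_pos (mul_pos (mul_pos (hβ i0) (hαpos i0)) hi0) (pow_pos hvbpos 2)
    have : 0 < ∑ i, β i * α i * w i * (V s i)^2 := by
      refine lt_of_lt_of_le this ?_
      exact Finset.single_le_sum (fun i _ => hQ2nn i) (Finset.mem_univ i0)
    linarith
  -- K is compact
  have hKsub : K ⊆ Set.Icc ((fun _ => 0, fun _ => 0) : (Fin n → ℝ) × (Fin n → ℝ))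
      ((fun _ => N, fun _ => N)) := by
    rintro ⟨s, w⟩ ⟨hs, hw, hsum, _⟩
    have hb : ∀ i, s i ≤ N ∧ w i ≤ N := by
      intro i
      have h1 : s i + w i ≤ ∑ k, (s k + w k) :=
        Finset.single_le_sum (fun k _ => add_nonneg (hs k) (hw k)) (Finset.mem_univ i)
      rw [hsum] at h1
      constructor <;> [linarith [hw i]; linarith [hs i]]
    constructor
    · exact ⟨fun i => hs i, fun i => hw i⟩
    · exact ⟨fun i => (hb i).1, fun i => (hb i).2⟩
  have hKclosed : IsClosed K := by
    have h1 : IsClosed {p : (Fin n → ℝ) × (Fin n → ℝ) | ∀ i, 0 ≤ p.1 i} := by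
      rw [Set.setOf_forall]
      exact isClosed_iInter fun i =>
        isClosed_le continuous_const ((continuous_apply i).comp continuous_fst)
    have h2 : IsClosed {p : (Fin n → ℝ) × (Fin n → ℝ) | ∀ i, 0 ≤ p.2 i} := by
      rw [Set.setOf_forall]
      exact isClosed_iInter fun i =>
        isClosed_le continuous_const ((continuous_apply i).comp continuous_snd)
    have h3 : IsClosed {p : (Fin n → ℝ) × (Fin n → ℝ) | ∑ i, (p.1 i + p.2 i) = N} := by
      refine isClosed_eq ?_ continuous_const
      fun_prop
    have h4 : IsClosed {p : (Fin n → ℝ) × (Fin n → ℝ) | ε ≤ ∑ i, α i * (V p.1 i)^2} := by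
      refine isClosed_le continuous_const ?_
      simp only [hVdef]
      fun_prop
    have he : K = {p : (Fin n → ℝ) × (Fin n → ℝ) | ∀ i, 0 ≤ p.1 i} ∩
        ({p | ∀ i, 0 ≤ p.2 i} ∩ ({p | ∑ i, (p.1 i + p.2 i) = N}
          ∩ {p | ε ≤ ∑ i, α i * (V p.1 i)^2})) := by
      ext p
      simp only [hKdef, Set.mem_setOf_eq, Set.mem_inter_iff]
    rw [he]
    exact h1.inter (h2.inter (h3.inter h4))
  have hKcompact : IsCompact K :=
    isCompact_Icc.of_isClosed_subset hKclosed hKsub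
  have hGcont : Continuous G := by
    simp only [hGdef, hVdef]
    fun_prop
  rcases K.eq_empty_or_nonempty with hKe | hKne
  · refine ⟨1, one_pos, fun s w hs hw hsum hψ => ?_⟩
    have hmem : ((s, w) : (Fin n → ℝ) × (Fin n → ℝ)) ∈ K := by
      simp only [hKdef, Set.mem_setOf_eq, hVdef]
      exact ⟨hs, hw, hsum, hψ⟩
    rw [hKe] at hmem
    exact absurd hmem (Set.notMem_empty _)
  · obtain ⟨p0, hp0K, hp0min⟩ := hKcompact.exists_isMinOn hKne hGcont.continuousOn
    refine ⟨G p0, hGpos p0 hp0K, fun s w hs hw hsum hψ => ?_⟩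
    have hmem : ((s, w) : (Fin n → ℝ) × (Fin n → ℝ)) ∈ K := by
      simp only [hKdef, Set.mem_setOf_eq, hVdef]
      exact ⟨hs, hw, hsum, hψ⟩
    simpa only [hGdef, hVdef, Set.mem_setOf_eq] using hp0min hmem

/-- Equation (3.4): mass-action model with `d_S > 0`, `d_I = 0`: the total infected
population satisfies `limsup_{t→∞} ∑_i I_i(t) ≤ N (1 − r̃_m)_+`. -/
theorem mass_action_dI_zero_limsup_bound
    {n : ℕ} (hn : 2 ≤ n)
    (L : Matrix (Fin n) (Fin n) ℝ)
    (hquasi : ∀ i j, i ≠ j → 0 ≤ L i j)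
    (hirr : ∀ A : Finset (Fin n), A.Nonempty → A ≠ Finset.univ →
      ∃ i ∉ A, ∃ j ∈ A, 0 < L i j)
    (hdiag : ∀ i, L i i = -∑ j ∈ Finset.univ.erase i, L j i)
    (α : Fin n → ℝ) (hα : L.mulVec α = 0) (hαpos : ∀ i, 0 < α i)
    (hαsum : ∑ i, α i = 1)
    (β γ : Fin n → ℝ) (hβ : ∀ i, 0 < β i) (hγ : ∀ i, 0 < γ i)
    (dS dI : ℝ) (hdS : 0 < dS) (hdI : dI = 0)
    (N : ℝ) (hN : 0 < N)
    (S I : ℝ → Fin n → ℝ)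
    (hScont : ∀ i, ContinuousOn (fun t => S t i) (Set.Ici 0))
    (hIcont : ∀ i, ContinuousOn (fun t => I t i) (Set.Ici 0))
    (hSode : ∀ i, ∀ t : ℝ, 0 < t → HasDerivAt (fun s => S s i)
      (dS * ∑ j, L i j * S t j - β i * S t i * I t i + γ i * I t i) t)
    (hIode : ∀ i, ∀ t : ℝ, 0 < t → HasDerivAt (fun s => I s i)
      (dI * ∑ j, L i j * I t j + β i * S t i * I t i - γ i * I t i) t)
    (hSnn : ∀ t ≥ (0:ℝ), ∀ i, 0 ≤ S t i)
    (hInn : ∀ t ≥ (0:ℝ), ∀ i, 0 ≤ I t i)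
    (hI0ne : I 0 ≠ 0)
    (htot : ∑ i, (S 0 i + I 0 i) = N)
    (rm : ℝ)
    (hrm : IsLeast {x : ℝ | ∃ i, 0 < I 0 i ∧ x = γ i / β i / (N * α i)} rm) :
    Filter.limsup (fun t => ∑ i, I t i) atTop ≤ N * max (1 - rm) 0 := by
  haveI : Nonempty (Fin n) := ⟨⟨0, by omega⟩⟩
  classical
  set c : ℝ := min (N * rm) N with hc
  have hcN : c ≤ N := min_le_right _ _
  -- column sums of L vanish
  have hcol : ∀ j, ∑ i, L i j = 0 := by
    intro j
    rw [← Finset.add_sum_erase Finset.univ (fun i => L i j) (Finset.mem_univ j), hdiag j]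
    ring
  -- row sums of L * α vanish
  have hrow : ∀ i, ∑ j, L i j * α j = 0 := by
    intro i
    have := congrFun hα i
    simpa [Matrix.mulVec, dotProduct] using this
  -- the support of I 0
  set P : Finset (Fin n) := Finset.univ.filter (fun j => 0 < I 0 j) with hP
  have hI0z : ∀ j ∉ P, I 0 j = 0 := by
    intro j hj
    simp only [hP, Finset.mem_filter, Finset.mem_univ, true_and, not_lt] at hj
    exact le_antisymm hj (hInn 0 le_rfl j)
  -- c * α i ≤ γ i / β i on the support
  have hcr : ∀ i ∈ P, c * α i ≤ γ i / β i := by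
    intro i hi
    simp only [hP, Finset.mem_filter, Finset.mem_univ, true_and] at hi
    have h1 : rm ≤ γ i / β i / (N * α i) := hrm.2 ⟨i, hi, rfl⟩
    have hαi := hαpos i
    have hNα : (0:ℝ) < N * α i := by positivity
    have h2 := mul_le_mul_of_nonneg_left h1 hNα.le
    rw [mul_div_cancel₀ _ hNα.ne'] at h2
    have h3 : c * α i ≤ N * rm * α i := by
      have h4 := min_le_left (N * rm) N
      nlinarith
    nlinarith [h2, h3]
  -- I vanishes identically off the support
  have hIvan : ∀ j ∉ P, ∀ t ≥ (0:ℝ), I t j = 0 := by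
    intro j hj
    refine vanish_of_linear (a := fun t => β j * S t j - γ j) (hIcont j)
      ((continuousOn_const.mul (hScont j)).sub continuousOn_const) ?_ (hI0z j hj)
    intro t ht
    have := hIode j t ht
    have he : dI * ∑ k, L j k * I t k + β j * S t j * I t j - γ j * I t j
        = (β j * S t j - γ j) * I t j := by rw [hdI]; ring
    rwa [he] at this
  -- conservation of total mass
  have hcons : ∀ t ≥ (0:ℝ), ∑ i, (S t i + I t i) = N := by
    have hder : ∀ t > (0:ℝ), HasDerivAt (fun τ => ∑ i, (S τ i + I τ i)) 0 t := by
      intro t ht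
      have h1 : HasDerivAt (fun τ => ∑ i, (S τ i + I τ i))
          (∑ i, ((dS * ∑ j, L i j * S t j - β i * S t i * I t i + γ i * I t i)
            + (dI * ∑ j, L i j * I t j + β i * S t i * I t i - γ i * I t i))) t :=
        HasDerivAt.fun_sum fun i _ => (hSode i t ht).add (hIode i t ht)
      have h2 : (∑ i, ((dS * ∑ j, L i j * S t j - β i * S t i * I t i + γ i * I t i)
            + (dI * ∑ j, L i j * I t j + β i * S t i * I t i - γ i * I t i))) = 0 := by
        have e : ∀ i, ((dS * ∑ j, L i j * S t j - β i * S t i * I t i + γ i * I t i)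
            + (dI * ∑ j, L i j * I t j + β i * S t i * I t i - γ i * I t i))
            = dS * ∑ j, L i j * S t j := by intro i; rw [hdI]; ring
        rw [Finset.sum_congr rfl fun i _ => e i]
        rw [← Finset.mul_sum, Finset.sum_comm]
        have e2 : ∀ j, ∑ i, L i j * S t j = 0 := by
          intro j
          rw [← Finset.sum_mul, hcol, zero_mul]
        rw [Finset.sum_congr rfl fun j _ => e2 j]
        simp
      rwa [h2] at h1
    intro t ht
    have hcont : ContinuousOn (fun τ => ∑ i, (S τ i + I τ i)) (Set.Ici 0) := by
      refine continuousOn_finset_sum _ fun i _ => (hScont i).add (hIcont i)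
    have := const_of_deriv_zero hcont hder t ht
    rw [this, htot]
  -- the Lyapunov function ψ
  set ψ : ℝ → ℝ := fun t => ∑ i, α i * (max (c - S t i / α i) 0)^2 with hψdef
  have hψnn : ∀ t, 0 ≤ ψ t :=
    fun t => Finset.sum_nonneg fun i _ => mul_nonneg (hαpos i).le (sq_nonneg _)
  have hψcont : ContinuousOn ψ (Set.Ici 0) := by
    refine continuousOn_finset_sum _ fun i _ => continuousOn_const.mul ?_
    exact ((continuousOn_const.sub ((hScont i).div_const (α i))).sup continuousOn_const).pow 2
  -- derivative of ψ
  have hψder : ∀ t > (0:ℝ), HasDerivAt ψ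
      (∑ i, -(2 * max (c - S t i / α i) 0 * (dS * ∑ j, L i j * S t j
        + (γ i * I t i - β i * S t i * I t i)))) t := by
    intro t ht
    have h1 : HasDerivAt ψ (∑ i, α i * (2 * max (c - S t i / α i) 0 *
        (-((dS * ∑ j, L i j * S t j - β i * S t i * I t i + γ i * I t i) / α i)))) t := by
      refine HasDerivAt.fun_sum fun i _ => ?_
      have hin : HasDerivAt (fun τ => c - S τ i / α i)
          (-((dS * ∑ j, L i j * S t j - β i * S t i * I t i + γ i * I t i) / α i)) t := by
        have := (hasDerivAt_const t c).fun_sub ((hSode i t ht).div_const (α i))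
        simpa using this
      have h0 := ((hasDerivAt_maxsq (c - S t i / α i)).comp t hin).const_mul (α i)
      exact h0
    convert h1 using 1
    refine Finset.sum_congr rfl fun i _ => ?_
    have hαi := (hαpos i).ne'
    field_simp
    ring
  -- ψ' is bounded by the dissipation
  have hψder_le : ∀ t > (0:ℝ),
      (∑ i, -(2 * max (c - S t i / α i) 0 * (dS * ∑ j, L i j * S t j
        + (γ i * I t i - β i * S t i * I t i))))
      ≤ -(dS * (∑ i, ∑ j, L i j * α j *
            (max (c - S t i / α i) 0 - max (c - S t j / α j) 0)^2)
          + 2 * ∑ i, β i * α i * I t i * (max (c - S t i / α i) 0)^2) := by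
    intro t ht
    exact alg_ineq L hquasi α hαpos hrow hcol β γ hβ dS c hdS.le P (S t) (I t)
      (hSnn t ht.le) (hInn t ht.le) (fun j hj => hIvan j hj t ht.le) hcr
  have hQnn : ∀ t ≥ (0:ℝ), 0 ≤ dS * (∑ i, ∑ j, L i j * α j *
        (max (c - S t i / α i) 0 - max (c - S t j / α j) 0)^2)
      + 2 * ∑ i, β i * α i * I t i * (max (c - S t i / α i) 0)^2 := by
    intro t ht
    have h1 : 0 ≤ ∑ i, ∑ j, L i j * α j *
        (max (c - S t i / α i) 0 - max (c - S t j / α j) 0)^2 := by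
      refine Finset.sum_nonneg fun i _ => Finset.sum_nonneg fun j _ => ?_
      by_cases hij : i = j
      · subst hij; simp
      · exact mul_nonneg (mul_nonneg (hquasi i j hij) (hαpos j).le) (sq_nonneg _)
    have h2 : 0 ≤ ∑ i, β i * α i * I t i * (max (c - S t i / α i) 0)^2 :=
      Finset.sum_nonneg fun i _ => mul_nonneg (mul_nonneg (mul_nonneg (hβ i).le
        (hαpos i).le) (hInn t ht i)) (sq_nonneg _)
    positivity
  -- ψ is antitone on [0, ∞)
  have hψanti : AntitoneOn ψ (Set.Ici 0) := by
    refine antitoneOn_of_deriv_nonpos (convex_Ici 0) hψcont ?_ ?_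
    · intro t ht
      rw [interior_Ici] at ht
      exact (hψder t ht).differentiableAt.differentiableWithinAt
    · intro t ht
      rw [interior_Ici] at ht
      rw [(hψder t ht).deriv]
      exact le_trans (hψder_le t ht) (by linarith [hQnn t ht.le])
  -- ψ gets below any positive level
  have hψsmall : ∀ ε > (0:ℝ), ∃ t0 ≥ (0:ℝ), ψ t0 ≤ ε := by
    intro ε hε
    by_contra hcon
    push_neg at hcon
    obtain ⟨η, hη, hmin⟩ := G_min hn L hquasi hirr α hαpos hαsum β hβ dS hdS c N hcN ε hε
    -- ψ decreases at rate at least η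
    have hder2 : ∀ t > (0:ℝ), deriv (fun τ => ψ τ + η * τ) t ≤ 0 := by
      intro t ht
      have hd : HasDerivAt (fun τ => ψ τ + η * τ)
          ((∑ i, -(2 * max (c - S t i / α i) 0 * (dS * ∑ j, L i j * S t j
            + (γ i * I t i - β i * S t i * I t i)))) + η) t := by
        refine (hψder t ht).add ?_
        simpa using (hasDerivAt_id t).const_mul η
      rw [hd.deriv]
      have hsum : ∑ i, (S t i + I t i) = N := hcons t ht.le
      have hψget : ε ≤ ∑ i, α i * (max (c - S t i / α i) 0)^2 := (hcon t ht.le).le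
      have := hmin (S t) (I t) (hSnn t ht.le) (hInn t ht.le) hsum hψget
      have h2 := hψder_le t ht
      linarith
    have hanti2 : AntitoneOn (fun τ => ψ τ + η * τ) (Set.Ici 0) := by
      refine antitoneOn_of_deriv_nonpos (convex_Ici 0)
        (hψcont.add (Continuous.continuousOn (by fun_prop))) ?_ ?_
      · intro t ht
        rw [interior_Ici] at ht
        exact ((hψder t ht).add (by simpa using (hasDerivAt_id t).const_mul η)
          ).differentiableAt.differentiableWithinAt
      · intro t ht
        rw [interior_Ici] at ht
        exact hder2 t ht
    -- ψ becomes negative: contradiction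
    set T : ℝ := (ψ 1 + η) / η + 1 with hT
    have hT1 : 1 ≤ T := by
      have h0 := hψnn 1
      have h1 : 0 ≤ (ψ 1 + η) / η := div_nonneg (by linarith) hη.le
      rw [hT]
      linarith
    have h1 := hanti2 (Set.mem_Ici.2 (by norm_num : (0:ℝ) ≤ 1))
      (Set.mem_Ici.2 (by linarith : (0:ℝ) ≤ T)) hT1
    simp only at h1
    -- h1 : ψ T + η * T ≤ ψ 1 + η * 1
    have hTval : η * T = ψ 1 + η + η := by
      have e : η * ((ψ 1 + η) / η) = ψ 1 + η := by field_simp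
      calc η * T = η * ((ψ 1 + η) / η) + η := by rw [hT]; ring
        _ = ψ 1 + η + η := by rw [e]
    have := hψnn T
    nlinarith [h1, hTval]
  -- conclusion: eventual upper bound on the infected mass
  have hub : ∀ ε' > (0:ℝ), ∀ᶠ t in atTop, ∑ i, I t i ≤ N - c + ε' := by
    intro ε' hε'
    obtain ⟨i0, -, hi0⟩ := Finset.exists_min_image Finset.univ α Finset.univ_nonempty
    have hεψ : 0 < α i0 * ε' ^ 2 := mul_pos (hαpos i0) (pow_pos hε' 2)
    obtain ⟨t0, ht0, hψt0⟩ := hψsmall (α i0 * ε' ^ 2) hεψ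
    filter_upwards [eventually_ge_atTop t0] with t htt0
    have ht : (0:ℝ) ≤ t := le_trans ht0 htt0
    have hψt : ψ t ≤ α i0 * ε' ^ 2 :=
      le_trans (hψanti (Set.mem_Ici.2 ht0) (Set.mem_Ici.2 ht) htt0) hψt0
    have hSlb : ∀ i, α i * (c - ε') ≤ S t i := by
      intro i
      have h1 : α i * (max (c - S t i / α i) 0)^2 ≤ ψ t := by
        refine Finset.single_le_sum (f := fun i => α i * (max (c - S t i / α i) 0)^2)
          (fun k _ => mul_nonneg (hαpos k).le (sq_nonneg _)) (Finset.mem_univ i)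
      have h2 : α i * (max (c - S t i / α i) 0)^2 ≤ α i * ε' ^ 2 := by
        have := hi0 i (Finset.mem_univ i)
        nlinarith [h1, hψt]
      have h3 : (max (c - S t i / α i) 0)^2 ≤ ε' ^ 2 :=
        le_of_mul_le_mul_left (by linarith [h2]) (hαpos i)
      have h4 : max (c - S t i / α i) 0 ≤ ε' := by
        nlinarith [le_max_right (c - S t i / α i) (0:ℝ), h3, hε']
      have h5 : c - S t i / α i ≤ ε' := le_trans (le_max_left _ _) h4
      have hαi := hαpos i
      have h6 : c - ε' ≤ S t i / α i := by linarith
      rw [le_div_iff₀ hαi] at h6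
      linarith [h6]
    have hsum : ∑ i, (S t i + I t i) = N := hcons t ht
    have hSsum : c - ε' ≤ ∑ i, S t i := by
      have h1 : ∑ i, α i * (c - ε') ≤ ∑ i, S t i :=
        Finset.sum_le_sum fun i _ => hSlb i
      rwa [← Finset.sum_mul, hαsum, one_mul] at h1
    have h2 : ∑ i, S t i + ∑ i, I t i = N := by
      rw [← Finset.sum_add_distrib]; exact hsum
    linarith
  have hcb : Filter.IsCoboundedUnder (· ≤ ·) atTop (fun t => ∑ i, I t i) := by
    refine Filter.isCoboundedUnder_le_of_eventually_le atTop (x := 0) ?_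
    filter_upwards [eventually_ge_atTop (0:ℝ)] with t ht
    exact Finset.sum_nonneg fun i _ => hInn t ht i
  have hlim : Filter.limsup (fun t => ∑ i, I t i) atTop ≤ N - c := by
    refine le_of_forall_pos_le_add fun ε' hε' => ?_
    have h1 := Filter.limsup_le_of_le hcb (hub ε' hε')
    linarith
  have hfin : N - c = N * max (1 - rm) 0 := by
    rcases le_total (N * rm) N with h | h
    · rw [hc, min_eq_left h]
      have h1 : (0:ℝ) ≤ 1 - rm := by nlinarith
      rw [max_eq_left h1]
      ring
    · rw [hc, min_eq_right h]
      have h1 : 1 - rm ≤ (0:ℝ) := by nlinarith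
      rw [max_eq_right h1]
      ring
  linarith [hlim]
end

section
/- Suppose (A1)-(A3) hold with d_S ≥ 0 and d_I = 0, and let (S(t), I(t)) be a solution of the mass-action SIS network model. Define V(t) = ∑_{i∈Ω} θ_i (S_i(t)²/2 + r_i I_i(t)), where θ_i = 1/α_i. Then for every t > 0, V'(t) = d_S ∑_{i,j∈Ω} θ_i L_{ij} S_i(t) S_j(t) − ∑_{i∈Ω} θ_i β_i (S_i(t) − r_i)² I_i(t), and consequently V'(t) ≤ 0 for all t > 0. -/
open Filter Topology

lemma quad_nonpos {n : ℕ} (B : Fin n → Fin n → ℝ)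
    (hoff : ∀ i j, i ≠ j → 0 ≤ B i j)
    (hrow : ∀ i, ∑ j, B i j = 0)
    (hcol : ∀ j, ∑ i, B i j = 0)
    (x : Fin n → ℝ) :
    ∑ i, ∑ j, B i j * x i * x j ≤ 0 := by
  have key : ∑ i, ∑ j, B i j * x i * x j
      = ∑ i, ∑ j, (B i j * x i ^ 2 / 2 + B i j * x j ^ 2 / 2 - B i j * (x i - x j) ^ 2 / 2) := by
    refine Finset.sum_congr rfl fun i _ => Finset.sum_congr rfl fun j _ => ?_
    ring
  rw [key]
  simp only [Finset.sum_sub_distrib, Finset.sum_add_distrib]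
  have h1 : ∑ i, ∑ j, B i j * x i ^ 2 / 2 = 0 := by
    simp only [← Finset.sum_div, ← Finset.sum_mul, hrow]
    simp
  have h2 : ∑ i : Fin n, ∑ j, B i j * x j ^ 2 / 2 = 0 := by
    rw [Finset.sum_comm]
    simp only [← Finset.sum_div, ← Finset.sum_mul, hcol]
    simp
  have h3 : 0 ≤ ∑ i, ∑ j, B i j * (x i - x j) ^ 2 / 2 := by
    refine Finset.sum_nonneg fun i _ => Finset.sum_nonneg fun j _ => ?_
    rcases eq_or_ne i j with rfl | h
    · simp
    · have := mul_nonneg (hoff i j h) (sq_nonneg (x i - x j))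
      linarith
  linarith

/-- The Lyapunov function `V = ∑_i θ_i (S_i²/2 + r_i I_i)` for the mass-action model with
`d_I = 0` satisfies `V' = d_S ∑_{i,j} θ_i L_{ij} S_i S_j − ∑_i θ_i β_i (S_i − r_i)² I_i ≤ 0`. -/
theorem mass_action_lyapunov_derivative
    {n : ℕ} (hn : 2 ≤ n)
    (L : Matrix (Fin n) (Fin n) ℝ)
    (hquasi : ∀ i j, i ≠ j → 0 ≤ L i j)
    (hirr : ∀ A : Finset (Fin n), A.Nonempty → A ≠ Finset.univ →
      ∃ i ∉ A, ∃ j ∈ A, 0 < L i j)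
    (hdiag : ∀ i, L i i = -∑ j ∈ Finset.univ.erase i, L j i)
    (α : Fin n → ℝ) (hα : L.mulVec α = 0) (hαpos : ∀ i, 0 < α i)
    (hαsum : ∑ i, α i = 1)
    (β γ : Fin n → ℝ) (hβ : ∀ i, 0 < β i) (hγ : ∀ i, 0 < γ i)
    (dS dI : ℝ) (hdS : 0 ≤ dS) (hdI : dI = 0)
    (N : ℝ) (hN : 0 < N)
    (S I : ℝ → Fin n → ℝ)
    (hScont : ∀ i, ContinuousOn (fun t => S t i) (Set.Ici 0))
    (hIcont : ∀ i, ContinuousOn (fun t => I t i) (Set.Ici 0))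
    (hSode : ∀ i, ∀ t : ℝ, 0 < t → HasDerivAt (fun s => S s i)
      (dS * ∑ j, L i j * S t j - β i * S t i * I t i + γ i * I t i) t)
    (hIode : ∀ i, ∀ t : ℝ, 0 < t → HasDerivAt (fun s => I s i)
      (dI * ∑ j, L i j * I t j + β i * S t i * I t i - γ i * I t i) t)
    (hSnn : ∀ t ≥ (0:ℝ), ∀ i, 0 ≤ S t i)
    (hInn : ∀ t ≥ (0:ℝ), ∀ i, 0 ≤ I t i)
    (hI0ne : I 0 ≠ 0)
    (htot : ∑ i, (S 0 i + I 0 i) = N) :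
    ∀ t : ℝ, 0 < t →
      HasDerivAt (fun s => ∑ i, (1 / α i) * ((S s i) ^ 2 / 2 + (γ i / β i) * I s i))
        (dS * ∑ i, ∑ j, (1 / α i) * L i j * S t i * S t j -
          ∑ i, (1 / α i) * β i * (S t i - γ i / β i) ^ 2 * I t i) t ∧
      dS * ∑ i, ∑ j, (1 / α i) * L i j * S t i * S t j -
        ∑ i, (1 / α i) * β i * (S t i - γ i / β i) ^ 2 * I t i ≤ 0 := by
  intro t ht
  constructor
  · -- derivative computation
    have hderiv : HasDerivAt
        (fun s => ∑ i, (1 / α i) * ((S s i) ^ 2 / 2 + (γ i / β i) * I s i))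
        (∑ i, (1 / α i) *
          (S t i * (dS * ∑ j, L i j * S t j - β i * S t i * I t i + γ i * I t i)
            + (γ i / β i) *
              (dI * ∑ j, L i j * I t j + β i * S t i * I t i - γ i * I t i))) t := by
      refine HasDerivAt.fun_sum fun i _ => ?_
      have h1 := hSode i t ht
      have h2 := hIode i t ht
      have h := (((h1.pow 2).div_const 2).add (h2.const_mul (γ i / β i))).const_mul (1 / α i)
      convert h using 1
      · rfl
      · rfl
      push_cast
      ring
    have hval : (∑ i, (1 / α i) *
          (S t i * (dS * ∑ j, L i j * S t j - β i * S t i * I t i + γ i * I t i)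
            + (γ i / β i) *
              (dI * ∑ j, L i j * I t j + β i * S t i * I t i - γ i * I t i)))
        = dS * ∑ i, ∑ j, (1 / α i) * L i j * S t i * S t j -
          ∑ i, (1 / α i) * β i * (S t i - γ i / β i) ^ 2 * I t i := by
      rw [Finset.mul_sum, ← Finset.sum_sub_distrib]
      refine Finset.sum_congr rfl fun i _ => ?_
      have hsum : ∑ j, (1 / α i) * L i j * S t i * S t j
          = (1 / α i) * S t i * ∑ j, L i j * S t j := by
        rw [Finset.mul_sum]
        exact Finset.sum_congr rfl fun j _ => by ring
      rw [hsum, hdI]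
      have hb : β i ≠ 0 := (hβ i).ne'
      have ha : α i ≠ 0 := (hαpos i).ne'
      field_simp
      ring
    rw [hval] at hderiv
    exact hderiv
  · -- nonpositivity
    have hquad : ∑ i, ∑ j, (1 / α i) * L i j * S t i * S t j ≤ 0 := by
      have hrow : ∀ i, ∑ j, L i j * α j = 0 := by
        intro i
        have := congrFun hα i
        simpa [Matrix.mulVec, dotProduct] using this
      have hcolL : ∀ j, ∑ i, L i j = 0 := by
        intro j
        have h : L j j + ∑ x ∈ Finset.univ.erase j, L x j = ∑ x, L x j :=
          Finset.add_sum_erase _ (fun x => L x j) (Finset.mem_univ j)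
        rw [← h, hdiag j]
        ring
      have hkey := quad_nonpos (fun i j => L i j * α j)
        (fun i j hij => mul_nonneg (hquasi i j hij) (hαpos j).le)
        hrow
        (fun j => by rw [← Finset.sum_mul, hcolL j, zero_mul])
        (fun i => S t i / α i)
      have heq : ∑ i, ∑ j, (1 / α i) * L i j * S t i * S t j
          = ∑ i, ∑ j, (fun i j => L i j * α j) i j * (S t i / α i) * (S t j / α j) := by
        refine Finset.sum_congr rfl fun i _ => Finset.sum_congr rfl fun j _ => ?_
        have hai : α i ≠ 0 := (hαpos i).ne'
        have haj : α j ≠ 0 := (hαpos j).ne'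
        field_simp
      rw [heq]
      exact hkey
    have hP : 0 ≤ ∑ i, (1 / α i) * β i * (S t i - γ i / β i) ^ 2 * I t i := by
      refine Finset.sum_nonneg fun i _ => ?_
      have h1 : 0 ≤ (1 / α i) * β i := by
        have := hαpos i; have := hβ i; positivity
      have h2 := hInn t ht.le i
      have := mul_nonneg (mul_nonneg h1 (sq_nonneg (S t i - γ i / β i))) h2
      linarith
    have := mul_nonpos_of_nonneg_of_nonpos hdS hquad
    linarith
end

section
/- Suppose (A1)-(A3) hold with d_I = 0 and d_S > 0, and let (S(t), I(t)) be a solution of the standard-incidence SIS network model. Then there exist a constant S̲ > 0 and a time T ≥ 0 such that S_i(t) ≥ S̲ for all i ∈ Ω and all t ≥ T; in particular, liminf_{t→∞} min_{i∈Ω} S_i(t) > 0. -/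
open Filter Topology

lemma gron_lower {f g : ℝ → ℝ} {a K s u : ℝ} (hK : 0 < K)
    (hf : ∀ t ∈ Set.Icc s u, HasDerivAt f (g t) t)
    (hg : ∀ t ∈ Set.Icc s u, a - K * f t ≤ g t) :
    ∀ t ∈ Set.Icc s u, a/K + Real.exp (-(K*(t-s))) * (f s - a/K) ≤ f t := by
  intro t ht
  have hs : s ∈ Set.Icc s u := ⟨le_refl _, le_trans ht.1 ht.2⟩
  set h : ℝ → ℝ := fun x => Real.exp (K*x) * (f x - a/K) with hh
  have hd : ∀ x ∈ Set.Icc s u, HasDerivAt h (Real.exp (K*x) * (g x + K * f x - a)) x := by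
    intro x hx
    have h1 : HasDerivAt (fun y : ℝ => Real.exp (K*y)) (Real.exp (K*x) * K) x := by
      have := ((hasDerivAt_id x).const_mul K).exp
      simpa using this
    have h2 := (hf x hx).sub_const (a/K)
    have := h1.fun_mul h2
    have heq : Real.exp (K*x) * K * (f x - a/K) + Real.exp (K*x) * g x
        = Real.exp (K*x) * (g x + K * f x - a) := by
      field_simp
      ring
    simpa [heq] using this
  have hmono : MonotoneOn h (Set.Icc s u) := by
    apply monotoneOn_of_deriv_nonneg (convex_Icc s u)
    · exact fun x hx => ((hd x hx).continuousAt).continuousWithinAt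
    · intro x hx
      exact ((hd x (interior_subset hx)).differentiableAt).differentiableWithinAt
    · intro x hx
      have hx' := interior_subset hx
      rw [(hd x hx').deriv]
      have h1 := hg x hx'
      have h2 := Real.exp_pos (K*x)
      nlinarith
  have hle : h s ≤ h t := hmono hs ht ht.1
  have h3 : Real.exp (-(K*t)) * (Real.exp (K*s) * (f s - a/K))
      ≤ Real.exp (-(K*t)) * (Real.exp (K*t) * (f t - a/K)) :=
    mul_le_mul_of_nonneg_left hle (Real.exp_pos _).le
  rw [← mul_assoc, ← mul_assoc, ← Real.exp_add, ← Real.exp_add] at h3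
  have e1 : -(K*t) + K*s = -(K*(t-s)) := by ring
  have e2 : -(K*t) + K*t = 0 := by ring
  rw [e1, e2, Real.exp_zero, one_mul] at h3
  linarith

/-- Persistence of the susceptible population (inequality (4.5)): for the
standard-incidence model with `d_I = 0`, `d_S > 0`, the susceptible populations are
eventually uniformly bounded below by a positive constant. -/
theorem standard_incidence_susceptible_lower_bound
    {n : ℕ} (hn : 2 ≤ n)
    (L : Matrix (Fin n) (Fin n) ℝ)
    (hquasi : ∀ i j, i ≠ j → 0 ≤ L i j)
    (hirr : ∀ A : Finset (Fin n), A.Nonempty → A ≠ Finset.univ →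
      ∃ i ∉ A, ∃ j ∈ A, 0 < L i j)
    (hdiag : ∀ i, L i i = -∑ j ∈ Finset.univ.erase i, L j i)
    (β γ : Fin n → ℝ) (hβ : ∀ i, 0 < β i) (hγ : ∀ i, 0 < γ i)
    (dS dI : ℝ) (hdS : 0 < dS) (hdI : dI = 0)
    (N : ℝ) (hN : 0 < N)
    (S I : ℝ → Fin n → ℝ)
    (hScont : ∀ i, ContinuousOn (fun t => S t i) (Set.Ici 0))
    (hIcont : ∀ i, ContinuousOn (fun t => I t i) (Set.Ici 0))
    (hSode : ∀ i, ∀ t : ℝ, 0 < t → HasDerivAt (fun s => S s i)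
      (dS * ∑ j, L i j * S t j - β i * S t i * I t i / (S t i + I t i) + γ i * I t i) t)
    (hIode : ∀ i, ∀ t : ℝ, 0 < t → HasDerivAt (fun s => I s i)
      (dI * ∑ j, L i j * I t j + β i * S t i * I t i / (S t i + I t i) - γ i * I t i) t)
    (hSnn : ∀ t ≥ (0:ℝ), ∀ i, 0 ≤ S t i)
    (hInn : ∀ t ≥ (0:ℝ), ∀ i, 0 ≤ I t i)
    (hI0ne : I 0 ≠ 0)
    (htot : ∑ i, (S 0 i + I 0 i) = N) :
    (∃ Slb : ℝ, 0 < Slb ∧ ∃ T : ℝ, 0 ≤ T ∧ ∀ t ≥ T, ∀ i, Slb ≤ S t i) ∧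
    0 < Filter.liminf (fun t => ⨅ i, S t i) atTop := by
  have hn0 : 0 < n := by omega
  set i0 : Fin n := ⟨0, hn0⟩ with hi0
  set i1 : Fin n := ⟨1, by omega⟩ with hi1
  have hne : (Finset.univ : Finset (Fin n)).Nonempty := ⟨i0, Finset.mem_univ _⟩
  -- incidence term bounds
  have hq : ∀ t ≥ (0:ℝ), ∀ i, 0 ≤ S t i * I t i / (S t i + I t i) ∧
      S t i * I t i / (S t i + I t i) ≤ S t i := by
    intro t ht i
    have hS := hSnn t ht i
    have hI := hInn t ht i
    constructor
    · exact div_nonneg (mul_nonneg hS hI) (by linarith)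
    · rcases eq_or_lt_of_le (by linarith : (0:ℝ) ≤ S t i + I t i) with h|h
      · rw [← h, div_zero]; exact hS
      · rw [div_le_iff₀ h]; nlinarith
  -- column sums vanish
  have colsum : ∀ j, ∑ i, L i j = 0 := by
    intro j
    have h2 : L j j + ∑ i ∈ Finset.univ.erase j, L i j = ∑ i, L i j :=
      Finset.add_sum_erase _ (fun i => L i j) (Finset.mem_univ j)
    rw [hdiag j] at h2
    linarith
  have hLd : ∀ i, L i i ≤ 0 := by
    intro i
    rw [hdiag i, neg_nonpos]
    exact Finset.sum_nonneg fun j hj => hquasi j i (Finset.ne_of_mem_erase hj)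
  -- constants
  obtain ⟨K, hKdef⟩ : ∃ x : ℝ, x = Finset.univ.sup' hne (fun i => β i - dS * L i i) :=
    ⟨_, rfl⟩
  have hKi : ∀ i, β i - dS * L i i ≤ K := fun i =>
    hKdef ▸ Finset.le_sup' (fun i => β i - dS * L i i) (Finset.mem_univ i)
  have hK : 0 < K := by
    have h1 : 0 < β i0 - dS * L i0 i0 := by nlinarith [hβ i0, hLd i0]
    exact lt_of_lt_of_le h1 (hKi i0)
  obtain ⟨βM, hβMdef⟩ : ∃ x : ℝ, x = Finset.univ.sup' hne β := ⟨_, rfl⟩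
  have hβM : ∀ i, β i ≤ βM := fun i => hβMdef ▸ Finset.le_sup' β (Finset.mem_univ i)
  have hβM0 : 0 < βM := lt_of_lt_of_le (hβ i0) (hβM i0)
  obtain ⟨γm, hγmdef⟩ : ∃ x : ℝ, x = Finset.univ.inf' hne γ := ⟨_, rfl⟩
  have hγm : ∀ i, γm ≤ γ i := fun i => hγmdef ▸ Finset.inf'_le γ (Finset.mem_univ i)
  have hγm0 : 0 < γm := hγmdef ▸ (Finset.lt_inf'_iff hne).mpr fun i _ => hγ i
  -- smallest positive connectivity
  set E : Finset (Fin n × Fin n) := Finset.univ.filter (fun p => 0 < L p.1 p.2) with hEdef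
  have hE : E.Nonempty := by
    have hne1 : ({i0} : Finset (Fin n)) ≠ Finset.univ := by
      intro h
      have : i1 ∈ ({i0} : Finset (Fin n)) := h ▸ Finset.mem_univ i1
      rw [Finset.mem_singleton] at this
      simp [hi0, hi1, Fin.ext_iff] at this
    obtain ⟨i, hi, j, hj, hL⟩ := hirr {i0} ⟨i0, Finset.mem_singleton_self i0⟩ hne1
    exact ⟨(i, j), Finset.mem_filter.mpr ⟨Finset.mem_univ _, hL⟩⟩
  obtain ⟨ℓ, hℓdef⟩ : ∃ x : ℝ, x = E.inf' hE (fun p => L p.1 p.2) := ⟨_, rfl⟩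
  have hℓ : 0 < ℓ := hℓdef ▸ (Finset.lt_inf'_iff hE).mpr
    fun p hp => ((Finset.mem_filter.mp hp).2 : 0 < L p.1 p.2)
  have hℓle : ∀ i j, 0 < L i j → ℓ ≤ L i j := by
    intro i j h
    have hm : (i, j) ∈ E := by
      rw [hEdef]
      exact Finset.mem_filter.mpr ⟨Finset.mem_univ _, h⟩
    rw [hℓdef]
    exact Finset.inf'_le _ hm
  -- conservation of total population
  have hcons : ∀ t ≥ (0:ℝ), ∑ i, (S t i + I t i) = N := by
    intro t ht
    rcases eq_or_lt_of_le ht with h|h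
    · rw [← h]; exact htot
    · have hFd : ∀ x ∈ interior (Set.Icc (0:ℝ) t),
          HasDerivAt (fun s => ∑ i, (S s i + I s i)) 0 x := by
        intro x hx
        rw [interior_Icc] at hx
        have hx0 : 0 < x := hx.1
        have hd := HasDerivAt.fun_sum
          (fun i (_ : i ∈ Finset.univ) => ((hSode i x hx0).fun_add (hIode i x hx0)))
        have hval : ∑ i, ((dS * ∑ j, L i j * S x j - β i * S x i * I x i / (S x i + I x i)
              + γ i * I x i) + (dI * ∑ j, L i j * I x j
              + β i * S x i * I x i / (S x i + I x i) - γ i * I x i)) = 0 := by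
          subst hdI
          have he : ∀ i ∈ Finset.univ, ((dS * ∑ j, L i j * S x j
              - β i * S x i * I x i / (S x i + I x i) + γ i * I x i)
              + ((0:ℝ) * ∑ j, L i j * I x j
              + β i * S x i * I x i / (S x i + I x i) - γ i * I x i))
              = dS * ∑ j, L i j * S x j := by intro i _; ring
          rw [Finset.sum_congr rfl he, ← Finset.mul_sum, Finset.sum_comm]
          have : ∀ j ∈ Finset.univ, ∑ i, L i j * S x j = 0 := by
            intro j _
            rw [← Finset.sum_mul, colsum j, zero_mul]
          rw [Finset.sum_congr rfl this, Finset.sum_const, smul_zero, mul_zero]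
        rw [hval] at hd
        exact hd
      have hcont : ContinuousOn (fun s => ∑ i, (S s i + I s i)) (Set.Icc 0 t) :=
        (continuousOn_finset_sum _ fun i _ => (hScont i).add (hIcont i)).mono
          Set.Icc_subset_Ici_self
      have hdiff : DifferentiableOn ℝ (fun s => ∑ i, (S s i + I s i))
          (interior (Set.Icc (0:ℝ) t)) :=
        fun x hx => ((hFd x hx).differentiableAt).differentiableWithinAt
      have hmono := monotoneOn_of_deriv_nonneg (convex_Icc 0 t) hcont hdiff
        (fun x hx => by rw [(hFd x hx).deriv])
      have hanti := antitoneOn_of_deriv_nonpos (convex_Icc 0 t) hcont hdiff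
        (fun x hx => by rw [(hFd x hx).deriv])
      have hm0 : (0:ℝ) ∈ Set.Icc (0:ℝ) t := Set.left_mem_Icc.mpr h.le
      have hmt : t ∈ Set.Icc (0:ℝ) t := Set.right_mem_Icc.mpr h.le
      have h1 := hmono hm0 hmt h.le
      have h2 := hanti hm0 hmt h.le
      have : ∑ i, (S t i + I t i) = ∑ i, (S 0 i + I 0 i) := le_antisymm h2 h1
      rw [this]; exact htot
  have hIsum : ∀ t ≥ (0:ℝ), ∑ i, I t i = N - ∑ i, S t i := by
    intro t ht
    have := hcons t ht
    rw [Finset.sum_add_distrib] at this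
    linarith
  -- lower bound for the total susceptible population
  obtain ⟨K1, hK1def⟩ : ∃ x : ℝ, x = βM + γm := ⟨_, rfl⟩
  have hK1 : 0 < K1 := by rw [hK1def]; positivity
  obtain ⟨a1, ha1def⟩ : ∃ x : ℝ, x = γm * N := ⟨_, rfl⟩
  have ha1 : 0 < a1 := by rw [ha1def]; positivity
  obtain ⟨T1, hT1def⟩ : ∃ x : ℝ, x = 1 + Real.log 2 / K1 := ⟨_, rfl⟩
  have hT1 : 1 ≤ T1 := by
    have h1 := Real.log_nonneg (by norm_num : (1:ℝ) ≤ 2)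
    have h2 := div_nonneg h1 hK1.le
    rw [hT1def]
    linarith
  obtain ⟨c, hcdef⟩ : ∃ x : ℝ, x = a1 / (2 * K1) := ⟨_, rfl⟩
  have hc : 0 < c := by rw [hcdef]; exact div_pos ha1 (by linarith)
  have hsumS : ∀ t ≥ T1, c ≤ ∑ i, S t i := by
    intro t htT
    have h1t : (1:ℝ) ≤ t := le_trans hT1 htT
    have hf : ∀ x ∈ Set.Icc (1:ℝ) t, HasDerivAt (fun s => ∑ i, S s i)
        (∑ i, (dS * ∑ j, L i j * S x j - β i * S x i * I x i / (S x i + I x i)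
          + γ i * I x i)) x := by
      intro x hx
      exact HasDerivAt.fun_sum fun i _ => hSode i x (lt_of_lt_of_le zero_lt_one hx.1)
    have hg : ∀ x ∈ Set.Icc (1:ℝ) t, a1 - K1 * ∑ i, S x i ≤
        ∑ i, (dS * ∑ j, L i j * S x j - β i * S x i * I x i / (S x i + I x i)
          + γ i * I x i) := by
      intro x hx
      have hx0 : (0:ℝ) ≤ x := by linarith [hx.1]
      have hzero : ∑ i, ∑ j, L i j * S x j = 0 := by
        rw [Finset.sum_comm]
        apply Finset.sum_eq_zero
        intro j _
        rw [← Finset.sum_mul, colsum j, zero_mul]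
      have h2 : γm * (N - ∑ i, S x i) ≤ ∑ i, γ i * I x i := by
        rw [← hIsum x hx0, Finset.mul_sum]
        exact Finset.sum_le_sum fun i _ =>
          mul_le_mul_of_nonneg_right (hγm i) (hInn x hx0 i)
      have h3 : ∑ i, β i * S x i * I x i / (S x i + I x i) ≤ βM * ∑ i, S x i := by
        rw [Finset.mul_sum]
        apply Finset.sum_le_sum
        intro i _
        have hqi := hq x hx0 i
        have he : β i * S x i * I x i / (S x i + I x i)
            = β i * (S x i * I x i / (S x i + I x i)) := by ring
        rw [he]
        calc β i * (S x i * I x i / (S x i + I x i))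
            ≤ βM * (S x i * I x i / (S x i + I x i)) :=
              mul_le_mul_of_nonneg_right (hβM i) hqi.1
          _ ≤ βM * S x i := mul_le_mul_of_nonneg_left hqi.2 hβM0.le
      have hsum_eq : ∑ i, (dS * ∑ j, L i j * S x j
            - β i * S x i * I x i / (S x i + I x i) + γ i * I x i)
          = dS * (∑ i, ∑ j, L i j * S x j)
            - (∑ i, β i * S x i * I x i / (S x i + I x i)) + ∑ i, γ i * I x i := by
        rw [Finset.sum_add_distrib, Finset.sum_sub_distrib, Finset.mul_sum]
      rw [hsum_eq, hzero, mul_zero]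
      rw [hK1def, ha1def]
      have e5 : γm * (N - ∑ i, S x i) = γm * N - γm * ∑ i, S x i := by ring
      have e6 : (βM + γm) * ∑ i, S x i = βM * ∑ i, S x i + γm * ∑ i, S x i := by ring
      linarith only [h2, h3, e5, e6]
    have happ := gron_lower hK1 hf hg t ⟨h1t, le_refl t⟩
    have hΦ1 : 0 ≤ ∑ i, S 1 i := Finset.sum_nonneg fun i _ => hSnn 1 zero_le_one i
    have hexp : Real.exp (-(K1*(t-1))) ≤ 1/2 := by
      have h5 : Real.log 2 / K1 ≤ t - 1 := by
        rw [hT1def] at htT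
        linarith
      have h6 : -(K1*(t-1)) ≤ -Real.log 2 := by
        have := mul_le_mul_of_nonneg_left h5 hK1.le
        rw [mul_div_cancel₀ _ (ne_of_gt hK1)] at this
        linarith
      calc Real.exp (-(K1*(t-1))) ≤ Real.exp (-Real.log 2) := Real.exp_le_exp.mpr h6
        _ = 1/2 := by rw [Real.exp_neg, Real.exp_log two_pos]; norm_num
    have hexp0 := (Real.exp_pos (-(K1*(t-1)))).le
    have ha1K : 0 ≤ a1/K1 := by positivity
    have e1 : Real.exp (-(K1*(t-1))) * (a1/K1) ≤ (1/2) * (a1/K1) :=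
      mul_le_mul_of_nonneg_right hexp ha1K
    have e2 : 0 ≤ Real.exp (-(K1*(t-1))) * (∑ i, S 1 i) := mul_nonneg hexp0 hΦ1
    have e3 : c = (1/2) * (a1/K1) := by
      rw [hcdef]
      field_simp
    have e4 : Real.exp (-(K1*(t-1))) * ((∑ i, S 1 i) - a1/K1)
        = Real.exp (-(K1*(t-1))) * (∑ i, S 1 i) - Real.exp (-(K1*(t-1))) * (a1/K1) := by
      ring
    rw [e4] at happ
    linarith
  -- pointwise derivative lower bounds
  have hDecay : ∀ i, ∀ x ≥ (0:ℝ), 0 - K * S x i ≤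
      dS * ∑ j, L i j * S x j - β i * S x i * I x i / (S x i + I x i) + γ i * I x i := by
    intro i x hx
    have h1 : L i i * S x i ≤ ∑ j, L i j * S x j := by
      have hsplit : L i i * S x i + ∑ j ∈ Finset.univ.erase i, L i j * S x j
          = ∑ j, L i j * S x j :=
        Finset.add_sum_erase Finset.univ (fun j => L i j * S x j) (Finset.mem_univ i)
      have hrest : 0 ≤ ∑ j ∈ Finset.univ.erase i, L i j * S x j :=
        Finset.sum_nonneg fun j hj =>
          mul_nonneg (hquasi i j (Ne.symm (Finset.ne_of_mem_erase hj))) (hSnn x hx j)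
      linarith
    have hqi := hq x hx i
    have h2 : (β i - dS * L i i) * S x i ≤ K * S x i :=
      mul_le_mul_of_nonneg_right (hKi i) (hSnn x hx i)
    have h3 : 0 ≤ γ i * I x i := mul_nonneg (hγ i).le (hInn x hx i)
    have h4 : β i * S x i * I x i / (S x i + I x i) ≤ β i * S x i := by
      have he : β i * S x i * I x i / (S x i + I x i)
          = β i * (S x i * I x i / (S x i + I x i)) := by ring
      rw [he]
      exact mul_le_mul_of_nonneg_left hqi.2 (hβ i).le
    have h5 : dS * (L i i * S x i) ≤ dS * ∑ j, L i j * S x j :=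
      mul_le_mul_of_nonneg_left h1 hdS.le
    have e2 : (β i - dS * L i i) * S x i = β i * S x i - dS * (L i i * S x i) := by ring
    linarith only [h2, h3, h4, h5, e2]
  have hEdge : ∀ i j, i ≠ j → 0 < L i j → ∀ δ ≥ (0:ℝ), ∀ x ≥ (0:ℝ), δ ≤ S x j →
      dS * ℓ * δ - K * S x i ≤
      dS * ∑ k, L i k * S x k - β i * S x i * I x i / (S x i + I x i) + γ i * I x i := by
    intro i j hij hL δ hδ x hx hSj
    have hpair : L i i * S x i + L i j * S x j ≤ ∑ k, L i k * S x k := by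
      have hsub : ({i, j} : Finset (Fin n)) ⊆ Finset.univ := Finset.subset_univ _
      have hmain := Finset.sum_le_sum_of_subset_of_nonneg hsub
        (fun k _ hk => by
          have hki : k ≠ i := fun h => hk (by rw [h]; exact Finset.mem_insert_self _ _)
          exact mul_nonneg (hquasi i k (Ne.symm hki)) (hSnn x hx k))
      rwa [Finset.sum_pair hij] at hmain
    have hLS : ℓ * δ ≤ L i j * S x j :=
      mul_le_mul (hℓle i j hL) hSj hδ hL.le
    have hqi := hq x hx i
    have h2 : (β i - dS * L i i) * S x i ≤ K * S x i :=
      mul_le_mul_of_nonneg_right (hKi i) (hSnn x hx i)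
    have h3 : 0 ≤ γ i * I x i := mul_nonneg (hγ i).le (hInn x hx i)
    have h4 : β i * S x i * I x i / (S x i + I x i) ≤ β i * S x i := by
      have he : β i * S x i * I x i / (S x i + I x i)
          = β i * (S x i * I x i / (S x i + I x i)) := by ring
      rw [he]
      exact mul_le_mul_of_nonneg_left hqi.2 (hβ i).le
    have h5 : dS * (L i i * S x i + L i j * S x j) ≤ dS * ∑ k, L i k * S x k :=
      mul_le_mul_of_nonneg_left hpair hdS.le
    have h6 : dS * (ℓ * δ) ≤ dS * (L i j * S x j) := mul_le_mul_of_nonneg_left hLS hdS.le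
    have e1 : dS * (L i i * S x i + L i j * S x j)
        = dS * (L i i * S x i) + dS * (L i j * S x j) := by ring
    have e2 : (β i - dS * L i i) * S x i = β i * S x i - dS * (L i i * S x i) := by ring
    have e4 : dS * ℓ * δ = dS * (ℓ * δ) := by ring
    linarith only [h2, h3, h4, h5, h6, e1, e2, e4]
  -- propagation constants
  have hnr : (0:ℝ) < n := Nat.cast_pos.mpr hn0
  obtain ⟨δ0, hδ0def⟩ : ∃ x : ℝ, x = c/n * Real.exp (-(K*n)) := ⟨_, rfl⟩
  have hδ0 : 0 < δ0 := by
    rw [hδ0def]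
    exact mul_pos (div_pos hc hnr) (Real.exp_pos _)
  obtain ⟨ρ, hρdef⟩ : ∃ x : ℝ, x = min 1 (dS * ℓ * (1 - Real.exp (-K)) / K) := ⟨_, rfl⟩
  have hexpK : Real.exp (-K) < 1 := Real.exp_lt_one_iff.mpr (by linarith)
  have hρ0 : 0 < ρ := by
    rw [hρdef]
    apply lt_min one_pos
    have h1 : (0:ℝ) < 1 - Real.exp (-K) := by linarith
    exact div_pos (mul_pos (mul_pos hdS hℓ) h1) hK
  have hρ1 : ρ ≤ 1 := hρdef ▸ min_le_left _ _
  -- main propagation induction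
  have main : ∀ k : ℕ, ∀ t1, T1 ≤ t1 → ∃ A : Finset (Fin n),
      min (k+1) n ≤ A.card ∧ ∀ i ∈ A, ∀ t ∈ Set.Icc (t1 + (k:ℝ)) (t1 + (n:ℝ)),
        δ0 * ρ^k ≤ S t i := by
    intro k
    induction k with
    | zero =>
      intro t1 ht1
      have ht10 : (0:ℝ) < t1 := lt_of_lt_of_le one_pos (le_trans hT1 ht1)
      obtain ⟨j, hj⟩ : ∃ j, c/n ≤ S t1 j := by
        by_contra hcon
        push_neg at hcon
        have hlt : ∑ i, S t1 i < ∑ _i : Fin n, c/(n:ℝ) :=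
          Finset.sum_lt_sum_of_nonempty hne fun i _ => hcon i
        have hcn : ∑ _i : Fin n, (c/(n:ℝ)) = c := by
          rw [Finset.sum_const, Finset.card_univ, Fintype.card_fin, nsmul_eq_mul]
          field_simp
        rw [hcn] at hlt
        linarith [hsumS t1 ht1]
      refine ⟨{j}, ?_, ?_⟩
      · rw [Finset.card_singleton]; omega
      · intro i hi t ht
        rw [Finset.mem_singleton] at hi
        subst hi
        rw [Nat.cast_zero, add_zero] at ht
        have hf : ∀ x ∈ Set.Icc t1 (t1 + (n:ℝ)), HasDerivAt (fun s => S s i)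
            (dS * ∑ j, L i j * S x j - β i * S x i * I x i / (S x i + I x i)
              + γ i * I x i) x :=
          fun x hx => hSode i x (lt_of_lt_of_le ht10 hx.1)
        have hg : ∀ x ∈ Set.Icc t1 (t1 + (n:ℝ)), 0 - K * S x i ≤
            dS * ∑ j, L i j * S x j - β i * S x i * I x i / (S x i + I x i)
              + γ i * I x i :=
          fun x hx => hDecay i x (le_trans ht10.le hx.1)
        have happ := gron_lower hK hf hg t ht
        rw [zero_div, zero_add, sub_zero] at happ
        have h1 : Real.exp (-(K*(n:ℝ))) ≤ Real.exp (-(K*(t-t1))) := by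
          apply Real.exp_le_exp.mpr
          have h2 : t - t1 ≤ (n:ℝ) := by linarith [ht.2]
          have h3 := mul_le_mul_of_nonneg_left h2 hK.le
          linarith only [h3]
        have h3 : c/(n:ℝ) * Real.exp (-(K*(n:ℝ)))
            ≤ Real.exp (-(K*(t-t1))) * S t1 i := by
          rw [mul_comm]
          exact mul_le_mul h1 hj (div_pos hc hnr).le (Real.exp_pos _).le
        rw [pow_zero, mul_one, hδ0def]
        linarith
    | succ k ih =>
      intro t1 ht1
      obtain ⟨A, hcard, hbound⟩ := ih t1 ht1
      have ht10 : (0:ℝ) < t1 := lt_of_lt_of_le one_pos (le_trans hT1 ht1)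
      have hsubInt : Set.Icc (t1 + ((k+1:ℕ):ℝ)) (t1 + (n:ℝ))
          ⊆ Set.Icc (t1 + (k:ℝ)) (t1 + (n:ℝ)) := by
        apply Set.Icc_subset_Icc _ le_rfl
        push_cast
        linarith
      have hρmono : δ0 * ρ^(k+1) ≤ δ0 * ρ^k :=
        mul_le_mul_of_nonneg_left
          (pow_le_pow_of_le_one hρ0.le hρ1 (Nat.le_succ k)) hδ0.le
      by_cases hAu : n ≤ A.card
      · exact ⟨A, by omega,
          fun i hi t ht => le_trans hρmono (hbound i hi t (hsubInt ht))⟩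
      · push_neg at hAu
        have hAcard : 1 ≤ A.card := by omega
        have hAne : A.Nonempty := Finset.card_pos.mp hAcard
        have hAnu : A ≠ Finset.univ := by
          intro h
          rw [h, Finset.card_univ, Fintype.card_fin] at hAu
          omega
        obtain ⟨i, hiA, j, hjA, hLij⟩ := hirr A hAne hAnu
        have hij : i ≠ j := fun h => hiA (h ▸ hjA)
        refine ⟨insert i A, ?_, ?_⟩
        · rw [Finset.card_insert_of_notMem hiA]; omega
        · intro i' hi' t ht
          rcases Finset.mem_insert.mp hi' with h|h
          · subst h
            have hs0 : (0:ℝ) < t1 + (k:ℝ) := by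
              have : (0:ℝ) ≤ (k:ℝ) := Nat.cast_nonneg k
              linarith
            obtain ⟨δk, hδkdef⟩ : ∃ x : ℝ, x = δ0 * ρ^k := ⟨_, rfl⟩
            have hδk : 0 < δk := hδkdef ▸ mul_pos hδ0 (pow_pos hρ0 k)
            have hf : ∀ x ∈ Set.Icc (t1 + (k:ℝ)) (t1 + (n:ℝ)),
                HasDerivAt (fun s => S s i')
                (dS * ∑ j, L i' j * S x j - β i' * S x i' * I x i' / (S x i' + I x i')
                  + γ i' * I x i') x :=
              fun x hx => hSode i' x (lt_of_lt_of_le hs0 hx.1)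
            have hg : ∀ x ∈ Set.Icc (t1 + (k:ℝ)) (t1 + (n:ℝ)),
                dS * ℓ * δk - K * S x i' ≤
                dS * ∑ j, L i' j * S x j - β i' * S x i' * I x i' / (S x i' + I x i')
                  + γ i' * I x i' := by
              intro x hx
              exact hEdge i' j hij hLij δk hδk.le x (le_trans hs0.le hx.1)
                (by rw [hδkdef]; exact hbound j hjA x hx)
            have happ := gron_lower hK hf hg t (hsubInt ht)
            have hSs : 0 ≤ S (t1 + (k:ℝ)) i' := hSnn _ hs0.le i'
            have he1 : Real.exp (-(K*(t-(t1 + (k:ℝ))))) ≤ Real.exp (-K) := by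
              apply Real.exp_le_exp.mpr
              have h1 : t1 + ((k+1:ℕ):ℝ) ≤ t := ht.1
              push_cast at h1
              have h2 : (1:ℝ) ≤ t - (t1 + (k:ℝ)) := by linarith only [h1]
              have h3 := mul_le_mul_of_nonneg_left h2 hK.le
              linarith only [h3]
            have haK : 0 ≤ dS * ℓ * δk / K :=
              (div_pos (mul_pos (mul_pos hdS hℓ) hδk) hK).le
            have he0 := (Real.exp_pos (-(K*(t-(t1 + (k:ℝ)))))).le
            -- S t i' ≥ a/K * (1 - e^{-K}) ≥ δk * ρ
            have hρle : ρ ≤ dS * ℓ * (1 - Real.exp (-K)) / K :=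
              hρdef ▸ min_le_right _ _
            have hkey : δk * ρ ≤ S t i' := by
              have s1 : δk * ρ ≤ δk * (dS * ℓ * (1 - Real.exp (-K)) / K) :=
                mul_le_mul_of_nonneg_left hρle hδk.le
              have s2 : δk * (dS * ℓ * (1 - Real.exp (-K)) / K)
                  = dS * ℓ * δk / K - dS * ℓ * δk / K * Real.exp (-K) := by ring
              have s5 : Real.exp (-(K*(t-(t1 + (k:ℝ))))) * (dS * ℓ * δk / K)
                  ≤ Real.exp (-K) * (dS * ℓ * δk / K) :=
                mul_le_mul_of_nonneg_right he1 haK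
              have s6 : 0 ≤ Real.exp (-(K*(t-(t1 + (k:ℝ))))) * S (t1 + (k:ℝ)) i' :=
                mul_nonneg he0 hSs
              have s7 : Real.exp (-(K*(t-(t1 + (k:ℝ)))))
                  * (S (t1 + (k:ℝ)) i' - dS * ℓ * δk / K)
                  = Real.exp (-(K*(t-(t1 + (k:ℝ))))) * S (t1 + (k:ℝ)) i'
                    - Real.exp (-(K*(t-(t1 + (k:ℝ))))) * (dS * ℓ * δk / K) := by
                ring
              rw [s7] at happ
              linarith only [s1, s2, s5, s6, happ]
            calc δ0 * ρ^(k+1) = δk * ρ := by rw [hδkdef]; ring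
              _ ≤ S t i' := hkey
          · exact le_trans hρmono (hbound i' h t (hsubInt ht))
  -- extract the uniform bound
  obtain ⟨Slb, hSlbdef⟩ : ∃ x : ℝ, x = δ0 * ρ^(n-1) := ⟨_, rfl⟩
  have hSlb : 0 < Slb := hSlbdef ▸ mul_pos hδ0 (pow_pos hρ0 _)
  have hmain2 : ∀ t ≥ T1 + n, ∀ i, Slb ≤ S t i := by
    intro t ht i
    obtain ⟨A, hcard, hbound⟩ := main (n-1) (t - n) (by linarith)
    have hAu : A = Finset.univ := by
      apply Finset.eq_univ_of_card
      rw [Fintype.card_fin]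
      have h1 : min (n-1+1) n ≤ A.card := hcard
      have h2 : A.card ≤ n := by
        have := Finset.card_le_univ A
        rwa [Fintype.card_fin] at this
      omega
    rw [hSlbdef]
    apply hbound i (hAu ▸ Finset.mem_univ i) t
    constructor
    · have : ((n-1:ℕ):ℝ) = (n:ℝ) - 1 := by
        rw [Nat.cast_sub (by omega : 1 ≤ n), Nat.cast_one]
      rw [this]; linarith
    · linarith
  have hT0 : (0:ℝ) ≤ T1 + n := by
    have : (0:ℝ) ≤ (n:ℝ) := Nat.cast_nonneg n
    linarith
  refine ⟨⟨Slb, hSlb, T1 + n, hT0, hmain2⟩, ?_⟩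
  have hev : ∀ᶠ t in atTop, Slb ≤ ⨅ i, S t i := by
    filter_upwards [eventually_ge_atTop (T1 + (n:ℝ))] with t ht
    haveI : Nonempty (Fin n) := ⟨i0⟩
    exact le_ciInf fun i => hmain2 t ht i
  have hub : ∀ᶠ t in atTop, (⨅ i, S t i) ≤ N := by
    filter_upwards [eventually_ge_atTop (0:ℝ)] with t ht
    have h1 : (⨅ i, S t i) ≤ S t i0 := by
      apply ciInf_le
      refine ⟨0, ?_⟩
      rintro x ⟨i, rfl⟩
      exact hSnn t ht i
    have h2 : S t i0 ≤ ∑ i, S t i :=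
      Finset.single_le_sum (fun i _ => hSnn t ht i) (Finset.mem_univ i0)
    have h3 : ∑ i, S t i ≤ N := by
      have h4 := hcons t ht
      have h5 : ∑ i, S t i ≤ ∑ i, (S t i + I t i) :=
        Finset.sum_le_sum fun i _ => by linarith [hInn t ht i]
      linarith
    linarith
  have hcb : IsCoboundedUnder (· ≥ ·) atTop (fun t => ⨅ i, S t i) :=
    Filter.isCoboundedUnder_ge_of_eventually_le atTop hub
  have hle : Slb ≤ liminf (fun t => ⨅ i, S t i) atTop := le_liminf_of_le hcb hev
  linarith
end

section
/- Suppose (A1)-(A3) hold with d_S = 0 and d_I > 0, and suppose H⁻ ∪ H⁰ is nonempty. Then every solution (S(t), I(t)) of the standard-incidence SIS network model satisfies I(t) → 0 as t → ∞, and liminf_{t→∞} S_j(t) > 0 for every j ∈ H⁻ ∪ H⁰. -/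
open Filter Topology Set

lemma mono_of_deriv {D : Set ℝ} {f g : ℝ → ℝ} (hD : Convex ℝ D)
    (hc : ContinuousOn f D)
    (hd : ∀ t ∈ interior D, HasDerivAt f (g t) t)
    (hg : ∀ t ∈ interior D, 0 ≤ g t) : MonotoneOn f D := by
  apply monotoneOn_of_deriv_nonneg hD hc
  · intro x hx
    exact ((hd x hx).differentiableAt).differentiableWithinAt
  · intro x hx
    rw [(hd x hx).deriv]
    exact hg x hx

lemma mono_Ici_of_deriv {f g : ℝ → ℝ} (hc : ContinuousOn f (Set.Ici 0))
    (hd : ∀ t : ℝ, 0 < t → HasDerivAt f (g t) t)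
    (hg : ∀ t : ℝ, 0 < t → 0 ≤ g t) : MonotoneOn f (Set.Ici 0) := by
  refine mono_of_deriv (g := g) (convex_Ici 0) hc ?_ ?_ <;> intro t ht <;>
    rw [interior_Ici] at ht
  exacts [hd t ht, hg t ht]

/-- increment lemma: derivative ≥ c on `[a,b] ⊆ (0,∞)` gives `c*(b-a) ≤ f b - f a`. -/
lemma incr_of_deriv {f g : ℝ → ℝ} {a b c : ℝ} (ha : 0 < a) (hab : a ≤ b)
    (hd : ∀ t : ℝ, 0 < t → HasDerivAt f (g t) t)
    (hg : ∀ t ∈ Set.Icc a b, c ≤ g t) : c * (b - a) ≤ f b - f a := by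
  have hmono : MonotoneOn (fun t => f t - c * t) (Set.Icc a b) := by
    refine mono_of_deriv (g := fun t => g t - c) (convex_Icc a b) ?_ ?_ ?_
    · intro t ht
      exact ((hd t (lt_of_lt_of_le ha ht.1)).continuousAt.sub
        ((continuous_const.mul continuous_id).continuousAt)).continuousWithinAt
    · intro t ht
      rw [interior_Icc] at ht
      have h1 := (hd t (lt_of_lt_of_le ha ht.1.le)).fun_sub
        (((hasDerivAt_id t).const_mul c))
      simpa [mul_comm] using h1
    · intro t ht
      rw [interior_Icc] at ht
      have := hg t ⟨ht.1.le, ht.2.le⟩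
      show 0 ≤ g t - c
      linarith
  have := hmono ⟨le_refl a, hab⟩ ⟨hab, le_refl b⟩ hab
  simp only at this
  linarith

lemma frac_le {b s x : ℝ} (hb : 0 ≤ b) (hs : 0 ≤ s) (hx : 0 ≤ x) :
    b * s * x / (s + x) ≤ b * x := by
  rcases eq_or_lt_of_le (add_nonneg hs hx) with h | h
  · have hs0 : s = 0 := ((add_eq_zero_iff_of_nonneg hs hx).mp h.symm).1
    simp [hs0]
    positivity
  · rw [div_le_iff₀ h]
    nlinarith [mul_nonneg (mul_nonneg hb hx) hx]

lemma frac_nonneg {b s x : ℝ} (hb : 0 ≤ b) (hs : 0 ≤ s) (hx : 0 ≤ x) :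
    0 ≤ b * s * x / (s + x) := by positivity

lemma frac_key {b s x Nb : ℝ} (hb : 0 ≤ b) (hs : 0 ≤ s) (hx : 0 ≤ x)
    (hNb : 0 < Nb) (hle : s + x ≤ Nb) :
    b * s * x / (s + x) ≤ b * x - b * x * x / Nb := by
  rcases eq_or_lt_of_le (add_nonneg hs hx) with h | h
  · have hx0 : x = 0 := ((add_eq_zero_iff_of_nonneg hs hx).mp h.symm).2
    simp [hx0]
  · have h1 : b * x * x / Nb ≤ b * x * x / (s + x) := by
      gcongr
    have h2 : b * x - b * x * x / (s + x) = b * s * x / (s + x) := by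
      field_simp
      ring
    linarith
set_option maxHeartbeats 1600000
/-- Theorem 4.3(i): standard-incidence model with `d_S = 0`, `d_I > 0`: if some patch is
of low or moderate risk (`r_j ≥ 1`), then the disease is eliminated (`I(t) → 0`) and the
susceptible population on every low/moderate-risk patch persists. -/
theorem standard_incidence_dS_zero_extinction
    {n : ℕ} (hn : 2 ≤ n)
    (L : Matrix (Fin n) (Fin n) ℝ)
    (hquasi : ∀ i j, i ≠ j → 0 ≤ L i j)
    (hirr : ∀ A : Finset (Fin n), A.Nonempty → A ≠ Finset.univ →
      ∃ i ∉ A, ∃ j ∈ A, 0 < L i j)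
    (hdiag : ∀ i, L i i = -∑ j ∈ Finset.univ.erase i, L j i)
    (β γ : Fin n → ℝ) (hβ : ∀ i, 0 < β i) (hγ : ∀ i, 0 < γ i)
    (dS dI : ℝ) (hdS : dS = 0) (hdI : 0 < dI)
    (N : ℝ) (hN : 0 < N)
    (S I : ℝ → Fin n → ℝ)
    (hScont : ∀ i, ContinuousOn (fun t => S t i) (Set.Ici 0))
    (hIcont : ∀ i, ContinuousOn (fun t => I t i) (Set.Ici 0))
    (hSode : ∀ i, ∀ t : ℝ, 0 < t → HasDerivAt (fun s => S s i)
      (dS * ∑ j, L i j * S t j - β i * S t i * I t i / (S t i + I t i) + γ i * I t i) t)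
    (hIode : ∀ i, ∀ t : ℝ, 0 < t → HasDerivAt (fun s => I s i)
      (dI * ∑ j, L i j * I t j + β i * S t i * I t i / (S t i + I t i) - γ i * I t i) t)
    (hSnn : ∀ t ≥ (0:ℝ), ∀ i, 0 ≤ S t i)
    (hInn : ∀ t ≥ (0:ℝ), ∀ i, 0 ≤ I t i)
    (hI0ne : I 0 ≠ 0)
    (htot : ∑ i, (S 0 i + I 0 i) = N)
    (hrisk : ∃ i, 1 ≤ γ i / β i) :
    (∀ i, Tendsto (fun t => I t i) atTop (𝓝 0)) ∧
    (∀ j, 1 ≤ γ j / β j → 0 < Filter.liminf (fun t => S t j) atTop) := by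
  classical
  subst hdS
  -- simplified S-equation
  have hSode' : ∀ i, ∀ t : ℝ, 0 < t → HasDerivAt (fun s => S s i)
      (γ i * I t i - β i * S t i * I t i / (S t i + I t i)) t := by
    intro i t ht
    have h := hSode i t ht
    rw [show (0 : ℝ) * ∑ j, L i j * S t j - β i * S t i * I t i / (S t i + I t i)
        + γ i * I t i = γ i * I t i - β i * S t i * I t i / (S t i + I t i) by ring] at h
    exact h
  -- column sums of L vanish
  have hcol : ∀ j, ∑ i, L i j = 0 := by
    intro j
    have h := hdiag j
    have h2 : ∑ i, L i j = L j j + ∑ i ∈ Finset.univ.erase j, L i j :=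
      (Finset.add_sum_erase _ _ (Finset.mem_univ j)).symm
    rw [h2, h]
    ring
  -- conservation of total population
  have hcons : ∀ t ≥ (0:ℝ), ∑ i, (S t i + I t i) = N := by
    have hTd : ∀ t : ℝ, 0 < t → HasDerivAt (fun s => ∑ i, (S s i + I s i)) 0 t := by
      intro t ht
      have h : HasDerivAt (fun s => ∑ i, (S s i + I s i))
          (∑ i, ((γ i * I t i - β i * S t i * I t i / (S t i + I t i)) +
            (dI * ∑ j, L i j * I t j + β i * S t i * I t i / (S t i + I t i)
              - γ i * I t i))) t :=
        HasDerivAt.fun_sum fun i _ => (hSode' i t ht).add (hIode i t ht)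
      convert h using 1
      have hterm : ∀ i, (γ i * I t i - β i * S t i * I t i / (S t i + I t i)) +
            (dI * ∑ j, L i j * I t j + β i * S t i * I t i / (S t i + I t i)
              - γ i * I t i)
          = dI * ∑ j, L i j * I t j := fun i => by ring
      symm
      calc ∑ i, ((γ i * I t i - β i * S t i * I t i / (S t i + I t i)) +
            (dI * ∑ j, L i j * I t j + β i * S t i * I t i / (S t i + I t i)
              - γ i * I t i))
          = dI * ∑ j, (∑ i, L i j) * I t j := by
            rw [Finset.sum_congr rfl fun i _ => hterm i, ← Finset.mul_sum,
              Finset.sum_comm]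
            congr 1
            exact Finset.sum_congr rfl fun j _ => (Finset.sum_mul _ _ _).symm
        _ = 0 := by simp [hcol]
    have hTcont : ContinuousOn (fun s => ∑ i, (S s i + I s i)) (Set.Ici 0) := by
      apply continuousOn_finset_sum
      exact fun i _ => (hScont i).add (hIcont i)
    have hmono : MonotoneOn (fun s => ∑ i, (S s i + I s i)) (Set.Ici 0) :=
      mono_Ici_of_deriv (g := fun _ => 0) hTcont (fun t ht => hTd t ht)
        (fun _ _ => le_refl 0)
    have hanti : MonotoneOn (fun s => -∑ i, (S s i + I s i)) (Set.Ici 0) :=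
      mono_Ici_of_deriv (g := fun _ => 0) hTcont.neg
        (fun t ht => by simpa using (hTd t ht).fun_neg) (fun _ _ => le_refl 0)
    intro t ht
    have h1 := hmono (Set.mem_Ici.mpr (le_refl 0)) (Set.mem_Ici.mpr ht) ht
    have h2 := hanti (Set.mem_Ici.mpr (le_refl 0)) (Set.mem_Ici.mpr ht) ht
    simp only at h1 h2
    rw [← htot]
    linarith
  -- pointwise bounds
  have hsumle : ∀ t ≥ (0:ℝ), ∀ i, S t i + I t i ≤ N := by
    intro t ht i
    rw [← hcons t ht]
    exact Finset.single_le_sum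
      (fun k _ => add_nonneg (hSnn t ht k) (hInn t ht k)) (Finset.mem_univ i)
  have hIleN : ∀ t ≥ (0:ℝ), ∀ i, I t i ≤ N := fun t ht i =>
    le_trans (by linarith [hSnn t ht i]) (hsumle t ht i)
  have hSleN : ∀ t ≥ (0:ℝ), ∀ i, S t i ≤ N := fun t ht i =>
    le_trans (by linarith [hInn t ht i]) (hsumle t ht i)
  -- diagonal entries are nonpositive
  have hdiagnp : ∀ i, L i i ≤ 0 := by
    intro i
    rw [hdiag i]
    simp only [neg_nonpos]
    exact Finset.sum_nonneg fun j hj => hquasi j i (Finset.ne_of_mem_erase hj)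
  -- Lipschitz-type constant for I
  set M : Fin n → ℝ := fun k => (dI * |L k k| + γ k) * N + 1 with hM
  have hMpos : ∀ k, 0 < M k := by
    intro k
    have : 0 ≤ (dI * |L k k| + γ k) * N :=
      mul_nonneg (add_nonneg (mul_nonneg hdI.le (abs_nonneg _)) (hγ k).le) hN.le
    simp only [hM]; linarith
  clear_value M
  -- lower bound on the derivative of I
  have hIder_lb : ∀ k, ∀ t : ℝ, 0 < t →
      -(M k) ≤ dI * ∑ j, L k j * I t j + β k * S t k * I t k / (S t k + I t k)
        - γ k * I t k := by
    intro k t ht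
    have ht0 : (0:ℝ) ≤ t := ht.le
    have h1 : L k k * I t k ≤ ∑ j, L k j * I t j := by
      rw [← Finset.add_sum_erase _ _ (Finset.mem_univ k)]
      have h0 : 0 ≤ ∑ j ∈ Finset.univ.erase k, L k j * I t j :=
        Finset.sum_nonneg fun j hj => mul_nonneg
          (hquasi k j (Ne.symm (Finset.ne_of_mem_erase hj))) (hInn t ht0 j)
      linarith
    have h2 : -(|L k k| * N) ≤ L k k * I t k := by
      have hLk := hdiagnp k
      have habs : |L k k| = -(L k k) := abs_of_nonpos hLk
      nlinarith [hIleN t ht0 k, hInn t ht0 k]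
    have h3 : 0 ≤ β k * S t k * I t k / (S t k + I t k) :=
      frac_nonneg (hβ k).le (hSnn t ht0 k) (hInn t ht0 k)
    have h4 : γ k * I t k ≤ γ k * N :=
      mul_le_mul_of_nonneg_left (hIleN t ht0 k) (hγ k).le
    have h5 : dI * (L k k * I t k) ≤ dI * ∑ j, L k j * I t j :=
      mul_le_mul_of_nonneg_left h1 hdI.le
    have h6 : dI * (-(|L k k| * N)) ≤ dI * (L k k * I t k) :=
      mul_le_mul_of_nonneg_left h2 hdI.le
    have h7 : (dI * |L k k| + γ k) * N = dI * (|L k k| * N) + γ k * N := by ring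
    simp only [hM]
    nlinarith
  have hβγ : ∀ j, 1 ≤ γ j / β j → β j ≤ γ j := by
    intro j hr
    exact (one_le_div (hβ j)).mp hr
  -- lower-Lipschitz property of I
  have hlip : ∀ k, ∀ s t : ℝ, 0 ≤ s → s ≤ t → I s k - M k * (t - s) ≤ I t k := by
    intro k s t hs hst
    have hmono : MonotoneOn (fun u => I u k + M k * u) (Set.Ici 0) := by
      refine mono_Ici_of_deriv (g := fun u =>
        (dI * ∑ j, L k j * I u j + β k * S u k * I u k / (S u k + I u k)
          - γ k * I u k) + M k) ?_ ?_ ?_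
      · exact (hIcont k).add (continuous_const.mul continuous_id).continuousOn
      · intro u hu
        have h2 : HasDerivAt (fun u : ℝ => M k * u) (M k) u := by
          simpa using (hasDerivAt_id u).const_mul (M k)
        exact (hIode k u hu).add h2
      · intro u hu
        linarith [hIder_lb k u hu]
    have := hmono (Set.mem_Ici.mpr hs) (Set.mem_Ici.mpr (le_trans hs hst)) hst
    simp only at this
    linarith
  -- monotonicity of S on low/moderate-risk patches
  have hSder_lb : ∀ j, 1 ≤ γ j / β j → ∀ u : ℝ, 0 < u →
      β j * I u j * I u j / N ≤
        γ j * I u j - β j * S u j * I u j / (S u j + I u j) := by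
    intro j hr u hu
    have hu0 := hu.le
    have h1 := frac_key (hβ j).le (hSnn u hu0 j) (hInn u hu0 j) hN (hsumle u hu0 j)
    have h2 : β j * I u j ≤ γ j * I u j :=
      mul_le_mul_of_nonneg_right (hβγ j hr) (hInn u hu0 j)
    linarith
  have hSmono : ∀ j, 1 ≤ γ j / β j → MonotoneOn (fun t => S t j) (Set.Ici 0) := by
    intro j hr
    refine mono_Ici_of_deriv
      (g := fun t => γ j * I t j - β j * S t j * I t j / (S t j + I t j))
      (hScont j) (hSode' j) ?_
    intro t ht
    have ht0 := ht.le
    have h1 := frac_le (hβ j).le (hSnn t ht0 j) (hInn t ht0 j)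
    have h2 : β j * I t j ≤ γ j * I t j :=
      mul_le_mul_of_nonneg_right (hβγ j hr) (hInn t ht0 j)
    linarith
  -- seed: convergence on low/moderate-risk patches
  have hseed : ∀ j, 1 ≤ γ j / β j → Tendsto (fun t => I t j) atTop (𝓝 0) := by
    intro j hr
    by_contra hnot
    rw [Metric.tendsto_atTop] at hnot
    push_neg at hnot
    obtain ⟨ε, hε, hfreq⟩ := hnot
    set δ : ℝ := ε / (2 * M j) with hδ
    have hδpos : 0 < δ := div_pos hε (by linarith [hMpos j])
    have hMne : M j ≠ 0 := ne_of_gt (hMpos j)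
    have hMδ : M j * δ = ε / 2 := by
      rw [hδ]
      field_simp
    set c : ℝ := β j * (ε/2) * (ε/2) / N with hc
    have hcpos : 0 < c := by
      have := hβ j
      positivity
    have hstep : ∀ T : ℝ, ∃ t ≥ (1:ℝ), T ≤ t ∧ c * δ ≤ S (t + δ) j - S t j := by
      intro T
      obtain ⟨t, htT, hIt⟩ := hfreq (max T 1)
      have ht1 : (1:ℝ) ≤ t := le_trans (le_max_right T 1) htT
      have htpos : (0:ℝ) < t := lt_of_lt_of_le one_pos ht1
      have hIt' : ε ≤ I t j := by
        rwa [Real.dist_eq, sub_zero, abs_of_nonneg (hInn t htpos.le j)] at hIt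
      have hIant : ∀ u ∈ Set.Icc t (t+δ), ε/2 ≤ I u j := by
        intro u hu
        have hl := hlip j t u htpos.le hu.1
        have hle : M j * (u - t) ≤ M j * δ :=
          mul_le_mul_of_nonneg_left (by linarith [hu.2]) (hMpos j).le
        linarith
      have hincr : c * (t + δ - t) ≤ S (t + δ) j - S t j := by
        apply incr_of_deriv htpos (by linarith) (hSode' j)
        intro u hu
        have hu0 : 0 < u := lt_of_lt_of_le htpos hu.1
        have h1 := hSder_lb j hr u hu0
        have hI := hIant u hu
        have hI0 : 0 ≤ I u j := le_trans (by linarith) hI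
        have hsq : (ε/2)*(ε/2) ≤ I u j * I u j := mul_le_mul hI hI (by linarith) hI0
        have h2 : β j * (ε/2) * (ε/2) ≤ β j * I u j * I u j := by
          nlinarith [mul_le_mul_of_nonneg_left hsq (hβ j).le]
        have h3 : c ≤ β j * I u j * I u j / N := by
          rw [hc]
          gcongr
        linarith
      refine ⟨t, ht1, le_trans (le_max_left T 1) htT, ?_⟩
      have hring : c * (t + δ - t) = c * δ := by ring
      linarith [hincr]
    have hgrow : ∀ m : ℕ, ∃ t ≥ (1:ℝ), (m : ℝ) * (c * δ) ≤ S t j := by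
      intro m
      induction m with
      | zero =>
        refine ⟨1, le_refl 1, ?_⟩
        simpa using hSnn 1 (by norm_num) j
      | succ m ih =>
        obtain ⟨t, ht1, hSt⟩ := ih
        obtain ⟨t', ht'1, ht't, hinc⟩ := hstep t
        have h1 : S t j ≤ S t' j :=
          hSmono j hr (Set.mem_Ici.mpr (by linarith)) (Set.mem_Ici.mpr (by linarith)) ht't
        refine ⟨t' + δ, by linarith, ?_⟩
        push_cast
        linarith
    obtain ⟨m, hm⟩ := exists_nat_gt (N / (c * δ))
    obtain ⟨t, ht1, hSt⟩ := hgrow m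
    have hcd : 0 < c * δ := mul_pos hcpos hδpos
    rw [div_lt_iff₀ hcd] at hm
    linarith [hSleN t (by linarith) j]
  -- propagation of convergence through the network
  have hprop : ∀ j k, Tendsto (fun t => I t j) atTop (𝓝 0) → 0 < L j k →
      Tendsto (fun t => I t k) atTop (𝓝 0) := by
    intro j k hj hLjk
    have hkj : k ≠ j := by
      intro h
      subst h
      exact absurd hLjk (not_lt.mpr (hdiagnp k))
    by_contra hnot
    rw [Metric.tendsto_atTop] at hnot
    push_neg at hnot
    obtain ⟨ε, hε, hfreq⟩ := hnot
    set δ : ℝ := ε / (2 * M k) with hδ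
    have hδpos : 0 < δ := div_pos hε (by linarith [hMpos k])
    have hMne : M k ≠ 0 := ne_of_gt (hMpos k)
    have hMδ : M k * δ = ε / 2 := by
      rw [hδ]
      field_simp
    set c : ℝ := dI * L j k * (ε/2) with hc
    have hcpos : 0 < c := by
      have h1 : 0 < dI * L j k := mul_pos hdI hLjk
      rw [hc]
      positivity
    set C : ℝ := dI * |L j j| + γ j with hC
    have hC0 : 0 ≤ C := by
      rw [hC]
      exact add_nonneg (mul_nonneg hdI.le (abs_nonneg _)) (hγ j).le
    set η : ℝ := min (c * δ / 4) (c / (2 * (C + 1))) with hη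
    have hηpos : 0 < η := by
      rw [hη]
      apply lt_min
      · positivity
      · apply div_pos hcpos
        positivity
    rw [Metric.tendsto_atTop] at hj
    obtain ⟨T0, hT0⟩ := hj η hηpos
    have hjsmall : ∀ t : ℝ, max T0 0 ≤ t → I t j ≤ η := by
      intro t ht
      have h1 := hT0 t (le_trans (le_max_left T0 0) ht)
      rw [Real.dist_eq, sub_zero,
        abs_of_nonneg (hInn t (le_trans (le_max_right T0 0) ht) j)] at h1
      exact h1.le
    obtain ⟨t, htT, hIt⟩ := hfreq (max (max T0 0) 1)
    have ht1 : (1:ℝ) ≤ t := le_trans (le_max_right _ 1) htT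
    have htT0 : max T0 0 ≤ t := le_trans (le_max_left _ 1) htT
    have htpos : (0:ℝ) < t := lt_of_lt_of_le one_pos ht1
    have hIkt : ε ≤ I t k := by
      rwa [Real.dist_eq, sub_zero, abs_of_nonneg (hInn t htpos.le k)] at hIt
    have hIant : ∀ u ∈ Set.Icc t (t+δ), ε/2 ≤ I u k := by
      intro u hu
      have hl := hlip k t u htpos.le hu.1
      have hle : M k * (u - t) ≤ M k * δ :=
        mul_le_mul_of_nonneg_left (by linarith [hu.2]) (hMpos k).le
      linarith
    have hCη : C * η ≤ c / 2 := by
      have h1 : η ≤ c / (2 * (C + 1)) := by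
        rw [hη]; exact min_le_right _ _
      have h2 : C * η ≤ C * (c / (2 * (C+1))) := mul_le_mul_of_nonneg_left h1 hC0
      have h3 : C * (c / (2 * (C+1))) ≤ c / 2 := by
        have hpos : (0:ℝ) < 2 * (C + 1) := by linarith
        have hCne : C + 1 ≠ 0 := by linarith
        have ha : C * (c / (2 * (C + 1))) ≤ (C + 1) * (c / (2 * (C + 1))) :=
          mul_le_mul_of_nonneg_right (by linarith) (div_pos hcpos hpos).le
        have hb : (C + 1) * (c / (2 * (C + 1))) = c / 2 := by
          field_simp
        linarith
      linarith
    have hηcδ : η ≤ c * δ / 4 := by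
      rw [hη]; exact min_le_left _ _
    have hincr : c/2 * (t + δ - t) ≤ I (t + δ) j - I t j := by
      apply incr_of_deriv htpos (by linarith) (hIode j)
      intro u hu
      have hu0 : 0 < u := lt_of_lt_of_le htpos hu.1
      have hIuj : I u j ≤ η := hjsmall u (le_trans htT0 hu.1)
      have hIujnn : 0 ≤ I u j := hInn u hu0.le j
      have hsum : L j j * I u j + L j k * I u k ≤ ∑ m, L j m * I u m := by
        rw [← Finset.add_sum_erase _ _ (Finset.mem_univ j)]
        have hkmem : k ∈ Finset.univ.erase j :=
          Finset.mem_erase.mpr ⟨hkj, Finset.mem_univ k⟩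
        have hs := Finset.single_le_sum (f := fun m => L j m * I u m)
          (fun m hm => mul_nonneg
            (hquasi j m (Ne.symm (Finset.ne_of_mem_erase hm))) (hInn u hu0.le m))
          hkmem
        replace hs : L j k * I u k ≤ ∑ m ∈ Finset.univ.erase j, L j m * I u m := hs
        linarith
      have h2 : -(|L j j| * η) ≤ L j j * I u j := by
        have habs : |L j j| = -(L j j) := abs_of_nonpos (hdiagnp j)
        have hm := mul_le_mul_of_nonpos_left hIuj (hdiagnp j)
        rw [habs]
        linarith
      have h3 : L j k * (ε/2) ≤ L j k * I u k :=
        mul_le_mul_of_nonneg_left (hIant u hu) hLjk.le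
      have h4 : 0 ≤ β j * S u j * I u j / (S u j + I u j) :=
        frac_nonneg (hβ j).le (hSnn u hu0.le j) (hInn u hu0.le j)
      have h5 : γ j * I u j ≤ γ j * η := mul_le_mul_of_nonneg_left hIuj (hγ j).le
      have h6 : dI * (L j j * I u j + L j k * I u k) ≤ dI * ∑ m, L j m * I u m :=
        mul_le_mul_of_nonneg_left hsum hdI.le
      have h7 : C * η = dI * (|L j j| * η) + γ j * η := by rw [hC]; ring
      have h8 : c = dI * (L j k * (ε/2)) := by rw [hc]; ring
      have h9 : dI * (L j j * I u j + L j k * I u k)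
          = dI * (L j j * I u j) + dI * (L j k * I u k) := by ring
      have h2' := mul_le_mul_of_nonneg_left h2 hdI.le
      have h3' := mul_le_mul_of_nonneg_left h3 hdI.le
      have h10 : dI * -(|L j j| * η) = -(dI * (|L j j| * η)) := by ring
      have h11 : dI * (|L j j| * η) + γ j * η = C * η := by rw [hC]; ring
      linarith
    have hIend : I (t + δ) j ≤ η := hjsmall (t + δ) (by linarith)
    have hItnn : 0 ≤ I t j := hInn t htpos.le j
    have hring : c/2 * (t + δ - t) = c * δ / 2 := by ring
    linarith
  -- all patches converge
  have hall : ∀ i, Tendsto (fun t => I t i) atTop (𝓝 0) := by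
    intro i
    by_contra hnot
    set A : Finset (Fin n) :=
      Finset.univ.filter (fun k => ¬ Tendsto (fun t => I t k) atTop (𝓝 0)) with hA
    have hAne : A.Nonempty := ⟨i, by simp [hA, hnot]⟩
    obtain ⟨j0, hj0⟩ := hrisk
    have hj0t := hseed j0 hj0
    have hAnu : A ≠ Finset.univ := by
      intro h
      have hmem : j0 ∈ A := h ▸ Finset.mem_univ j0
      rw [hA, Finset.mem_filter] at hmem
      exact hmem.2 hj0t
    obtain ⟨p, hpA, q, hqA, hLpq⟩ := hirr A hAne hAnu
    have hp : Tendsto (fun t => I t p) atTop (𝓝 0) := by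
      by_contra hcp
      exact hpA (by simp [hA, hcp])
    have hq : ¬ Tendsto (fun t => I t q) atTop (𝓝 0) := by
      rw [hA, Finset.mem_filter] at hqA
      exact hqA.2
    exact hq (hprop p q hp hLpq)
  refine ⟨hall, ?_⟩
  -- persistence of susceptibles
  intro j hr
  have hSm := hSmono j hr
  have hpos : ∃ t0 ≥ (0:ℝ), 0 < S t0 j := by
    by_contra hno
    push_neg at hno
    have hSz : ∀ t ≥ (0:ℝ), S t j = 0 :=
      fun t ht => le_antisymm (hno t ht) (hSnn t ht j)
    have hIjz : ∀ t : ℝ, 0 < t → I t j = 0 := by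
      intro t ht
      have hev : (fun s => S s j) =ᶠ[𝓝 t] fun _ => 0 := by
        filter_upwards [Ioi_mem_nhds ht] with s hs
        exact hSz s (le_of_lt hs)
      have h0 : HasDerivAt (fun s => S s j) 0 t :=
        (hasDerivAt_const t 0).congr_of_eventuallyEq hev
      have hu := h0.unique (hSode' j t ht)
      rw [hSz t ht.le] at hu
      have hzero : β j * 0 * I t j / (0 + I t j) = 0 := by simp
      rw [hzero] at hu
      have : γ j * I t j = 0 := by linarith
      rcases mul_eq_zero.mp this with h | h
      · exact absurd h (ne_of_gt (hγ j))
      · exact h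
    have hZ : ∀ k, ∀ t : ℝ, 0 < t → I t k = 0 := by
      by_contra hnall
      push_neg at hnall
      set A : Finset (Fin n) :=
        Finset.univ.filter (fun k => ¬ ∀ t : ℝ, 0 < t → I t k = 0) with hA
      have hAne : A.Nonempty := by
        obtain ⟨k, t, ht, hk⟩ := hnall
        refine ⟨k, ?_⟩
        simp only [hA, Finset.mem_filter, Finset.mem_univ, true_and]
        push_neg
        exact ⟨t, ht, hk⟩
      have hAnu : A ≠ Finset.univ := by
        intro h
        have hmem : j ∈ A := h ▸ Finset.mem_univ j
        rw [hA, Finset.mem_filter] at hmem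
        exact hmem.2 hIjz
      obtain ⟨p, hpA, q, hqA, hLpq⟩ := hirr A hAne hAnu
      have hqp : q ≠ p := by
        intro h
        subst h
        exact absurd hLpq (not_lt.mpr (hdiagnp q))
      have hp : ∀ t : ℝ, 0 < t → I t p = 0 := by
        by_contra hcp
        apply hpA
        simp only [hA, Finset.mem_filter, Finset.mem_univ, true_and]
        exact hcp
      have hq0 : ∀ t : ℝ, 0 < t → I t q = 0 := by
        intro t ht
        have hev : (fun s => I s p) =ᶠ[𝓝 t] fun _ => 0 := by
          filter_upwards [Ioi_mem_nhds ht] with s hs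
          exact hp s hs
        have h0 : HasDerivAt (fun s => I s p) 0 t :=
          (hasDerivAt_const t 0).congr_of_eventuallyEq hev
        have hu := h0.unique (hIode p t ht)
        rw [hp t ht] at hu
        rw [show β p * S t p * 0 / (S t p + 0) = 0 by simp] at hu
        have hsum0 : ∑ m, L p m * I t m = 0 := by
          have := hu
          simp only [mul_zero, add_zero, sub_zero] at this
          rcases mul_eq_zero.mp this.symm with h | h
          · exact absurd h (ne_of_gt hdI)
          · exact h
        have hqmem : q ∈ Finset.univ.erase p :=
          Finset.mem_erase.mpr ⟨hqp, Finset.mem_univ q⟩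
        have herase : ∑ m ∈ Finset.univ.erase p, L p m * I t m = 0 := by
          rw [← Finset.add_sum_erase _ _ (Finset.mem_univ p), hp t ht] at hsum0
          linarith [hsum0]
        have hterm := (Finset.sum_eq_zero_iff_of_nonneg
          (fun m hm => mul_nonneg
            (hquasi p m (Ne.symm (Finset.ne_of_mem_erase hm))) (hInn t ht.le m))).mp
          herase q hqmem
        rcases mul_eq_zero.mp hterm with h | h
        · exact absurd h (ne_of_gt hLpq)
        · exact h
      rw [hA, Finset.mem_filter] at hqA
      exact hqA.2 hq0
    have hI00 : I 0 = 0 := by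
      funext k
      have hcw : ContinuousWithinAt (fun t => I t k) (Set.Ici 0) 0 :=
        (hIcont k) 0 (Set.mem_Ici.mpr (le_refl 0))
      have h1 : Tendsto (fun t => I t k) (𝓝[>] (0:ℝ)) (𝓝 (I 0 k)) :=
        hcw.tendsto.mono_left (nhdsWithin_mono 0 Set.Ioi_subset_Ici_self)
      have h2 : Tendsto (fun t => I t k) (𝓝[>] (0:ℝ)) (𝓝 0) := by
        apply Tendsto.congr' _ tendsto_const_nhds
        filter_upwards [self_mem_nhdsWithin] with s hs
        exact (hZ k s hs).symm
      have := tendsto_nhds_unique h1 h2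
      simpa using this
    exact hI0ne hI00
  obtain ⟨t0, ht0, hSpos⟩ := hpos
  have hev : ∀ᶠ t in atTop, S t0 j ≤ S t j := by
    filter_upwards [eventually_ge_atTop t0] with t ht
    exact hSm (Set.mem_Ici.mpr ht0) (Set.mem_Ici.mpr (le_trans ht0 ht)) ht
  have hbdd : IsBoundedUnder (· ≤ ·) atTop (fun t => S t j) := by
    refine ⟨N, ?_⟩
    rw [eventually_map]
    filter_upwards [eventually_ge_atTop (0:ℝ)] with t ht
    exact hSleN t ht j
  have hlim : S t0 j ≤ liminf (fun t => S t j) atTop :=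
    le_liminf_of_le hbdd.isCoboundedUnder_ge hev
  linarith
end
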